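/- arXiv:1312.1325 — 13 statements merged into one kernel-verified Lean document; each statement's English description precedes it below -/
import Mathlib

section
/- Let q be a prime power, h ∈ F_q[x], and r, s positive integers with s dividing q−1. Then f(x) = x^r · h(x^((q−1)/s)) permutes F_q if and only if (1) gcd(r, (q−1)/s) = 1 and (2) the map x ↦ x^r · h(x)^((q−1)/s) permutes the set of s-th roots of unity in F_q^*. -/
open Polynomial

lemma aux_root (F : Type*) [Field F] [Fintype F] (e : ℕ) (he : 1 < e)
    (hdvd : e ∣ Fintype.card F - 1) : ∃ ζ : F, ζ ≠ 1 ∧ ζ ^ e = 1 := by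
  obtain ⟨g0, hg0⟩ := IsCyclic.exists_generator (α := Fˣ)
  have hord : orderOf g0 = Fintype.card F - 1 := by
    rw [orderOf_eq_card_of_forall_mem_zpowers hg0, Nat.card_units, Nat.card_eq_fintype_card]
  have hn : Fintype.card F - 1 ≠ 0 := by
    have := Fintype.one_lt_card (α := F)
    omega
  refine ⟨((g0 ^ ((Fintype.card F - 1) / e) : Fˣ) : F), ?_, ?_⟩
  · intro hζ
    have h1 : (g0 ^ ((Fintype.card F - 1) / e) : Fˣ) = 1 := Units.ext hζ
    have h2 : orderOf (g0 ^ ((Fintype.card F - 1) / e)) = e := by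
      rw [orderOf_pow, hord, Nat.gcd_eq_right (Nat.div_dvd_of_dvd hdvd),
        Nat.div_div_self hdvd hn]
    rw [h1, orderOf_one] at h2
    omega
  · rw [← Units.val_pow_eq_pow_val, ← pow_mul, Nat.div_mul_cancel hdvd, ← hord,
      pow_orderOf_eq_one, Units.val_one]

lemma aux_surj (F : Type*) [Field F] [Fintype F] (d s : ℕ) (hs : 0 < s)
    (hds : d * s = Fintype.card F - 1) :
    ∀ y : F, y ^ s = 1 → ∃ x : F, x ≠ 0 ∧ x ^ d = y := by
  obtain ⟨g0, hg0⟩ := IsCyclic.exists_generator (α := Fˣ)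
  have hord : orderOf g0 = Fintype.card F - 1 := by
    rw [orderOf_eq_card_of_forall_mem_zpowers hg0, Nat.card_units, Nat.card_eq_fintype_card]
  intro y hy
  have hy0 : y ≠ 0 := by
    intro h; rw [h, zero_pow hs.ne'] at hy; exact zero_ne_one hy
  obtain ⟨k, hk⟩ := (Submonoid.mem_powers_iff _ _).mp
    (mem_powers_iff_mem_zpowers.mpr (hg0 (Units.mk0 y hy0)))
  have hus : (Units.mk0 y hy0) ^ s = 1 := Units.ext (by simpa using hy)
  have hks : g0 ^ (k * s) = 1 := by rw [pow_mul, hk, hus]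
  have hdvdk : d ∣ k := by
    have h1 : d * s ∣ k * s := by
      rw [hds, ← hord]; exact orderOf_dvd_of_pow_eq_one hks
    exact (Nat.mul_dvd_mul_iff_right hs).mp h1
  refine ⟨((g0 ^ (k / d) : Fˣ) : F), Units.ne_zero _, ?_⟩
  rw [← Units.val_pow_eq_pow_val, ← pow_mul, Nat.div_mul_cancel hdvdk, hk, Units.val_mk0]

theorem stmt_0 (q : ℕ) (F : Type*) [Field F] [Fintype F] (hF : Fintype.card F = q)
    (h : F[X]) (r s : ℕ) (hr : 0 < r) (hs : 0 < s) (hsdvd : s ∣ q - 1) :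
    Function.Bijective (fun x : F => x ^ r * h.eval (x ^ ((q - 1) / s))) ↔
      (Nat.gcd r ((q - 1) / s) = 1 ∧
        Set.BijOn (fun x : F => x ^ r * h.eval x ^ ((q - 1) / s))
          {x : F | x ≠ 0 ∧ x ^ s = 1} {x : F | x ≠ 0 ∧ x ^ s = 1}) := by
  have hq : 1 < q := hF ▸ Fintype.one_lt_card
  set d := (q - 1) / s with hdd
  have hds : d * s = q - 1 := Nat.div_mul_cancel hsdvd
  have hd0 : 0 < d := Nat.pos_of_ne_zero fun h' => by
    rw [h', zero_mul] at hds; omega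
  have hcard : Fintype.card F - 1 = q - 1 := by rw [hF]
  have hpow1 : ∀ x : F, x ≠ 0 → x ^ (q - 1) = 1 := by
    intro x hx
    have := FiniteField.pow_card_sub_one_eq_one x hx
    rwa [hF] at this
  set S : Set F := {x : F | x ≠ 0 ∧ x ^ s = 1} with hSdef
  set f : F → F := fun x => x ^ r * h.eval (x ^ d) with hfdef
  set g : F → F := fun x => x ^ r * h.eval x ^ d with hgdef
  have key : ∀ x : F, (f x) ^ d = g (x ^ d) := by
    intro x
    simp only [hfdef, hgdef, mul_pow]
    ring
  have hf0 : f 0 = 0 := by simp [hfdef, zero_pow hr.ne']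
  have hmem : ∀ x : F, x ≠ 0 → x ^ d ∈ S := fun x hx =>
    ⟨pow_ne_zero _ hx, by rw [← pow_mul, hds]; exact hpow1 x hx⟩
  have hsur : ∀ y : F, y ^ s = 1 → ∃ x : F, x ≠ 0 ∧ x ^ d = y :=
    aux_surj F d s hs (by rw [hcard]; exact hds)
  constructor
  · intro hf
    have hfne : ∀ x : F, x ≠ 0 → f x ≠ 0 := fun x hx hfx =>
      hx (hf.1 (hfx.trans hf0.symm))
    constructor
    · -- gcd r d = 1
      by_contra hne
      have he1 : 1 < Nat.gcd r d := by
        rcases Nat.lt_or_ge 1 (Nat.gcd r d) with h' | h'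
        · exact h'
        · exfalso
          have := Nat.gcd_pos_of_pos_left d hr
          omega
      have hedvd : Nat.gcd r d ∣ Fintype.card F - 1 := by
        rw [hcard]
        exact (Nat.gcd_dvd_right r d).trans ⟨s, hds.symm⟩
      obtain ⟨ζ, hζ1, hζe⟩ := aux_root F (Nat.gcd r d) he1 hedvd
      have hζr : ζ ^ r = 1 := by
        obtain ⟨m, hm⟩ := Nat.gcd_dvd_left r d
        rw [hm, pow_mul, hζe, one_pow]
      have hζd : ζ ^ d = 1 := by
        obtain ⟨m, hm⟩ := Nat.gcd_dvd_right r d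
        rw [hm, pow_mul, hζe, one_pow]
      have : f ζ = f 1 := by simp [hfdef, hζr, hζd]
      exact hζ1 (hf.1 this)
    · -- BijOn
      have hmapsto : Set.MapsTo g S S := by
        rintro y ⟨hy0, hys⟩
        obtain ⟨x, hx0, hxd⟩ := hsur y hys
        have hk : g y = (f x) ^ d := by rw [key, hxd]
        refine ⟨?_, ?_⟩
        · rw [hk]; exact pow_ne_zero _ (hfne x hx0)
        · rw [hk, ← pow_mul, hds]; exact hpow1 _ (hfne x hx0)
      have hsurj : Set.SurjOn g S S := by
        rintro z ⟨hz0, hzs⟩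
        obtain ⟨u, hu0, hud⟩ := hsur z hzs
        obtain ⟨x, hx⟩ := hf.2 u
        have hx0 : x ≠ 0 := by
          intro hx'
          rw [hx', hf0] at hx
          exact hu0 hx.symm
        exact ⟨x ^ d, hmem x hx0, by rw [← key, hx, hud]⟩
      exact (Set.Finite.surjOn_iff_bijOn_of_mapsTo (Set.toFinite S) hmapsto).mp hsurj
  · rintro ⟨hgcd, hbij⟩
    have hne : ∀ y ∈ S, h.eval y ≠ 0 := by
      intro y hy heq
      obtain ⟨hgy0, -⟩ := hbij.mapsTo hy
      exact hgy0 (by simp [hgdef, heq, zero_pow hd0.ne'])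
    have hfne : ∀ x : F, x ≠ 0 → f x ≠ 0 := fun x hx =>
      mul_ne_zero (pow_ne_zero _ hx) (hne _ (hmem x hx))
    refine Finite.injective_iff_bijective.mp ?_
    intro a b hab
    by_cases ha : a = 0
    · subst ha
      by_contra hb
      exact hfne b (Ne.symm hb) (hab.symm.trans hf0)
    by_cases hb : b = 0
    · subst hb
      exact absurd (hab.trans hf0) (hfne a ha)
    have hab' : a ^ r * h.eval (a ^ d) = b ^ r * h.eval (b ^ d) := hab
    have hgd : g (a ^ d) = g (b ^ d) := by
      rw [← key, ← key]
      exact congrArg (· ^ d) hab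
    have had : a ^ d = b ^ d := hbij.injOn (hmem a ha) (hmem b hb) hgd
    have har : a ^ r = b ^ r := by
      rw [had] at hab'
      exact mul_right_cancel₀ (hne _ (hmem b hb)) hab'
    have hζr : (a * b⁻¹) ^ r = 1 := by
      rw [mul_pow, har, inv_pow, mul_inv_cancel₀ (pow_ne_zero r hb)]
    have hζd : (a * b⁻¹) ^ d = 1 := by
      rw [mul_pow, had, inv_pow, mul_inv_cancel₀ (pow_ne_zero d hb)]
    have hord : orderOf (a * b⁻¹) = 1 := by
      have := Nat.dvd_gcd (orderOf_dvd_of_pow_eq_one hζr) (orderOf_dvd_of_pow_eq_one hζd)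
      rw [hgcd] at this
      exact Nat.dvd_one.mp this
    have : a * b⁻¹ = 1 := orderOf_eq_one_iff.mp hord
    exact (mul_inv_eq_one₀ hb).mp this
end

section
/- Let Q be a prime power, q = Q^m, h ∈ F_q[x], and r a positive integer. Then x^r · h(x^((q−1)/(Q−1))) permutes F_q if and only if (1) gcd(r, (q−1)/(Q−1)) = 1 and (2) the polynomial g(x) := x^r · h(x) · h^(Q)(x) · h^(Q^2)(x) ⋯ h^(Q^(m−1))(x) permutes F_Q, where h^(Q^i) denotes the polynomial obtained from h by raising each coefficient to the Q^i-th power. -/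
open Polynomial Finset

lemma aux_bezout {G : Type*} [CommGroup G] {r s : ℕ} (hgcd : Nat.gcd r s = 1)
    (c : G) (hc : c ^ s = 1) : ∃ ξ : G, ξ ^ s = 1 ∧ ξ ^ r = c := by
  have hb := Nat.gcd_eq_gcd_ab r s
  rw [hgcd] at hb
  push_cast at hb
  refine ⟨c ^ Nat.gcdA r s, ?_, ?_⟩
  · rw [← zpow_natCast (c ^ Nat.gcdA r s) s, ← zpow_mul, mul_comm, zpow_mul, zpow_natCast, hc,
      one_zpow]
  · rw [← zpow_natCast (c ^ Nat.gcdA r s) r, ← zpow_mul]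
    have h1 : Nat.gcdA r s * (r : ℤ) = 1 - s * Nat.gcdB r s := by linarith
    rw [h1, zpow_sub, zpow_one, zpow_mul, zpow_natCast, hc, one_zpow]
    simp

lemma aux_pow_surj {G : Type*} [CommGroup G] [Fintype G] [IsCyclic G] {d s : ℕ}
    (hds : d * s = Fintype.card G) (u : G) (hu : u ^ d = 1) : ∃ x : G, x ^ s = u := by
  obtain ⟨g, hg⟩ := IsCyclic.exists_generator (α := G)
  have hog : orderOf g = Fintype.card G := by
    rw [orderOf_eq_card_of_forall_mem_zpowers hg, Nat.card_eq_fintype_card]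
  obtain ⟨k, hk⟩ := hg u
  have hk' : g ^ k = u := hk
  have hd0 : 0 < d := by
    by_contra h0
    push_neg at h0
    interval_cases d
    simp at hds
    exact Fintype.card_ne_zero hds.symm
  have h1 : g ^ (k * d) = 1 := by rw [zpow_mul, zpow_natCast, hk', hu]
  have h2 : ((d * s : ℕ) : ℤ) ∣ k * d := by
    rw [hds, ← hog]
    exact orderOf_dvd_iff_zpow_eq_one.mpr h1
  obtain ⟨t, ht⟩ := h2
  have hkst : k = s * t := by
    have hd' : (d : ℤ) ≠ 0 := by exact_mod_cast hd0.ne'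
    have : k * d = (s * t) * d := by push_cast at ht ⊢; linarith
    exact mul_right_cancel₀ hd' this
  exact ⟨g ^ t, by rw [← zpow_natCast (g ^ t) s, ← zpow_mul, mul_comm, ← hkst, hk']⟩

lemma aux_bijOn_insert {α : Type*} {G : α → α} {μ : Set α} {a : α}
    (ha : a ∉ μ) (hGa : G a = a) :
    Set.BijOn G (insert a μ) (insert a μ) ↔ Set.BijOn G μ μ := by
  constructor
  · intro hb
    have hmaps : Set.MapsTo G μ μ := by
      intro x hx
      have h1 : G x ∈ insert a μ := hb.mapsTo (Set.mem_insert_of_mem a hx)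
      rcases h1 with h1 | h1
      · exfalso
        have : x = a := hb.injOn (Set.mem_insert_of_mem a hx) (Set.mem_insert a μ)
          (by rw [h1, hGa])
        exact ha (this ▸ hx)
      · exact h1
    refine ⟨hmaps, fun x hx y hy hxy => hb.injOn (Set.mem_insert_of_mem a hx)
      (Set.mem_insert_of_mem a hy) hxy, ?_⟩
    intro y hy
    obtain ⟨x, hx, hGx⟩ := hb.surjOn (Set.mem_insert_of_mem a hy)
    rcases hx with hx | hx
    · exfalso; rw [hx, hGa] at hGx; exact ha (hGx ▸ hy)
    · exact ⟨x, hx, hGx⟩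
  · intro hb
    refine ⟨?_, ?_, ?_⟩
    · rintro x (rfl | hx)
      · rw [hGa]; exact Set.mem_insert x μ
      · exact Set.mem_insert_of_mem a (hb.mapsTo hx)
    · rintro x (rfl | hx) y (rfl | hy) hxy
      · rfl
      · exfalso
        rw [hGa] at hxy
        exact ha (hxy ▸ hb.mapsTo hy)
      · exfalso
        rw [hGa] at hxy
        exact ha (hxy ▸ hb.mapsTo hx)
      · exact hb.injOn hx hy hxy
    · rintro y (rfl | hy)
      · exact ⟨y, Set.mem_insert y μ, hGa⟩
      · obtain ⟨x, hx, hGx⟩ := hb.surjOn hy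
        exact ⟨x, Set.mem_insert_of_mem a hx, hGx⟩

lemma aux_zieve {L : Type*} [Field L] [Fintype L] (d s r : ℕ) (hd : 0 < d) (hs : 0 < s)
    (hr : 0 < r) (hds : d * s = Fintype.card L - 1) (h : L[X]) :
    Function.Bijective (fun x : L => x ^ r * h.eval (x ^ s)) ↔
      (Nat.gcd r s = 1 ∧
        Set.BijOn (fun x : L => x ^ r * (h.eval x) ^ s) {x : L | x ^ d = 1} {x : L | x ^ d = 1}) := by
  classical
  set q := Fintype.card L with hq
  have hq1 : 1 < q := Fintype.one_lt_card
  set f : L → L := fun x => x ^ r * h.eval (x ^ s) with hf_def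
  set G : L → L := fun x => x ^ r * (h.eval x) ^ s with hG_def
  set μ : Set L := {x : L | x ^ d = 1} with hμ_def
  have hcardu : d * s = Fintype.card Lˣ := by rw [Fintype.card_units]; exact hds
  have f0 : f 0 = 0 := by simp [hf_def, zero_pow hr.ne', zero_pow hs.ne']
  have A : ∀ x : L, x ≠ 0 → (x ^ s) ^ d = 1 := by
    intro x hx
    rw [← pow_mul, mul_comm s d, hds]
    exact FiniteField.pow_card_sub_one_eq_one x hx
  have B : ∀ u : L, u ^ d = 1 → ∃ x : L, x ≠ 0 ∧ x ^ s = u := by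
    intro u hu
    have hu0 : u ≠ 0 := by
      intro h0
      rw [h0, zero_pow hd.ne'] at hu
      exact zero_ne_one hu
    obtain ⟨x, hx⟩ := aux_pow_surj hcardu (Units.mk0 u hu0)
      (by ext; push_cast; exact hu)
    exact ⟨(x : L), x.ne_zero, by rw [← Units.val_pow_eq_pow_val, hx, Units.val_mk0]⟩
  have C : ∀ x : L, (f x) ^ s = G (x ^ s) := by
    intro x
    simp only [hf_def, hG_def]
    rw [mul_pow, ← pow_mul, mul_comm r s, pow_mul]
  constructor
  · intro hf
    have hgcd : Nat.gcd r s = 1 := by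
      by_contra hg
      set e := Nat.gcd r s with he_def
      have he0 : e ≠ 0 := Nat.gcd_ne_zero_right hs.ne'
      have he2 : 2 ≤ e := by omega
      have hes : e ∣ s := Nat.gcd_dvd_right r s
      have her : e ∣ r := Nat.gcd_dvd_left r s
      have hsq : s ∣ q - 1 := ⟨d, by rw [mul_comm]; exact hds.symm⟩
      have heq : e ∣ q - 1 := hes.trans hsq
      obtain ⟨g, hg⟩ := IsCyclic.exists_generator (α := Lˣ)
      have hog : orderOf g = q - 1 := by
        rw [orderOf_eq_card_of_forall_mem_zpowers hg, Nat.card_eq_fintype_card,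
          Fintype.card_units]
      set ζ : Lˣ := g ^ ((q - 1) / e) with hζ_def
      have hpow : ∀ n : ℕ, e ∣ n → ζ ^ n = 1 := by
        intro n hn
        obtain ⟨n', rfl⟩ := hn
        obtain ⟨t, ht⟩ := heq
        rw [hζ_def, ← pow_mul]
        have : (q - 1) / e * (e * n') = (q - 1) * n' := by
          rw [ht, Nat.mul_div_cancel_left _ (by omega : 0 < e)]
          ring
        rw [this, pow_mul, ← hog, pow_orderOf_eq_one, one_pow]
      have hζs : ζ ^ s = 1 := hpow s hes
      have hζr : ζ ^ r = 1 := hpow r her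
      have hζ1 : ζ ≠ 1 := by
        intro h1
        have := orderOf_dvd_of_pow_eq_one h1
        rw [hog] at this
        have hlt : (q - 1) / e < q - 1 := Nat.div_lt_self (by omega) he2
        have hpos : 0 < (q - 1) / e := Nat.div_pos (Nat.le_of_dvd (by omega) heq) (by omega)
        exact absurd (Nat.le_of_dvd hpos this) (by omega)
      have hfval : f (ζ : L) = f 1 := by
        simp only [hf_def]
        have h1 : ((ζ : L)) ^ s = 1 := by
          rw [← Units.val_pow_eq_pow_val, hζs, Units.val_one]
        have h2 : ((ζ : L)) ^ r = 1 := by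
          rw [← Units.val_pow_eq_pow_val, hζr, Units.val_one]
        rw [h1, h2]
        simp
      have := hf.injective hfval
      exact hζ1 (Units.ext (by rw [this, Units.val_one]))
    refine ⟨hgcd, ?_⟩
    have hmaps : Set.MapsTo G μ μ := by
      intro u hu
      obtain ⟨x, hx0, hxs⟩ := B u hu
      have hfx : f x ≠ 0 := by
        intro h0
        exact hx0 (hf.injective (h0.trans f0.symm))
      show G u ^ d = 1
      rw [← hxs, ← C x]
      exact A (f x) hfx
    have hsurj : Set.SurjOn G μ μ := by
      intro w hw
      obtain ⟨z, hz0, hzs⟩ := B w hw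
      obtain ⟨x, hx⟩ := hf.surjective z
      have hx0 : x ≠ 0 := by
        rintro rfl
        rw [f0] at hx
        exact hz0 hx.symm
      exact ⟨x ^ s, A x hx0, by rw [← C x, hx, hzs]⟩
    exact (Set.Finite.surjOn_iff_bijOn_of_mapsTo (Set.toFinite μ) hmaps).mp hsurj
  · rintro ⟨hgcd, hbij⟩
    rw [← Finite.surjective_iff_bijective]
    intro z
    by_cases hz : z = 0
    · exact ⟨0, by rw [f0, hz]⟩
    · have hw : z ^ s ∈ μ := A z hz
      obtain ⟨u, hu, hGu⟩ := hbij.surjOn hw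
      obtain ⟨y, hy0, hys⟩ := B u hu
      have hfy : (f y) ^ s = z ^ s := by rw [C y, hys, hGu]
      have hfy0 : f y ≠ 0 := by
        intro h0
        rw [h0, zero_pow hs.ne'] at hfy
        exact hz (pow_eq_zero_iff hs.ne' |>.mp hfy.symm)
      set c : Lˣ := Units.mk0 z hz / Units.mk0 (f y) hfy0 with hc_def
      have hcs : c ^ s = 1 := by
        ext
        rw [hc_def]
        push_cast
        simp only [Units.val_mk0]
        rw [div_pow, ← hfy, div_self (pow_ne_zero s hfy0)]
      obtain ⟨ξ, hξs, hξr⟩ := aux_bezout hgcd c hcs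
      refine ⟨(ξ : L) * y, ?_⟩
      have hξsL : ((ξ : L)) ^ s = 1 := by rw [← Units.val_pow_eq_pow_val, hξs, Units.val_one]
      have hξrL : ((ξ : L)) ^ r = z / f y := by
        rw [← Units.val_pow_eq_pow_val, hξr, hc_def]
        push_cast
        rfl
      show ((ξ : L) * y) ^ r * h.eval (((ξ : L) * y) ^ s) = z
      rw [mul_pow, mul_pow, hξsL, hξrL, one_mul]
      have : z / f y * y ^ r * h.eval (y ^ s) = z / f y * f y := by
        rw [hf_def]; ring
      rw [this, div_mul_cancel₀ _ hfy0]

lemma aux_range {K L : Type*} [Field K] [Fintype K] [Field L] [Fintype L] [Algebra K L]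
    {Q : ℕ} (hK : Fintype.card K = Q) :
    Set.range (algebraMap K L) = {x : L | x ^ Q = x} := by
  classical
  have hQ2 : 1 < Q := hK ▸ Fintype.one_lt_card
  apply Set.eq_of_subset_of_ncard_le
  · rintro _ ⟨y, rfl⟩
    simp only [Set.mem_setOf_eq]
    rw [← map_pow, ← hK, FiniteField.pow_card]
  · have h1 : (Set.range (algebraMap K L)).ncard = Q := by
      rw [← Set.image_univ, Set.ncard_image_of_injective _ (algebraMap K L).injective,
        Set.ncard_univ, Nat.card_eq_fintype_card, hK]
    have h2 : {x : L | x ^ Q = x} ⊆ ((X ^ Q - X : L[X]).roots.toFinset : Set L) := by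
      intro x hx
      simp only [Finset.coe_sort_coe, Multiset.mem_toFinset, Finset.mem_coe]
      rw [mem_roots (FiniteField.X_pow_card_sub_X_ne_zero L hQ2)]
      simp only [IsRoot.def, eval_sub, eval_pow, eval_X, sub_eq_zero]
      exact hx
    have h3 : {x : L | x ^ Q = x}.ncard ≤ ((X ^ Q - X : L[X]).roots.toFinset : Set L).ncard :=
      Set.ncard_le_ncard h2 (Set.toFinite _)
    rw [Set.ncard_coe_finset] at h3
    have h4 : (X ^ Q - X : L[X]).roots.toFinset.card ≤ Multiset.card (X ^ Q - X : L[X]).roots :=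
      Multiset.toFinset_card_le _
    have h5 : Multiset.card (X ^ Q - X : L[X]).roots ≤ (X ^ Q - X : L[X]).natDegree :=
      card_roots' _
    rw [FiniteField.X_pow_card_sub_X_natDegree_eq L hQ2] at h5
    omega
  · exact Set.toFinite _

lemma aux_geom (Q m : ℕ) (hQ : 0 < Q) :
    (Q - 1) * ∑ i ∈ Finset.range m, Q ^ i = Q ^ m - 1 := by
  have hgm := geom_sum_mul (Q : ℤ) m
  have h1 : (1 : ℕ) ≤ Q ^ m := Nat.one_le_pow m Q hQ
  zify [hQ, h1]
  linarith

theorem stmt_1 (Q m : ℕ) (hm : 0 < m)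
    (K L : Type*) [Field K] [Fintype K] [Field L] [Fintype L] [Algebra K L]
    (hK : Fintype.card K = Q) (hL : Fintype.card L = Q ^ m)
    (h : L[X]) (r : ℕ) (hr : 0 < r) :
    Function.Bijective (fun x : L => x ^ r * h.eval (x ^ ((Q ^ m - 1) / (Q - 1)))) ↔
      (Nat.gcd r ((Q ^ m - 1) / (Q - 1)) = 1 ∧
        Set.BijOn
          (fun x : L => x ^ r *
            ∏ i ∈ Finset.range m,
              ∑ j ∈ Finset.range (h.natDegree + 1), h.coeff j ^ Q ^ i * x ^ j)
          (Set.range (algebraMap K L)) (Set.range (algebraMap K L))) := by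
  classical
  have hQ2 : 1 < Q := hK ▸ Fintype.one_lt_card
  have hQm1 : 1 < Q ^ m := Nat.one_lt_pow hm.ne' hQ2
  set s := (Q ^ m - 1) / (Q - 1) with hs_def
  have hgeom : (Q - 1) * ∑ i ∈ Finset.range m, Q ^ i = Q ^ m - 1 :=
    aux_geom Q m (by omega)
  have hs_eq : s = ∑ i ∈ Finset.range m, Q ^ i := by
    rw [hs_def, ← hgeom, Nat.mul_div_cancel_left _ (by omega : 0 < Q - 1)]
  have hds : (Q - 1) * s = Q ^ m - 1 := by rw [hs_eq]; exact hgeom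
  have hspos : 0 < s := by
    by_contra h0
    push_neg at h0
    have hs0 : s = 0 := by omega
    rw [hs0, mul_zero] at hds
    omega
  -- characteristic setup
  set p := ringChar K with hp_def
  haveI : CharP K p := ringChar.charP K
  have hp : p.Prime := CharP.char_is_prime K p
  haveI : Fact p.Prime := ⟨hp⟩
  obtain ⟨n, -, hcard⟩ := FiniteField.card K p
  have hQpn : Q = p ^ (n : ℕ) := by rw [← hK, hcard]
  haveI : CharP L p := charP_of_injective_algebraMap (algebraMap K L).injective p
  haveI : ExpChar L p := ExpChar.prime hp
  -- pointwise identities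
  have hxQ : ∀ x : L, x ^ Q = x → ∀ i : ℕ, x ^ Q ^ i = x := by
    intro x hx i
    induction i with
    | zero => simp
    | succ i ih => rw [pow_succ, pow_mul, ih, hx]
  have hpow_eval : ∀ x : L, x ^ Q = x → ∀ i : ℕ,
      (h.eval x) ^ Q ^ i
        = ∑ j ∈ Finset.range (h.natDegree + 1), h.coeff j ^ Q ^ i * x ^ j := by
    intro x hx i
    have hQi : Q ^ i = p ^ ((n : ℕ) * i) := by rw [hQpn, ← pow_mul]
    rw [Polynomial.eval_eq_sum_range, hQi, sum_pow_char_pow]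
    refine Finset.sum_congr rfl fun j _ => ?_
    rw [mul_pow, ← hQi, pow_right_comm, hxQ x hx i]
  have hprod : ∀ x : L, x ^ Q = x →
      (∏ i ∈ Finset.range m,
        ∑ j ∈ Finset.range (h.natDegree + 1), h.coeff j ^ Q ^ i * x ^ j)
        = (h.eval x) ^ s := by
    intro x hx
    rw [hs_eq, ← Finset.prod_pow_eq_pow_sum]
    exact (Finset.prod_congr rfl fun i _ => (hpow_eval x hx i).symm)
  -- range of algebraMap
  have hrange := aux_range (L := L) hK
  have hrange' : Set.range (algebraMap K L) = insert (0 : L) {x : L | x ^ (Q - 1) = 1} := by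
    rw [hrange]
    ext x
    simp only [Set.mem_setOf_eq, Set.mem_insert_iff]
    have hsplit : x ^ Q = x ^ (Q - 1) * x := by
      rw [← pow_succ]
      congr 1
      omega
    constructor
    · intro hx
      by_cases h0 : x = 0
      · exact Or.inl h0
      · right
        rw [hsplit] at hx
        have := mul_right_cancel₀ h0 (hx.trans (one_mul x).symm)
        exact this
    · rintro (rfl | hx)
      · rw [zero_pow (by omega : Q ≠ 0)]
      · rw [hsplit, hx, one_mul]
  have h0μ : (0 : L) ∉ {x : L | x ^ (Q - 1) = 1} := by
    simp only [Set.mem_setOf_eq]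
    rw [zero_pow (by omega : Q - 1 ≠ 0)]
    exact zero_ne_one
  have hz := aux_zieve (Q - 1) s r (by omega) hspos hr (by rw [hL]; exact hds) h
  rw [hz]
  refine and_congr Iff.rfl ?_
  have hG0 : (fun x : L => x ^ r * (h.eval x) ^ s) 0 = 0 := by
    simp [zero_pow hr.ne']
  have hiff1 : Set.BijOn (fun x : L => x ^ r * (h.eval x) ^ s)
      (Set.range (algebraMap K L)) (Set.range (algebraMap K L)) ↔
      Set.BijOn (fun x : L => x ^ r * (h.eval x) ^ s)
        {x : L | x ^ (Q - 1) = 1} {x : L | x ^ (Q - 1) = 1} := by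
    rw [hrange']
    exact aux_bijOn_insert h0μ hG0
  have heqOn : Set.EqOn
      (fun x : L => x ^ r * (h.eval x) ^ s)
      (fun x : L => x ^ r *
        ∏ i ∈ Finset.range m,
          ∑ j ∈ Finset.range (h.natDegree + 1), h.coeff j ^ Q ^ i * x ^ j)
      (Set.range (algebraMap K L)) := by
    intro x hx
    have hxQ' : x ^ Q = x := by
      rw [hrange] at hx
      exact hx
    simp only
    rw [hprod x hxQ']
  exact (hiff1.symm.trans heqOn.bijOn_iff)
end

section
/- Let Q be a prime power, q = Q^m, h ∈ F_Q[x], and r a positive integer. Then x^r · h(x^((q−1)/(Q−1))) permutes F_q if and only if (1) gcd(r, (q−1)/(Q−1)) = 1 and (2) the polynomial x^r · h(x)^m permutes F_Q. -/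
open Polynomial

lemma geom_nat' (Q m : ℕ) (hQ : 1 ≤ Q) :
    (Q - 1) * ∑ i ∈ Finset.range m, Q ^ i = Q ^ m - 1 := by
  have h := geom_sum_mul (Q : ℤ) m
  zify [hQ, Nat.one_le_pow m Q (by omega)]
  linarith [h]

lemma s_split' (Q m : ℕ) (hQ : 1 ≤ Q) :
    ∃ k, ∑ i ∈ Finset.range m, Q ^ i = m + (Q - 1) * k := by
  have hdvd : (Q - 1) ∣ ∑ i ∈ Finset.range m, (Q ^ i - 1) := by
    refine Finset.dvd_sum fun i _ => ?_
    simpa using Nat.sub_dvd_pow_sub_pow Q 1 i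
  obtain ⟨k, hk⟩ := hdvd
  refine ⟨k, ?_⟩
  rw [← hk]
  have : ∀ i ∈ Finset.range m, Q ^ i = 1 + (Q ^ i - 1) := fun i _ => by
    have := Nat.one_le_pow i Q (by omega); omega
  rw [Finset.sum_congr rfl this, Finset.sum_add_distrib]
  simp

lemma key_lemma' (K L : Type*) [Field K] [Fintype K] [Field L] [Fintype L] [Algebra K L]
    (Q s : ℕ) (hQ2 : 2 ≤ Q) (hK : Fintype.card K = Q)
    (hs : s * (Q - 1) = Fintype.card L - 1) (hs0 : 0 < s) :
    (∀ y : L, y ^ (Q - 1) = 1 → ∃ c : K, c ≠ 0 ∧ algebraMap K L c = y) ∧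
    (∀ c : K, c ≠ 0 → ∃ x : L, x ≠ 0 ∧ x ^ s = algebraMap K L c) := by
  classical
  have hQ1 : 0 < Q - 1 := by omega
  obtain ⟨g, hg⟩ := IsCyclic.exists_generator (α := Lˣ)
  have horder : orderOf g = Fintype.card L - 1 := by
    rw [orderOf_eq_card_of_forall_mem_zpowers hg, Nat.card_eq_fintype_card, Fintype.card_units]
  have hsdvd : s ∣ Fintype.card L - 1 := ⟨Q - 1, hs.symm⟩
  set u : Lˣ := g ^ s with hu
  have hord_u : orderOf u = Q - 1 := by
    rw [hu, orderOf_pow, horder, Nat.gcd_eq_right hsdvd, ← hs,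
      Nat.mul_div_cancel_left _ hs0]
  set U : Finset L := Finset.univ.filter (fun y : L => y ^ (Q - 1) = 1) with hUdef
  have hU_card : U.card ≤ Q - 1 := by
    have hsub : U ⊆ (nthRoots (Q - 1) (1 : L)).toFinset := by
      intro y hy
      rw [Multiset.mem_toFinset, mem_nthRoots hQ1]
      exact (Finset.mem_filter.mp hy).2
    calc U.card ≤ _ := Finset.card_le_card hsub
      _ ≤ Multiset.card (nthRoots (Q - 1) (1 : L)) := Multiset.toFinset_card_le _
      _ ≤ Q - 1 := card_nthRoots _ _
  set P : Finset L := (Finset.range (Q - 1)).image (fun j => ((u ^ j : Lˣ) : L)) with hPdef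
  have hP_card : P.card = Q - 1 := by
    rw [hPdef, Finset.card_image_of_injOn, Finset.card_range]
    intro a ha b hb hab
    simp only [Finset.coe_range, Set.mem_Iio] at ha hb
    have : u ^ a = u ^ b := Units.ext hab
    exact pow_injOn_Iio_orderOf (by rwa [Set.mem_Iio, hord_u]) (by rwa [Set.mem_Iio, hord_u]) this
  have hP_sub : P ⊆ U := by
    intro y hy
    rw [hPdef, Finset.mem_image] at hy
    obtain ⟨j, _, rfl⟩ := hy
    rw [hUdef, Finset.mem_filter]
    refine ⟨Finset.mem_univ _, ?_⟩
    have : ((u ^ j) ^ (Q - 1) : Lˣ) = 1 := by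
      rw [← pow_mul, mul_comm, pow_mul, ← hord_u, pow_orderOf_eq_one, one_pow]
    calc ((u ^ j : Lˣ) : L) ^ (Q - 1) = (((u ^ j) ^ (Q - 1) : Lˣ) : L) := by push_cast; ring
      _ = 1 := by rw [this]; rfl
  set E : Finset L := (Finset.univ.erase (0 : K)).image (algebraMap K L) with hEdef
  have hE_card : E.card = Q - 1 := by
    rw [hEdef, Finset.card_image_of_injective _ (algebraMap K L).injective,
      Finset.card_erase_of_mem (Finset.mem_univ _), Finset.card_univ, hK]
  have hE_sub : E ⊆ U := by
    intro y hy
    rw [hEdef, Finset.mem_image] at hy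
    obtain ⟨c, hc, rfl⟩ := hy
    have hc0 : c ≠ 0 := Finset.ne_of_mem_erase hc
    rw [hUdef, Finset.mem_filter]
    refine ⟨Finset.mem_univ _, ?_⟩
    rw [← map_pow]
    have : c ^ (Q - 1) = 1 := by
      rw [← hK]; exact FiniteField.pow_card_sub_one_eq_one c hc0
    rw [this, map_one]
  have hPU : P = U := Finset.eq_of_subset_of_card_le hP_sub (hP_card ▸ hU_card)
  have hEU : E = U := Finset.eq_of_subset_of_card_le hE_sub (hE_card ▸ hU_card)
  constructor
  · intro y hy
    have hyU : y ∈ U := by rw [hUdef, Finset.mem_filter]; exact ⟨Finset.mem_univ _, hy⟩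
    rw [← hEU, hEdef, Finset.mem_image] at hyU
    obtain ⟨c, hc, rfl⟩ := hyU
    exact ⟨c, Finset.ne_of_mem_erase hc, rfl⟩
  · intro c hc
    have hcU : algebraMap K L c ∈ U := hE_sub (by
      rw [hEdef, Finset.mem_image]
      exact ⟨c, Finset.mem_erase.mpr ⟨hc, Finset.mem_univ _⟩, rfl⟩)
    rw [← hPU, hPdef, Finset.mem_image] at hcU
    obtain ⟨j, _, hj⟩ := hcU
    refine ⟨((g ^ j : Lˣ) : L), Units.ne_zero _, ?_⟩
    rw [← hj, hu]
    push_cast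
    ring

theorem stmt_2 (Q m : ℕ) (hm : 0 < m)
    (K L : Type*) [Field K] [Fintype K] [Field L] [Fintype L] [Algebra K L]
    (hK : Fintype.card K = Q) (hL : Fintype.card L = Q ^ m)
    (h : K[X]) (r : ℕ) (hr : 0 < r) :
    Function.Bijective
        (fun x : L => x ^ r * (h.map (algebraMap K L)).eval (x ^ ((Q ^ m - 1) / (Q - 1)))) ↔
      (Nat.gcd r ((Q ^ m - 1) / (Q - 1)) = 1 ∧
        Function.Bijective (fun x : K => x ^ r * h.eval x ^ m)) := by
  classical
  have he : Function.Injective (algebraMap K L) := (algebraMap K L).injective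
  set e := algebraMap K L with he_def
  have hQ2 : 2 ≤ Q := by rw [← hK]; exact Fintype.one_lt_card
  set s := (Q ^ m - 1) / (Q - 1) with hs_def
  have hgeo := geom_nat' Q m (by omega)
  have hs_sum : s = ∑ i ∈ Finset.range m, Q ^ i := by
    rw [hs_def, ← hgeo, Nat.mul_div_cancel_left _ (by omega : 0 < Q - 1)]
  have hs0 : 0 < s := by
    rw [hs_sum]
    exact Finset.sum_pos (fun i _ => pow_pos (by omega) i) ⟨0, Finset.mem_range.mpr hm⟩
  have hsm : s * (Q - 1) = Q ^ m - 1 := by rw [hs_sum, mul_comm, hgeo]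
  have hLcard : s * (Q - 1) = Fintype.card L - 1 := by rw [hsm, hL]
  have hL2 : 2 ≤ Fintype.card L := Fintype.one_lt_card
  have hpowK : ∀ a : K, a ^ s = a ^ m := by
    intro a
    obtain ⟨k, hk⟩ := s_split' Q m (by omega)
    rcases eq_or_ne a 0 with rfl | ha
    · rw [zero_pow (by omega : s ≠ 0), zero_pow (by omega : m ≠ 0)]
    · rw [hs_sum, hk, pow_add, mul_comm, pow_mul]
      have h1 : a ^ (Q - 1) = 1 := by
        rw [← hK]; exact FiniteField.pow_card_sub_one_eq_one a ha
      rw [h1, one_pow, one_mul]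
  obtain ⟨hsub, hnorm⟩ := key_lemma' K L Q s hQ2 hK hLcard hs0
  have hN : ∀ x : L, x ≠ 0 → ∃ c : K, c ≠ 0 ∧ e c = x ^ s := by
    intro x hx
    have h1 : (x ^ s) ^ (Q - 1) = 1 := by
      rw [← pow_mul, hLcard]
      exact FiniteField.pow_card_sub_one_eq_one x hx
    exact hsub (x ^ s) h1
  have hcompat : ∀ (x : L) (c : K), e c = x ^ s →
      (x ^ r * (h.map e).eval (x ^ s)) ^ s = e (c ^ r * h.eval c ^ m) := by
    intro x c hc
    have hev : (h.map e).eval (x ^ s) = e (h.eval c) := by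
      rw [← hc, eval_map, eval₂_hom]
    rw [hev, mul_pow, ← pow_mul, mul_comm r s, pow_mul, ← hc, ← map_pow, ← map_pow,
      hpowK, ← map_mul]
  have hnorm' : ∀ c : K, ∃ x : L, x ^ s = e c := by
    intro c
    rcases eq_or_ne c 0 with rfl | hc
    · exact ⟨0, by rw [zero_pow (by omega : s ≠ 0), map_zero]⟩
    · obtain ⟨x, _, hx⟩ := hnorm c hc; exact ⟨x, hx⟩
  constructor
  · intro hf
    have hgsurj : Function.Surjective (fun c : K => c ^ r * h.eval c ^ m) := by
      intro t
      obtain ⟨z, hz⟩ := hnorm' t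
      obtain ⟨x, hx⟩ := hf.surjective z
      simp only at hx
      rcases eq_or_ne x 0 with rfl | hx0
      · have hz0 : z = 0 := by
          rw [← hx, zero_pow (by omega : r ≠ 0), zero_mul]
        have ht : t = 0 := by
          apply he; rw [map_zero, ← hz, hz0, zero_pow (by omega : s ≠ 0)]
        exact ⟨0, by show (0:K) ^ r * h.eval 0 ^ m = t
                     rw [zero_pow (by omega : r ≠ 0), zero_mul, ht]⟩
      · obtain ⟨c, hc0, hc⟩ := hN x hx0
        refine ⟨c, he ?_⟩
        calc e (c ^ r * h.eval c ^ m) = (x ^ r * (h.map e).eval (x ^ s)) ^ s :=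
              (hcompat x c hc).symm
          _ = z ^ s := by rw [hx]
          _ = e t := hz
    have hgbij : Function.Bijective (fun c : K => c ^ r * h.eval c ^ m) :=
      Finite.surjective_iff_bijective.mp hgsurj
    refine ⟨?_, hgbij⟩
    by_contra hd
    obtain ⟨x0, hx0⟩ := hf.surjective 1
    simp only at hx0
    have hx0ne : x0 ≠ 0 := by
      intro h0
      rw [h0, zero_pow (by omega : r ≠ 0), zero_mul] at hx0
      exact zero_ne_one hx0
    have hinj : ∀ ζ : L, ζ ^ s = 1 → ζ ^ r = 1 → ζ = 1 := by
      intro ζ hζs hζr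
      have h1 : (fun x : L => x ^ r * (h.map e).eval (x ^ s)) (x0 * ζ) =
          (fun x : L => x ^ r * (h.map e).eval (x ^ s)) x0 := by
        simp only
        rw [mul_pow, mul_pow, hζs, hζr, mul_one, mul_one]
      have h2 := hf.injective h1
      have : x0 * ζ = x0 * 1 := by rw [mul_one]; exact h2
      exact mul_left_cancel₀ hx0ne this
    set d := Nat.gcd r s with hd_def
    have hdpos : 0 < d := Nat.gcd_pos_of_pos_left s hr
    have hd1 : 1 < d := by omega
    have hddvds : d ∣ s := Nat.gcd_dvd_right r s
    have hddvdr : d ∣ r := Nat.gcd_dvd_left r s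
    have hddvdq : d ∣ Fintype.card L - 1 := hddvds.trans ⟨Q - 1, hLcard.symm⟩
    obtain ⟨g, hg⟩ := IsCyclic.exists_generator (α := Lˣ)
    have horder : orderOf g = Fintype.card L - 1 := by
      rw [orderOf_eq_card_of_forall_mem_zpowers hg, Nat.card_eq_fintype_card, Fintype.card_units]
    set w : Lˣ := g ^ ((Fintype.card L - 1) / d) with hw_def
    have hw : orderOf w = d := by
      rw [hw_def, orderOf_pow, horder, Nat.gcd_eq_right (Nat.div_dvd_of_dvd hddvdq),
        Nat.div_div_self hddvdq (by omega : Fintype.card L - 1 ≠ 0)]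
    have hws : ((w : L)) ^ s = 1 := by
      obtain ⟨k, hk⟩ := hddvds
      have : (w ^ s : Lˣ) = 1 := by
        rw [hk, pow_mul, ← hw, pow_orderOf_eq_one, one_pow]
      calc ((w : L)) ^ s = ((w ^ s : Lˣ) : L) := by push_cast; ring
        _ = 1 := by rw [this]; rfl
    have hwr : ((w : L)) ^ r = 1 := by
      obtain ⟨k, hk⟩ := hddvdr
      have : (w ^ r : Lˣ) = 1 := by
        rw [hk, pow_mul, ← hw, pow_orderOf_eq_one, one_pow]
      calc ((w : L)) ^ r = ((w ^ r : Lˣ) : L) := by push_cast; ring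
        _ = 1 := by rw [this]; rfl
    have hw1 : w = 1 := Units.ext (hinj _ hws hwr)
    rw [← orderOf_eq_one_iff] at hw1
    omega
  · rintro ⟨hgcd, hgK⟩
    have hKinj := hgK.injective
    refine Finite.injective_iff_bijective.mp ?_
    intro x y hxy
    simp only at hxy
    have hzero : ∀ z : L, z ^ r * (h.map e).eval (z ^ s) = 0 → z = 0 := by
      intro z hz
      by_contra hz0
      obtain ⟨c, hc0, hc⟩ := hN z hz0
      have h1 : e (c ^ r * h.eval c ^ m) = 0 := by
        rw [← hcompat z c hc, hz, zero_pow (by omega : s ≠ 0)]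
      have h2 : c ^ r * h.eval c ^ m = 0 := by
        apply he; rw [h1, map_zero]
      have h3 : (fun c : K => c ^ r * h.eval c ^ m) c = (fun c : K => c ^ r * h.eval c ^ m) 0 := by
        simp only [h2, zero_pow (by omega : r ≠ 0), zero_mul]
      exact hc0 (hKinj h3)
    rcases eq_or_ne x 0 with rfl | hx0
    · have : y ^ r * (h.map e).eval (y ^ s) = 0 := by
        rw [← hxy, zero_pow (by omega : r ≠ 0), zero_mul]
      exact (hzero y this).symm
    rcases eq_or_ne y 0 with rfl | hy0
    · have : x ^ r * (h.map e).eval (x ^ s) = 0 := by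
        rw [hxy, zero_pow (by omega : r ≠ 0), zero_mul]
      exact hzero x this
    obtain ⟨c, hc0, hc⟩ := hN x hx0
    obtain ⟨c', hc0', hc'⟩ := hN y hy0
    have hcc : c = c' := by
      apply hKinj
      show c ^ r * h.eval c ^ m = c' ^ r * h.eval c' ^ m
      apply he
      calc e (c ^ r * h.eval c ^ m) = (x ^ r * (h.map e).eval (x ^ s)) ^ s :=
            (hcompat x c hc).symm
        _ = (y ^ r * (h.map e).eval (y ^ s)) ^ s := by rw [hxy]
        _ = e (c' ^ r * h.eval c' ^ m) := hcompat y c' hc'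
    have hss : x ^ s = y ^ s := by rw [← hc, ← hc', hcc]
    have hev : (h.map e).eval (x ^ s) = e (h.eval c) := by
      rw [← hc, eval_map, eval₂_hom]
    have hhc : h.eval c ≠ 0 := by
      intro h0
      have h3 : (fun c : K => c ^ r * h.eval c ^ m) c = (fun c : K => c ^ r * h.eval c ^ m) 0 := by
        simp only [h0, zero_pow (by omega : m ≠ 0), mul_zero, zero_pow (by omega : r ≠ 0),
          zero_mul]
      exact hc0 (hKinj h3)
    have hrr : x ^ r = y ^ r := by
      have h4 : x ^ r * e (h.eval c) = y ^ r * e (h.eval c) := by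
        rw [← hev, hxy, hss]
      exact mul_right_cancel₀ (fun h5 => hhc (he (by rw [h5, map_zero]))) h4
    set ux := Units.mk0 x hx0 with hux
    set uy := Units.mk0 y hy0 with huy
    have hur : (ux * uy⁻¹) ^ r = 1 := by
      rw [← Units.val_eq_one, Units.val_pow_eq_pow_val, Units.val_mul,
        Units.val_inv_eq_inv_val, Units.val_mk0, Units.val_mk0, mul_pow, inv_pow, hrr,
        mul_inv_cancel₀ (pow_ne_zero r hy0)]
    have hus : (ux * uy⁻¹) ^ s = 1 := by
      rw [← Units.val_eq_one, Units.val_pow_eq_pow_val, Units.val_mul,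
        Units.val_inv_eq_inv_val, Units.val_mk0, Units.val_mk0, mul_pow, inv_pow, hss,
        mul_inv_cancel₀ (pow_ne_zero s hy0)]
    have hord : orderOf (ux * uy⁻¹) ∣ Nat.gcd r s :=
      Nat.dvd_gcd (orderOf_dvd_of_pow_eq_one hur) (orderOf_dvd_of_pow_eq_one hus)
    rw [hgcd, Nat.dvd_one, orderOf_eq_one_iff, mul_inv_eq_one] at hord
    have : (ux : L) = (uy : L) := by rw [hord]
    rwa [Units.val_mk0, Units.val_mk0] at this
end

section
/- Let Q be a prime power, and let r, m, n be positive integers with m·n ≡ 1 (mod Q−1). Put q = Q^m and let h ∈ F_Q[x]. Then x^r · h(x^((q−1)/(Q−1))) permutes F_q if and only if (1) gcd(r, (q−1)/(Q−1)) = 1 and (2) the polynomial x^(r·n) · h(x) permutes F_Q. -/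
open Polynomial

private lemma pow_aux {M : Type*} [Monoid M] {a : M} {d i j : ℕ} (ha : a ^ d = 1)
    (hle : j ≤ i) (hdvd : d ∣ i - j) : a ^ i = a ^ j := by
  obtain ⟨t, ht⟩ := hdvd
  have hi : i = d * t + j := by omega
  rw [hi, pow_add, pow_mul, ha, one_pow, one_mul]

theorem stmt_3 (Q m n r : ℕ) (hm : 0 < m) (hn : 0 < n) (hr : 0 < r)
    (hmn : m * n ≡ 1 [MOD Q - 1])
    (K L : Type*) [Field K] [Fintype K] [Field L] [Fintype L] [Algebra K L]
    (hK : Fintype.card K = Q) (hL : Fintype.card L = Q ^ m)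
    (h : K[X]) :
    Function.Bijective
        (fun x : L => x ^ r * (h.map (algebraMap K L)).eval (x ^ ((Q ^ m - 1) / (Q - 1)))) ↔
      (Nat.gcd r ((Q ^ m - 1) / (Q - 1)) = 1 ∧
        Function.Bijective (fun x : K => x ^ (r * n) * h.eval x)) := by
  classical
  have hQ : 2 ≤ Q := hK ▸ Fintype.one_lt_card
  set s : ℕ := (Q ^ m - 1) / (Q - 1) with hs_def
  set d : ℕ := Q - 1 with hd_def
  have hd : 0 < d := by omega
  have hQm : 2 ≤ Q ^ m := by
    calc 2 = 2 ^ 1 := rfl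
    _ ≤ Q ^ m := Nat.pow_le_pow_left hQ m |>.trans' (Nat.pow_le_pow_right (by omega) hm)
  have hN : 0 < Q ^ m - 1 := by omega
  -- geometric sum
  have hgeom : d * (∑ i ∈ Finset.range m, Q ^ i) = Q ^ m - 1 := by
    have h2 := geom_sum_mul (x := (Q:ℤ)) m
    have h4 : (d : ℤ) = (Q:ℤ) - 1 := by
      rw [hd_def]; push_cast [Nat.cast_sub (by omega : 1 ≤ Q)]; ring
    zify [(by omega : (1:ℕ) ≤ Q ^ m)]
    rw [h4]
    linear_combination h2
  have hs_sum : s = ∑ i ∈ Finset.range m, Q ^ i := by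
    rw [hs_def, hd_def] at *
    rw [← hgeom, Nat.mul_div_cancel_left _ hd]
  have hds : d * s = Q ^ m - 1 := by rw [hs_sum]; exact hgeom
  have hs_pos : 0 < s := by
    rcases Nat.eq_zero_or_pos s with h0 | h0
    · rw [h0, mul_zero] at hds; omega
    · exact h0
  have hm_le_s : m ≤ s := by
    rw [hs_sum]
    calc m = ∑ _i ∈ Finset.range m, 1 := by simp
    _ ≤ ∑ i ∈ Finset.range m, Q ^ i :=
      Finset.sum_le_sum fun i _ => Nat.one_le_pow _ _ (by omega)
  have hQ1 : Q ≡ 1 [MOD d] := ((Nat.modEq_iff_dvd' (by omega)).mpr dvd_rfl).symm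
  have hsum_mod : ∀ mm : ℕ, (∑ i ∈ Finset.range mm, Q ^ i) ≡ mm [MOD d] := by
    intro mm
    induction mm with
    | zero => rfl
    | succ k ih =>
      rw [Finset.sum_range_succ]
      have hQk : Q ^ k ≡ 1 [MOD d] := by simpa using hQ1.pow k
      exact ih.add hQk
  have hsm : d ∣ s - m := (Nat.modEq_iff_dvd' hm_le_s).mp ((hs_sum ▸ hsum_mod m).symm)
  have hmn1 : d ∣ m * n - 1 :=
    (Nat.modEq_iff_dvd' (Nat.one_le_iff_ne_zero.mpr (by positivity))).mp hmn.symm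
  -- field power facts
  have hKpow : ∀ a : K, a ≠ 0 → a ^ d = 1 := fun a ha => by
    have := FiniteField.pow_card_sub_one_eq_one a ha; rwa [hK] at this
  have hLpow : ∀ x : L, x ≠ 0 → x ^ (Q ^ m - 1) = 1 := fun x hx => by
    have := FiniteField.pow_card_sub_one_eq_one x hx; rwa [hL] at this
  have hK_sm : ∀ a : K, a ^ s = a ^ m := by
    intro a
    rcases eq_or_ne a 0 with rfl | ha
    · rw [zero_pow hs_pos.ne', zero_pow hm.ne']
    · exact pow_aux (hKpow a ha) hm_le_s hsm
  have hK_mn : ∀ a : K, a ^ (m * n) = a := by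
    intro a
    rcases eq_or_ne a 0 with rfl | ha
    · exact zero_pow (by positivity)
    · have := pow_aux (hKpow a ha) (Nat.one_le_iff_ne_zero.mpr (by positivity)) hmn1
      rwa [pow_one] at this
  have heval : ∀ y : K,
      (h.map (algebraMap K L)).eval (algebraMap K L y) = algebraMap K L (h.eval y) := by
    intro y; rw [eval_map, eval₂_at_apply]
  have hι : Function.Injective (algebraMap K L) := (algebraMap K L).injective
  -- the set S = μ_d
  set S : Set L := {z : L | z ^ d = 1} with hS_def
  have h0S : (0 : L) ∉ S := by simp [hS_def, zero_pow hd.ne']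
  have hS : ∀ z : L, z ∈ S ↔ ∃ y : K, y ≠ 0 ∧ algebraMap K L y = z := by
    have hback : ∀ y : K, y ≠ 0 → algebraMap K L y ∈ S := by
      intro y hy
      show (algebraMap K L y) ^ d = 1
      rw [← map_pow, hKpow y hy, map_one]
    intro z
    constructor
    · intro hz
      set A : Finset L := (Finset.univ.filter (fun y : K => y ≠ 0)).image (algebraMap K L)
        with hA
      set B : Finset L := Finset.univ.filter (fun w : L => w ^ d = 1) with hB
      have hAB : A ⊆ B := by
        intro w hw
        rw [hA, Finset.mem_image] at hw
        obtain ⟨y, hy, rfl⟩ := hw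
        rw [Finset.mem_filter] at hy
        rw [hB, Finset.mem_filter]
        exact ⟨Finset.mem_univ _, hback y hy.2⟩
      have hAcard : A.card = d := by
        rw [hA, Finset.card_image_of_injective _ hι, Finset.filter_ne',
          Finset.card_erase_of_mem (Finset.mem_univ _), Finset.card_univ, hK]
      have hBcard : B.card ≤ d := by
        have hsub : B ⊆ (nthRoots d (1 : L)).toFinset := by
          intro w hw
          rw [hB, Finset.mem_filter] at hw
          rw [Multiset.mem_toFinset, mem_nthRoots hd]
          exact hw.2
        calc B.card ≤ (nthRoots d (1 : L)).toFinset.card := Finset.card_le_card hsub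
        _ ≤ Multiset.card (nthRoots d (1 : L)) := Multiset.toFinset_card_le _
        _ ≤ d := card_nthRoots d 1
      have hABeq : A = B := Finset.eq_of_subset_of_card_le hAB (by omega)
      have hzB : z ∈ B := by rw [hB, Finset.mem_filter]; exact ⟨Finset.mem_univ _, hz⟩
      rw [← hABeq, hA, Finset.mem_image] at hzB
      obtain ⟨y, hy, hyz⟩ := hzB
      rw [Finset.mem_filter] at hy
      exact ⟨y, hy.2, hyz⟩
    · rintro ⟨y, hy, rfl⟩
      exact hback y hy
  -- the maps
  set f : L → L :=
    fun x : L => x ^ r * (h.map (algebraMap K L)).eval (x ^ s) with hf_def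
  set g : L → L :=
    fun z : L => z ^ r * ((h.map (algebraMap K L)).eval z) ^ s with hg_def
  set ψ : K → K := fun y : K => y ^ r * (h.eval y) ^ m with hψ_def
  set φ : K → K := fun y : K => y ^ (r * n) * h.eval y with hφ_def
  have hfs : ∀ x : L, (f x) ^ s = g (x ^ s) := by
    intro x
    show (x ^ r * (h.map (algebraMap K L)).eval (x ^ s)) ^ s
      = (x ^ s) ^ r * ((h.map (algebraMap K L)).eval (x ^ s)) ^ s
    ring
  have hgι : ∀ y : K, g (algebraMap K L y) = algebraMap K L (ψ y) := by
    intro y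
    show (algebraMap K L y) ^ r * ((h.map (algebraMap K L)).eval (algebraMap K L y)) ^ s
      = algebraMap K L (y ^ r * (h.eval y) ^ m)
    rw [heval, ← map_pow, ← map_pow, ← map_mul, hK_sm (h.eval y)]
  have hψ0 : ψ 0 = 0 := by
    show (0:K) ^ r * (h.eval 0) ^ m = 0
    rw [zero_pow hr.ne', zero_mul]
  have hφψ : φ = (fun y : K => y ^ n) ∘ ψ := by
    funext y
    show y ^ (r * n) * h.eval y = (y ^ r * (h.eval y) ^ m) ^ n
    rw [mul_pow, ← pow_mul, ← pow_mul, hK_mn (h.eval y)]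
  have hgcdnd : Nat.gcd n d = 1 := by
    have h1 : Nat.gcd n d ∣ m * n := (Nat.gcd_dvd_left n d).mul_left m
    have h2 : Nat.gcd n d ∣ m * n - 1 := (Nat.gcd_dvd_right n d).trans hmn1
    have h3 : Nat.gcd n d ∣ m * n - (m * n - 1) := Nat.dvd_sub h1 h2
    have h4 : m * n - (m * n - 1) = 1 := by
      have : 1 ≤ m * n := Nat.one_le_iff_ne_zero.mpr (by positivity)
      omega
    rwa [h4, Nat.dvd_one] at h3
  have hpown : Function.Bijective (fun y : K => y ^ n) := by
    rw [← Finite.injective_iff_bijective]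
    intro a b hab
    simp only at hab
    rcases eq_or_ne b 0 with rfl | hb
    · rw [zero_pow hn.ne'] at hab
      exact pow_eq_zero_iff hn.ne' |>.mp hab
    · have ha : a ≠ 0 := by
        intro h0
        rw [h0, zero_pow hn.ne'] at hab
        exact hb (pow_eq_zero_iff hn.ne' |>.mp hab.symm)
      have hdiv : (a / b) ^ n = 1 := by
        rw [div_pow, hab, div_self (pow_ne_zero n hb)]
      have h1 : orderOf (a / b) ∣ n := orderOf_dvd_of_pow_eq_one hdiv
      have h2 : orderOf (a / b) ∣ d :=
        orderOf_dvd_of_pow_eq_one (hKpow _ (div_ne_zero ha hb))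
      have h3 := Nat.dvd_gcd h1 h2
      rw [hgcdnd, Nat.dvd_one] at h3
      have := orderOf_eq_one_iff.mp h3
      field_simp at this
      exact this
  have hφbij : Function.Bijective φ ↔ Function.Bijective ψ := by
    rw [hφψ]
    exact Function.Bijective.of_comp_iff' hpown ψ
  -- bridge between BijOn g S S and Bijective ψ
  have hψkey : Function.Injective ψ → ∀ y : K, y ≠ 0 → ψ y ≠ 0 := by
    intro hinj y hy h0
    exact hy (hinj (h0.trans hψ0.symm))
  have hbridge : Set.BijOn g S S ↔ Function.Bijective ψ := by
    constructor
    · intro hb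
      rw [← Finite.injective_iff_bijective]
      have key : ∀ y : K, y ≠ 0 → ψ y ≠ 0 := by
        intro y hy0 hcon
        have hyS : algebraMap K L y ∈ S := (hS _).mpr ⟨y, hy0, rfl⟩
        have := hb.mapsTo hyS
        rw [hgι, hcon, map_zero] at this
        exact h0S this
      intro y1 y2 hy
      rcases eq_or_ne y1 0 with rfl | h1
      · rcases eq_or_ne y2 0 with rfl | h2
        · rfl
        · exact absurd (hψ0 ▸ hy.symm) (key y2 h2)
      · rcases eq_or_ne y2 0 with rfl | h2
        · exact absurd (hψ0 ▸ hy) (key y1 h1)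
        · have he : g (algebraMap K L y1) = g (algebraMap K L y2) := by
            rw [hgι, hgι, hy]
          exact hι (hb.injOn ((hS _).mpr ⟨y1, h1, rfl⟩) ((hS _).mpr ⟨y2, h2, rfl⟩) he)
    · intro hψb
      have key : ∀ y : K, y ≠ 0 → ψ y ≠ 0 := hψkey hψb.injective
      refine ⟨?_, ?_, ?_⟩
      · intro z hz
        obtain ⟨y, hy0, rfl⟩ := (hS z).mp hz
        rw [hgι]
        exact (hS _).mpr ⟨ψ y, key y hy0, rfl⟩
      · intro z1 hz1 z2 hz2 he
        obtain ⟨y1, hy1, rfl⟩ := (hS z1).mp hz1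
        obtain ⟨y2, hy2, rfl⟩ := (hS z2).mp hz2
        rw [hgι, hgι] at he
        exact congrArg _ (hψb.injective (hι he))
      · intro z hz
        obtain ⟨y, hy0, rfl⟩ := (hS z).mp hz
        obtain ⟨w, hw⟩ := hψb.surjective y
        have hw0 : w ≠ 0 := by
          intro h0
          rw [h0, hψ0] at hw
          exact hy0 hw.symm
        exact ⟨algebraMap K L w, (hS _).mpr ⟨w, hw0, rfl⟩, by rw [hgι, hw]⟩
  -- cyclic group facts
  obtain ⟨g₀, hg₀⟩ := IsCyclic.exists_generator (α := Lˣ)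
  have horder : orderOf g₀ = Q ^ m - 1 := by
    rw [orderOf_eq_card_of_forall_mem_zpowers hg₀, Nat.card_eq_fintype_card, Fintype.card_units, hL]
  have hA : ∀ z ∈ S, ∃ x : L, x ≠ 0 ∧ x ^ s = z := by
    intro z hz
    have hz0 : z ≠ 0 := fun h0 => h0S (h0 ▸ hz)
    set u : Lˣ := Units.mk0 z hz0 with hu
    obtain ⟨k, hk⟩ : ∃ k : ℕ, g₀ ^ k = u := by
      have := hg₀ u
      rwa [← mem_powers_iff_mem_zpowers, Submonoid.mem_powers_iff] at this
    have hud : u ^ d = 1 := by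
      apply Units.ext
      rw [Units.val_pow_eq_pow_val]
      exact hz
    have hkd : g₀ ^ (k * d) = 1 := by rw [pow_mul, hk, hud]
    have hdvd : (Q ^ m - 1) ∣ k * d := horder ▸ orderOf_dvd_of_pow_eq_one hkd
    have hdd : d * s ∣ d * k := by
      rw [hds]
      rwa [mul_comm k d] at hdvd
    have hsk : s ∣ k := (mul_dvd_mul_iff_left (by omega : d ≠ 0)).mp hdd
    obtain ⟨j, hj⟩ := hsk
    refine ⟨((g₀ ^ j : Lˣ) : L), Units.ne_zero _, ?_⟩
    rw [← Units.val_pow_eq_pow_val, ← pow_mul, show j * s = k from by rw [hj]; ring, hk]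
    rfl
  have hB : ∀ ζ : L, ζ ^ r = 1 → ζ ^ s = 1 → Nat.gcd r s = 1 → ζ = 1 := by
    intro ζ h1 h2 hg
    have h3 := Nat.dvd_gcd (orderOf_dvd_of_pow_eq_one h1) (orderOf_dvd_of_pow_eq_one h2)
    rw [hg, Nat.dvd_one] at h3
    exact orderOf_eq_one_iff.mp h3
  have hC : Nat.gcd r s ≠ 1 → ∃ ζ : L, ζ ≠ 1 ∧ ζ ^ r = 1 ∧ ζ ^ s = 1 := by
    intro hg
    set e := Nat.gcd r s with he_def
    have hepos : 0 < e := Nat.gcd_pos_of_pos_left _ hr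
    have he2 : 2 ≤ e := by omega
    obtain ⟨r', hr'⟩ := Nat.gcd_dvd_left r s
    obtain ⟨s', hs'⟩ := Nat.gcd_dvd_right r s
    have hsN : s ∣ Q ^ m - 1 := ⟨d, by rw [← hds]; ring⟩
    have heN : e ∣ Q ^ m - 1 := (Nat.gcd_dvd_right r s).trans hsN
    obtain ⟨N', hN'⟩ := heN
    have hNe : (Q ^ m - 1) / e = N' := by rw [hN']; exact Nat.mul_div_cancel_left _ hepos
    have hN'pos : 0 < N' := by
      rcases Nat.eq_zero_or_pos N' with h0 | h0
      · rw [h0, mul_zero] at hN'; omega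
      · exact h0
    refine ⟨((g₀ ^ ((Q ^ m - 1) / e) : Lˣ) : L), ?_, ?_, ?_⟩
    · intro hcon
      have h1 : (g₀ ^ ((Q ^ m - 1) / e) : Lˣ) = 1 := Units.val_eq_one.mp hcon
      have h2 : (Q ^ m - 1) ∣ (Q ^ m - 1) / e := by
        have h2' : orderOf g₀ ∣ (Q ^ m - 1) / e := orderOf_dvd_of_pow_eq_one h1
        rwa [horder] at h2'
      have h3 : (Q ^ m - 1) / e < Q ^ m - 1 := Nat.div_lt_self hN (by omega)
      have h4 : (Q ^ m - 1) / e ≠ 0 := by rw [hNe]; omega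
      have := Nat.le_of_dvd (Nat.pos_of_ne_zero h4) h2
      omega
    · rw [← Units.val_pow_eq_pow_val, ← pow_mul, hNe,
        show N' * r = (Q ^ m - 1) * r' from by rw [hN', hr']; ring,
        pow_mul, ← horder, pow_orderOf_eq_one, one_pow]
      rfl
    · rw [← Units.val_pow_eq_pow_val, ← pow_mul, hNe,
        show N' * s = (Q ^ m - 1) * s' from by rw [hN', hs']; ring,
        pow_mul, ← horder, pow_orderOf_eq_one, one_pow]
      rfl
  -- core equivalence: Bijective f ↔ gcd r s = 1 ∧ BijOn g S S
  have hf0 : f 0 = 0 := by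
    show (0:L) ^ r * _ = 0
    rw [zero_pow hr.ne', zero_mul]
  have hxsS : ∀ x : L, x ≠ 0 → x ^ s ∈ S := by
    intro x hx
    show (x ^ s) ^ d = 1
    rw [← pow_mul, mul_comm s d, hds]
    exact hLpow x hx
  have hcore : Function.Bijective f ↔ (Nat.gcd r s = 1 ∧ Set.BijOn g S S) := by
    constructor
    · intro hf
      have hfz : ∀ x : L, x ≠ 0 → f x ≠ 0 := by
        intro x hx hcon
        exact hx (hf.injective (hcon.trans hf0.symm))
      constructor
      · by_contra hg
        obtain ⟨ζ, hζ1, hζr, hζs⟩ := hC hg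
        have he : f ζ = f 1 := by
          show ζ ^ r * (h.map (algebraMap K L)).eval (ζ ^ s)
            = 1 ^ r * (h.map (algebraMap K L)).eval (1 ^ s)
          rw [hζr, hζs, one_pow, one_pow]
        exact hζ1 (hf.injective he)
      · have hmaps : Set.MapsTo g S S := by
          intro z hz
          obtain ⟨x, hx0, rfl⟩ := hA z hz
          rw [← hfs]
          exact hxsS _ (hfz x hx0)
        have hsurj : Set.SurjOn g S S := by
          intro z hz
          obtain ⟨v, hv0, hvs⟩ := hA z hz
          obtain ⟨x, hx⟩ := hf.surjective v
          have hx0 : x ≠ 0 := by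
            intro h0
            rw [h0, hf0] at hx
            exact hv0 hx.symm
          exact ⟨x ^ s, hxsS x hx0, by rw [← hfs, hx, hvs]⟩
        exact ((Set.toFinite S).surjOn_iff_bijOn_of_mapsTo hmaps).mp hsurj
    · rintro ⟨hgcd, hb⟩
      rw [← Finite.injective_iff_bijective]
      have hfz : ∀ x : L, x ≠ 0 → f x ≠ 0 := by
        intro x hx hcon
        have hH : (h.map (algebraMap K L)).eval (x ^ s) = 0 := by
          rcases mul_eq_zero.mp hcon with h1 | h1
          · exact absurd (pow_eq_zero_iff hr.ne' |>.mp h1) hx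
          · exact h1
        have := hb.mapsTo (hxsS x hx)
        have hg0 : g (x ^ s) = 0 := by
          show (x ^ s) ^ r * ((h.map (algebraMap K L)).eval (x ^ s)) ^ s = 0
          rw [hH, zero_pow hs_pos.ne', mul_zero]
        rw [hg0] at this
        exact h0S this
      intro x y hxy
      rcases eq_or_ne x 0 with rfl | hx
      · rcases eq_or_ne y 0 with rfl | hy
        · rfl
        · exact absurd (hf0 ▸ hxy.symm) (hfz y hy)
      · rcases eq_or_ne y 0 with rfl | hy
        · exact absurd (hf0 ▸ hxy) (hfz x hx)
        · have hss : x ^ s = y ^ s := by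
            apply hb.injOn (hxsS x hx) (hxsS y hy)
            rw [← hfs, ← hfs, hxy]
          set ζ : L := x / y with hζ_def
          have hζs : ζ ^ s = 1 := by
            rw [hζ_def, div_pow, hss, div_self (pow_ne_zero s hy)]
          have hxζ : x = ζ * y := by rw [hζ_def, div_mul_cancel₀ x hy]
          have hfζ : f x = ζ ^ r * f y := by
            show x ^ r * (h.map (algebraMap K L)).eval (x ^ s)
              = ζ ^ r * (y ^ r * (h.map (algebraMap K L)).eval (y ^ s))
            rw [hss, hxζ, mul_pow, mul_assoc]
          have hζr : ζ ^ r = 1 := by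
            have h1 : ζ ^ r * f y = 1 * f y := by
              rw [one_mul, ← hfζ, hxy]
            exact mul_right_cancel₀ (hfz y hy) h1
          have := hB ζ hζr hζs hgcd
          rw [hζ_def, div_eq_one_iff_eq hy] at this
          exact this
  -- assemble
  rw [hcore, hbridge, hφbij]
end

section
/- Let H(x) be any permutation polynomial over F_Q, write H(x) − H(0) = x·h(x), and let q = Q^m where m ≡ 1 (mod Q−1). Then x · h(x^((q−1)/(Q−1))) permutes F_q. -/
open Polynomial

private lemma geom_aux (Q : ℕ) (hQ : 1 ≤ Q) :
    ∀ m : ℕ, (Q - 1) * ∑ i ∈ Finset.range m, Q ^ i + 1 = Q ^ m := by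
  intro m
  induction m with
  | zero => simp
  | succ n ih =>
    rw [Finset.sum_range_succ, Nat.mul_add, pow_succ]
    have h1 : 1 ≤ Q ^ n := Nat.one_le_pow _ _ (by omega)
    have h2 : (Q - 1) * Q ^ n = Q * Q ^ n - Q ^ n := Nat.sub_one_mul _ _
    have h3 : Q ^ n ≤ Q * Q ^ n := Nat.le_mul_of_pos_left _ (by omega)
    have h4 : Q * Q ^ n = Q ^ n * Q := Nat.mul_comm _ _
    omega

private lemma sum_modeq (Q : ℕ) (hQ : 1 ≤ Q) :
    ∀ m : ℕ, (∑ i ∈ Finset.range m, Q ^ i) ≡ m [MOD Q - 1] := by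
  have hQ1 : Q ≡ 1 [MOD Q - 1] :=
    ((Nat.modEq_iff_dvd' (by omega)).mpr ⟨1, by omega⟩).symm
  intro m
  induction m with
  | zero => simp [Nat.ModEq.refl]
  | succ n ih =>
    rw [Finset.sum_range_succ]
    have : Q ^ n ≡ 1 [MOD Q - 1] := by
      simpa using hQ1.pow n
    exact ih.add this

theorem stmt_4 (Q m : ℕ) (hm : 0 < m) (hmod : m ≡ 1 [MOD Q - 1])
    (K L : Type*) [Field K] [Fintype K] [Field L] [Fintype L] [Algebra K L]
    (hK : Fintype.card K = Q) (hL : Fintype.card L = Q ^ m)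
    (H h : K[X]) (hH : Function.Bijective (fun x : K => H.eval x))
    (hfac : H - C (H.eval 0) = X * h) :
    Function.Bijective
      (fun x : L => x * (h.map (algebraMap K L)).eval (x ^ ((Q ^ m - 1) / (Q - 1)))) := by
  classical
  set φ : K →+* L := algebraMap K L with hφdef
  have hφ : Function.Injective φ := φ.injective
  have hQ2 : 2 ≤ Q := hK ▸ Fintype.one_lt_card
  set d : ℕ := (Q ^ m - 1) / (Q - 1) with hddef
  have hdvd : (Q - 1) ∣ Q ^ m - 1 := by
    simpa using Nat.sub_dvd_pow_sub_pow Q 1 m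
  have hd : (Q - 1) * d = Q ^ m - 1 := Nat.mul_div_cancel' hdvd
  have hq2 : 2 ≤ Q ^ m := by
    calc 2 ≤ Q := hQ2
    _ = Q ^ 1 := (pow_one Q).symm
    _ ≤ Q ^ m := Nat.pow_le_pow_right (by omega) hm
  have hd1 : 1 ≤ d := by
    rcases Nat.eq_zero_or_pos d with h0 | h0
    · rw [h0] at hd; omega
    · exact h0
  -- d ≡ 1 [MOD Q - 1]
  have hdsum : d = ∑ i ∈ Finset.range m, Q ^ i := by
    have := geom_aux Q (by omega) m
    have h2 : (Q - 1) * d = (Q - 1) * ∑ i ∈ Finset.range m, Q ^ i := by omega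
    exact Nat.eq_of_mul_eq_mul_left (by omega) h2
  have hdm : d ≡ 1 [MOD Q - 1] := by
    rw [hdsum]
    exact (sum_modeq Q (by omega) m).trans hmod
  have hdk : ∃ k, d = (Q - 1) * k + 1 := by
    obtain ⟨k, hk⟩ := (Nat.modEq_iff_dvd' hd1).mp hdm.symm
    exact ⟨k, by omega⟩
  -- b ^ d = b for all b : K
  have claimC : ∀ b : K, b ^ d = b := by
    intro b
    rcases eq_or_ne b 0 with rfl | hb
    · exact zero_pow (by omega)
    · obtain ⟨k, hk⟩ := hdk
      have h1 : b ^ (Q - 1) = 1 := by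
        have := FiniteField.pow_card_sub_one_eq_one b hb
        rwa [hK] at this
      rw [hk, pow_add, pow_mul, h1, one_pow, one_mul, pow_one]
  -- h has no root in K∗
  have claimB : ∀ u : K, u ≠ 0 → h.eval u ≠ 0 := by
    intro u hu hcon
    have h1 := congrArg (eval u) hfac
    simp only [eval_sub, eval_mul, eval_C, eval_X, hcon, mul_zero] at h1
    exact hu (hH.injective (sub_eq_zero.mp h1))
  -- every x^d is in the range of φ
  have hpowQ : ∀ x : L, (x ^ d) ^ Q = x ^ d := by
    intro x
    rcases eq_or_ne x 0 with rfl | hx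
    · rw [zero_pow (by omega : d ≠ 0), zero_pow (by omega : Q ≠ 0)]
    · have h1 : x ^ (Q ^ m - 1) = 1 := by
        have := FiniteField.pow_card_sub_one_eq_one x hx
        rwa [hL] at this
      have h2 : d * Q = (Q ^ m - 1) + d := by
        have e : d * Q = d * (Q - 1) + d * 1 := by
          rw [← Nat.mul_add]; congr 1; omega
        rw [e, Nat.mul_comm d (Q - 1), hd, Nat.mul_one]
      rw [← pow_mul, h2, pow_add, h1, one_mul]
  have claimA : ∀ x : L, ∃ u : K, φ u = x ^ d := by
    set p : L[X] := X ^ Q - X with hpdef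
    have hpdeg : p.natDegree = Q := by
      rw [hpdef]
      rw [natDegree_sub_eq_left_of_natDegree_lt]
      · exact natDegree_X_pow Q
      · rw [natDegree_X, natDegree_X_pow]; omega
    have hp0 : p ≠ 0 := by
      intro hc
      rw [hc] at hpdeg
      simp at hpdeg
      omega
    set A : Finset L := Finset.univ.image φ with hAdef
    set B : Finset L := p.roots.toFinset with hBdef
    have hAB : A ⊆ B := by
      intro a ha
      obtain ⟨u, _, rfl⟩ := Finset.mem_image.mp ha
      rw [hBdef, Multiset.mem_toFinset, mem_roots hp0]
      have hu : u ^ Q = u := by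
        have := FiniteField.pow_card u
        rwa [hK] at this
      simp [hpdef, IsRoot, ← map_pow, hu]
    have hcardA : A.card = Q := by
      rw [hAdef, Finset.card_image_of_injective _ hφ, Finset.card_univ, hK]
    have hcardB : B.card ≤ Q := by
      calc B.card ≤ Multiset.card p.roots := p.roots.toFinset_card_le
      _ ≤ p.natDegree := p.card_roots'
      _ = Q := hpdeg
    have hABeq : A = B := Finset.eq_of_subset_of_card_le hAB (by omega)
    intro x
    have hxB : x ^ d ∈ B := by
      rw [hBdef, Multiset.mem_toFinset, mem_roots hp0]
      simp [hpdef, IsRoot, hpowQ x]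
    rw [← hABeq] at hxB
    obtain ⟨u, _, hu⟩ := Finset.mem_image.mp hxB
    exact ⟨u, hu⟩
  -- main injectivity argument
  rw [Fintype.bijective_iff_injective_and_card]
  refine ⟨?_, rfl⟩
  intro x1 x2 hf
  simp only at hf
  obtain ⟨u1, hu1⟩ := claimA x1
  obtain ⟨u2, hu2⟩ := claimA x2
  have heval : ∀ (x : L) (u : K), φ u = x ^ d →
      (h.map φ).eval (x ^ d) = φ (h.eval u) := by
    intro x u hu
    rw [← hu, eval_map, eval₂_hom]
  rw [heval x1 u1 hu1, heval x2 u2 hu2] at hf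
  -- G u := u * h.eval u is injective
  have hG : ∀ u v : K, u * h.eval u = v * h.eval v → u = v := by
    intro u v huv
    have h1 := congrArg (eval u) hfac
    have h2 := congrArg (eval v) hfac
    simp only [eval_sub, eval_mul, eval_C, eval_X] at h1 h2
    apply hH.injective
    show H.eval u = H.eval v
    have : H.eval u - H.eval 0 = H.eval v - H.eval 0 := by rw [h1, h2, huv]
    linear_combination this
  rcases eq_or_ne x1 0 with rfl | hx1
  · simp only [zero_mul] at hf
    by_contra hx2
    have hne : Ne x2 0 := fun hc => hx2 hc.symm
    have hu2ne : u2 ≠ 0 := by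
      intro hc
      rw [hc, map_zero] at hu2
      exact pow_ne_zero d hne hu2.symm
    have := claimB u2 hu2ne
    rcases mul_eq_zero.mp hf.symm with hc | hc
    · exact hne hc
    · exact this (hφ (by rw [hc, map_zero]))
  rcases eq_or_ne x2 0 with rfl | hx2
  · simp only [zero_mul] at hf
    have hu1ne : u1 ≠ 0 := by
      intro hc
      rw [hc, map_zero] at hu1
      exact pow_ne_zero d hx1 hu1.symm
    have := claimB u1 hu1ne
    rcases mul_eq_zero.mp hf with hc | hc
    · exact absurd hc hx1
    · exact absurd (hφ (by rw [hc, map_zero])) this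
  · have hu1ne : u1 ≠ 0 := by
      intro hc; rw [hc, map_zero] at hu1; exact pow_ne_zero d hx1 hu1.symm
    have hu2ne : u2 ≠ 0 := by
      intro hc; rw [hc, map_zero] at hu2; exact pow_ne_zero d hx2 hu2.symm
    have hfd := congrArg (· ^ d) hf
    simp only [mul_pow] at hfd
    have hphi : ∀ u : K, (φ (h.eval u)) ^ d = φ (h.eval u) := by
      intro u; rw [← map_pow, claimC]
    rw [hphi u1, hphi u2, ← hu1, ← hu2, ← map_mul, ← map_mul] at hfd
    have huu : u1 = u2 := hG u1 u2 (hφ hfd)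
    have hc1 : φ (h.eval u1) ≠ 0 := fun hc => claimB u1 hu1ne (hφ (by rw [hc, map_zero]))
    rw [huu] at hf
    exact mul_right_cancel₀ (huu ▸ hc1) hf
end

section
/- Let Q be a prime power with Q ≡ ±2 (mod 5) and β ∈ F_Q. Then the polynomial x^5 + β·x^3 + 5^{−1}·β^2·x permutes F_Q. -/
/-!
With `c = -β / 5` the polynomial is the Dickson polynomial `D₅(x, c) = x⁵ - 5cx³ + 5c²x`, and
`D₅(u + v, c) = u⁵ + v⁵` whenever `uv = c`. Every `x ∈ F_Q` is `u + v` with `uv = c` for the two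
roots `u, v` of `T² - xT + c`, which lie in `F_{Q²}`. If `D₅(x, c) = D₅(y, c)` with `y = s + t`,
then `{u⁵, v⁵}` and `{s⁵, t⁵}` have the same sum and product, so they coincide; as
`Q² ≡ 4 (mod 5)`, fifth powers are injective on `F_{Q²}`, whence `{u, v} = {s, t}` and `x = y`.
-/

theorem pow_mul_add_one_eq_self {M : Type*} [Monoid M] {N : ℕ} {w : M} (hw : w ^ (N + 1) = w)
    (k : ℕ) : w ^ (N * k + 1) = w := by
  induction k with
  | zero => simp
  | succ k ih => rw [mul_add_one, add_assoc, pow_add, hw, ← pow_succ, ih]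

theorem injOn_pow_of_coprime {M : Type*} [Monoid M] {d q : ℕ} (hd : d.Coprime (q - 1))
    (hq : 2 < q) : Set.InjOn (· ^ d) {w : M | w ^ q = w} := by
  obtain ⟨a, -, ha⟩ := Nat.exists_mul_mod_eq_one_of_coprime hd (by omega)
  have hda : d * a = (q - 1) * (d * a / (q - 1)) + 1 := by
    conv_lhs => rw [← Nat.div_add_mod (d * a) (q - 1), ha]
  have hq' : q - 1 + 1 = q := by omega
  intro w (hw : w ^ q = w) z (hz : z ^ q = z) h
  calc w = (w ^ d) ^ a := by rw [← pow_mul, hda, pow_mul_add_one_eq_self (hq' ▸ hw)]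
    _ = (z ^ d) ^ a := congrArg (· ^ a) h
    _ = z := by rw [← pow_mul, hda, pow_mul_add_one_eq_self (hq' ▸ hz)]

theorem RingHom.apply_apply_eq_of_sq_eq {R : Type*} [CommRing R] [IsDomain R] (φ : R →+* R)
    {b c u : R} (hb : φ b = b) (hc : φ c = c) (hu : u ^ 2 = b * u - c) : φ (φ u) = u := by
  have hφu : φ u ^ 2 = b * φ u - c := by rw [← map_pow, hu, map_sub, map_mul, hb, hc]
  rcases mul_eq_zero.mp (by linear_combination hφu - hu : (φ u - u) * (φ u - (b - u)) = 0)
    with h | h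
  · rw [sub_eq_zero.mp h, sub_eq_zero.mp h]
  · rw [sub_eq_zero.mp h, map_sub, hb, sub_eq_zero.mp h, sub_sub_cancel]

theorem add_eq_add_of_injOn_pow {R : Type*} [CommRing R] [IsDomain R] {S : Set R} {n : ℕ}
    (hS : Set.InjOn (· ^ n) S) {u v s t : R} (hu : u ∈ S) (hv : v ∈ S) (hs : s ∈ S) (ht : t ∈ S)
    (hsum : u ^ n + v ^ n = s ^ n + t ^ n) (hprod : u ^ n * v ^ n = s ^ n * t ^ n) :
    u + v = s + t := by
  rcases mul_eq_zero.mp (by linear_combination (-(s ^ n)) * hsum + hprod :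
      (s ^ n - u ^ n) * (s ^ n - v ^ n) = 0) with h | h
  · rw [hS hs hu (sub_eq_zero.mp h), hS ht hv (by linear_combination -hsum - h)]
  · rw [hS hs hv (sub_eq_zero.mp h), hS ht hu (by linear_combination -hsum - h), add_comm]

theorem pow_five_add_pow_five_of_mul_eq {R : Type*} [CommRing R] {u v c : R} (h : u * v = c) :
    u ^ 5 + v ^ 5 = (u + v) ^ 5 - 5 * c * (u + v) ^ 3 + 5 * c ^ 2 * (u + v) := by
  rw [← h]; ring

theorem exists_add_eq_mul_eq_fixed_pow_card_sq (K L : Type*) [Field K] [Fintype K] [Field L]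
    [IsAlgClosed L] [Algebra K L] (b c : K) :
    ∃ u v : L, u + v = algebraMap K L b ∧ u * v = algebraMap K L c ∧
      u ^ Fintype.card K ^ 2 = u ∧ v ^ Fintype.card K ^ 2 = v := by
  set ι := algebraMap K L
  obtain ⟨u, hu⟩ := IsAlgClosed.exists_root
    (Polynomial.X ^ 2 - Polynomial.C (ι b) * Polynomial.X + Polynomial.C (ι c)) (by
      rw [show (_ : Polynomial L).degree = 2 by compute_degree!]
      decide)
  have hu2 : u ^ 2 = ι b * u - ι c := by
    simp only [Polynomial.IsRoot, Polynomial.eval_add, Polynomial.eval_sub, Polynomial.eval_pow,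
      Polynomial.eval_mul, Polynomial.eval_C, Polynomial.eval_X] at hu
    linear_combination hu
  have hfix {w : L} (hw : w ^ 2 = ι b * w - ι c) : w ^ Fintype.card K ^ 2 = w := by
    have := (FiniteField.frobeniusAlgHom K L : L →+* L).apply_apply_eq_of_sq_eq
      ((FiniteField.frobeniusAlgHom K L).commutes b)
      ((FiniteField.frobeniusAlgHom K L).commutes c) hw
    simp only [AlgHom.coe_toRingHom, FiniteField.coe_frobeniusAlgHom] at this
    rwa [← pow_mul, ← sq] at this
  exact ⟨u, ι b - u, add_sub_cancel u _, by linear_combination -hu2, hfix hu2,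
    hfix (by linear_combination hu2)⟩

theorem five_ne_zero_of_card_mod_five {K : Type*} [Field K] [Fintype K]
    (h : Fintype.card K % 5 = 2 ∨ Fintype.card K % 5 = 3) : (5 : K) ≠ 0 := by
  intro h5
  have hcard := FiniteField.cast_card_eq_zero K
  rw [← Nat.div_add_mod (Fintype.card K) 5] at hcard
  push_cast at hcard
  apply one_ne_zero (α := K)
  rcases h with h | h <;> rw [h] at hcard <;> push_cast at hcard
  · linear_combination (1 + 2 * (Fintype.card K / 5 : ℕ) : K) * h5 - 2 * hcard
  · linear_combination 2 * hcard - (1 + 2 * (Fintype.card K / 5 : ℕ) : K) * h5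

theorem coprime_five_sq_sub_one_of_mod_five {q : ℕ} (h : q % 5 = 2 ∨ q % 5 = 3) :
    Nat.Coprime 5 (q ^ 2 - 1) := by
  have hq2 : q ^ 2 % 5 = 4 := by
    rw [Nat.pow_mod]; rcases h with h | h <;> rw [h]
  rw [Nat.Prime.coprime_iff_not_dvd Nat.prime_five]
  omega

theorem stmt_7 (Q : ℕ) (K : Type*) [Field K] [Fintype K]
    (hK : Fintype.card K = Q) (hQ : Q % 5 = 2 ∨ Q % 5 = 3) (β : K) :
    Function.Bijective (fun x : K => x ^ 5 + β * x ^ 3 + (5 : K)⁻¹ * β ^ 2 * x) := by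
  subst hK
  have h5 := five_ne_zero_of_card_mod_five hQ
  set c : K := -(5 : K)⁻¹ * β
  have hc (x : K) :
      x ^ 5 + β * x ^ 3 + 5⁻¹ * β ^ 2 * x = x ^ 5 - 5 * c * x ^ 3 + 5 * c ^ 2 * x := by
    simp only [c]; field_simp; ring
  simp_rw [hc, ← Finite.injective_iff_bijective]
  intro x y hxy
  let L := AlgebraicClosure K
  obtain ⟨u, v, huv, huv', hu, hv⟩ := exists_add_eq_mul_eq_fixed_pow_card_sq K L x c
  obtain ⟨s, t, hst, hst', hs, ht⟩ := exists_add_eq_mul_eq_fixed_pow_card_sq K L y c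
  have hinj := injOn_pow_of_coprime (M := L) (coprime_five_sq_sub_one_of_mod_five hQ)
    (by nlinarith [show 2 ≤ Fintype.card K by omega])
  apply (algebraMap K L).injective
  rw [← huv, ← hst]
  refine add_eq_add_of_injOn_pow hinj hu hv hs ht ?_ (by rw [← mul_pow, ← mul_pow, huv', hst'])
  rw [pow_five_add_pow_five_of_mul_eq huv', pow_five_add_pow_five_of_mul_eq hst', huv, hst]
  simpa [map_ofNat] using congrArg (algebraMap K L) hxy
end

section
/- Let Q = 5^n and β ∈ F_Q a nonsquare. Then the polynomial x^5 + 2β·x^3 + β^2·x permutes F_Q. -/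
theorem stmt_8 (n : ℕ) (hn : 0 < n) (K : Type*) [Field K] [Fintype K]
    (hK : Fintype.card K = 5 ^ n) (β : K) (hns : ¬∃ γ : K, γ ^ 2 = β) :
    Function.Bijective (fun x : K => x ^ 5 + 2 * β * x ^ 3 + β ^ 2 * x) := by
  have h5 : (5 : K) = 0 := by
    have h := FiniteField.cast_card_eq_zero K
    rw [hK] at h
    push_cast at h
    exact (pow_eq_zero_iff (Nat.pos_iff_ne_zero.mp hn)).mp h
  rw [← Finite.injective_iff_bijective]
  intro a b hab
  simp only at hab
  by_contra hne
  have hv : a - b ≠ 0 := sub_ne_zero.mpr hne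
  have key : ((a - b) ^ 2 - β) ^ 2 - β * (a + b) ^ 2 = 0 := by
    have h0 : (a - b) * (((a - b) ^ 2 - β) ^ 2 - β * (a + b) ^ 2) = 0 := by
      linear_combination hab - (a ^ 3 * β - b ^ 3 * β + a ^ 4 * b - 2 * a ^ 3 * b ^ 2
        + 2 * a ^ 2 * b ^ 3 - a ^ 2 * b * β - a * b ^ 4 + a * b ^ 2 * β) * h5
    exact (mul_eq_zero.mp h0).resolve_left hv
  by_cases hu : a + b = 0
  · apply hns
    refine ⟨a - b, ?_⟩
    have h2 : ((a - b) ^ 2 - β) ^ 2 = 0 := by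
      linear_combination key + β * (a + b) * hu
    have h1 : (a - b) ^ 2 - β = 0 := by
      exact (pow_eq_zero_iff two_ne_zero).mp h2
    linear_combination h1
  · apply hns
    refine ⟨((a - b) ^ 2 - β) / (a + b), ?_⟩
    field_simp
    linear_combination key
end

section
/- Let Q be a prime power with Q ≡ 0 (mod 3), and α ∈ F_{Q^2}^*. Then x^(Q+2) + α·x permutes F_{Q^2} if and only if α^(Q−1) = −1. -/
theorem stmt_9 (Q : ℕ) (F : Type*) [Field F] [Fintype F]
    (hF : Fintype.card F = Q ^ 2) (hQ : Q % 3 = 0) (α : F) (hα : α ≠ 0) :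
    Function.Bijective (fun x : F => x ^ (Q + 2) + α * x) ↔ α ^ (Q - 1) = -1 := by
  classical
  have h3Q : 3 ∣ Q := Nat.dvd_of_mod_eq_zero hQ
  have hQpos : 0 < Q := by
    rcases Nat.eq_zero_or_pos Q with h | h
    · subst h; simp at hF
    · exact h
  have hQ3 : 3 ≤ Q := Nat.le_of_dvd hQpos h3Q
  obtain ⟨n, hp, hcard⟩ := FiniteField.card F (ringChar F)
  have h3p : ringChar F = 3 := by
    have h3 : (3:ℕ) ∣ ringChar F ^ (n:ℕ) := by
      rw [← hcard, hF]; exact dvd_pow h3Q (by norm_num)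
    exact ((Nat.prime_dvd_prime_iff_eq Nat.prime_three hp).mp
      (Nat.Prime.dvd_of_dvd_pow Nat.prime_three h3)).symm
  haveI hchar : CharP F 3 := h3p ▸ ringChar.charP F
  haveI : ExpChar F 3 := ExpChar.prime Nat.prime_three
  obtain ⟨k, hk⟩ : ∃ k, Q = 3 ^ k := by
    have hdvd : Q ∣ 3 ^ (n:ℕ) := by
      rw [← h3p, ← hcard, hF, sq]; exact dvd_mul_left Q Q
    obtain ⟨k, _, hk⟩ := (Nat.dvd_prime_pow Nat.prime_three).mp hdvd
    exact ⟨k, hk⟩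
  have h3F : (3:F) = 0 := by exact_mod_cast CharP.cast_eq_zero F 3
  have h2F : (2:F) = -1 := by linear_combination h3F
  have hQodd : Odd Q := hk ▸ (Nat.odd_iff.mpr (by norm_num)).pow
  have hadd : ∀ x y : F, (x + y) ^ Q = x ^ Q + y ^ Q := by
    intro x y; rw [hk]; exact add_pow_expChar_pow x y 3 k
  have hpow : ∀ x : F, x ^ (Q^2) = x := by
    intro x; rw [← hF]; exact FiniteField.pow_card x
  -- N x := x^(Q+1) lands in the fixed field of the Q-power map
  have hNmem : ∀ x : F, (x ^ (Q+1)) ^ Q = x ^ (Q+1) := by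
    intro x
    rw [← pow_mul]
    have e : (Q+1)*Q = Q^2 + Q := by ring
    rw [e, pow_add, hpow]
    exact (pow_succ' x Q).symm
  -- two-is-invertible style fact
  have h2ne : (2:F) ≠ 0 := by rw [h2F]; simp
  -- key identity
  have hkey : ∀ x : F, (x ^ (Q+2) + α * x) ^ (Q+1)
      = (x^(Q+1))^3 + (α + α^Q) * (x^(Q+1))^2 + α^(Q+1) * (x^(Q+1)) := by
    intro x
    have e1 : (x ^ (Q+2)) ^ Q = x ^ (2*Q+1) := by
      rw [← pow_mul]
      have e : (Q+2)*Q = Q^2 + 2*Q := by ring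
      rw [e, pow_add, hpow, ← pow_succ']
    calc (x ^ (Q+2) + α * x) ^ (Q+1)
        = ((x ^ (Q+2)) ^ Q + (α*x) ^ Q) * (x ^ (Q+2) + α * x) := by
          rw [pow_succ, hadd]
      _ = (x ^ (2*Q+1) + α^Q * x^Q) * (x ^ (Q+2) + α * x) := by rw [e1, mul_pow]
      _ = _ := by ring
  -- norm surjectivity onto the fixed field
  have hsurj : ∀ t : F, t ^ Q = t → ∃ x : F, x ^ (Q+1) = t := by
    intro t ht
    rcases eq_or_ne t 0 with rfl | ht0
    · exact ⟨0, zero_pow (by omega)⟩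
    obtain ⟨g, hg⟩ := IsCyclic.exists_generator (α := Fˣ)
    have horder : orderOf g = Q^2 - 1 := by
      rw [orderOf_eq_card_of_forall_mem_zpowers hg, Nat.card_eq_fintype_card,
        Fintype.card_units, hF]
    set u : Fˣ := Units.mk0 t ht0 with hu
    have huQ : u ^ (Q-1) = 1 := by
      have h1 : u ^ (Q-1) * u = 1 * u := by
        rw [one_mul, ← pow_succ]
        apply Units.ext
        have : Q - 1 + 1 = Q := by omega
        rw [this]
        simpa [hu] using ht
      exact mul_right_cancel h1
    obtain ⟨j, hj⟩ := (Submonoid.mem_powers_iff _ _).mp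
      ((mem_powers_iff_mem_zpowers).mpr (hg u))
    have hdvd : (Q+1)*(Q-1) ∣ j*(Q-1) := by
      have : g ^ (j*(Q-1)) = 1 := by rw [pow_mul, hj, huQ]
      have := orderOf_dvd_of_pow_eq_one this
      rwa [horder, show Q^2 - 1 = (Q+1)*(Q-1) by cases Q with
        | zero => omega
        | succ m => simp [pow_two]; ring_nf; omega] at this
    have hdvd2 : (Q+1) ∣ j := by
      have hQ1 : 0 < Q - 1 := by omega
      exact (Nat.mul_dvd_mul_iff_right hQ1).mp hdvd
    obtain ⟨i, rfl⟩ := hdvd2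
    refine ⟨((g ^ i : Fˣ) : F), ?_⟩
    have hgi : ((g ^ i) ^ (Q+1) : Fˣ) = u := by rw [← pow_mul, mul_comm i (Q+1), ← hj, mul_comm]
    have h2 := congrArg (Units.val) hgi
    simpa [hu] using h2
  -- abbreviations
  set s : F := α + α ^ Q with hs_def
  set a : F := α ^ (Q+1) with ha_def
  have hsQ : s ^ Q = s := by
    rw [hs_def, hadd, ← pow_mul]
    have e : Q * Q = Q ^ 2 := by ring
    rw [e, hpow, add_comm]
  have haQ : a ^ Q = a := hNmem α
  have hnegpow : ∀ x : F, (-x) ^ Q = -(x ^ Q) := fun x => Odd.neg_pow hQodd x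
  constructor
  · -- forward
    intro hbij
    -- ψ t = t^3 + s t^2 + a t is injective on the fixed field
    have hψclosed : ∀ t : F, t ^ Q = t → (t^3 + s*t^2 + a*t) ^ Q = t^3 + s*t^2 + a*t := by
      intro t ht
      rw [hadd, hadd, mul_pow, mul_pow, ← pow_mul, ← pow_mul, mul_comm 3 Q, mul_comm 2 Q,
        pow_mul, pow_mul, ht, hsQ, haQ]
    have hψinj : ∀ t u : F, t ^ Q = t → u ^ Q = u →
        t^3 + s*t^2 + a*t = u^3 + s*u^2 + a*u → t = u := by
      have hΨsurj : Function.Surjective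
          (fun t : {t : F // t ^ Q = t} => (⟨t.1^3 + s*t.1^2 + a*t.1, hψclosed t.1 t.2⟩ :
            {t : F // t ^ Q = t})) := by
        rintro ⟨r, hr⟩
        obtain ⟨z, hz⟩ := hsurj r hr
        obtain ⟨x, hx⟩ := hbij.2 z
        refine ⟨⟨x ^ (Q+1), hNmem x⟩, ?_⟩
        apply Subtype.ext
        simp only
        rw [← hkey x]
        simp only at hx
        rw [hx, hz]
      have hΨinj := Finite.injective_iff_surjective.mpr hΨsurj
      intro t u ht hu h
      have := hΨinj (a₁ := ⟨t, ht⟩) (a₂ := ⟨u, hu⟩) (Subtype.ext h)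
      exact congrArg Subtype.val this
    -- show s = 0
    have hs0 : s = 0 := by
      by_contra hsne
      set w : F := -((s^2 + a) / s) with hw_def
      have hsw : s * w = -(s^2 + a) := by
        rw [hw_def]; field_simp
      have hwQ : w ^ Q = w := by
        rw [hw_def, hnegpow, div_pow, hadd, ← pow_mul, mul_comm 2 Q, pow_mul, hsQ, haQ]
      set t : F := -(w + s) with ht_def
      set u : F := -(w - s) with hu_def
      have ht : t ^ Q = t := by
        rw [ht_def, hnegpow, hadd, hwQ, hsQ]
      have hu : u ^ Q = u := by
        rw [hu_def, hnegpow, sub_eq_add_neg, hadd, hwQ, hnegpow, hsQ, ← sub_eq_add_neg]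
      have heq : t^3 + s*t^2 + a*t = u^3 + s*u^2 + a*u := by
        rw [ht_def, hu_def]
        linear_combination s * hsw + (-s^3 - 2*w^2*s + w*s^2 - a*s) * h3F
      have := hψinj t u ht hu heq
      rw [ht_def, hu_def] at this
      have h2s : (2:F) * s = 0 := by linear_combination -this
      rw [h2F] at h2s
      exact hsne (by linear_combination -h2s)
    -- conclude
    have hQα : α ^ Q = -α := by
      have : α + α ^ Q = 0 := hs0
      linear_combination this
    have h1 : α ^ (Q-1) * α = α ^ Q := by
      rw [← pow_succ]; congr 1; omega
    have : α ^ (Q-1) * α = (-1) * α := by rw [h1, hQα]; ring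
    exact mul_right_cancel₀ hα this
  · -- backward
    intro hα1
    have hQα : α ^ Q = -α := by
      have h1 : α ^ (Q-1) * α = α ^ Q := by rw [← pow_succ]; congr 1; omega
      rw [← h1, hα1]; ring
    rw [Finite.injective_iff_bijective.symm]
    intro x y hxy
    simp only at hxy
    -- from hkey: ψ (N x) = ψ (N y)
    have h1 : (x^(Q+1))^3 + s*(x^(Q+1))^2 + a*(x^(Q+1))
        = (y^(Q+1))^3 + s*(y^(Q+1))^2 + a*(y^(Q+1)) := by
      rw [← hkey x, ← hkey y, hxy]
    set t : F := x ^ (Q+1) with ht_def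
    set u : F := y ^ (Q+1) with hu_def
    have hsz : s = 0 := by rw [hs_def, hQα]; ring
    have hA : a = -(α^2) := by rw [ha_def, pow_succ, hQα]; ring
    rw [hsz, hA] at h1
    have hfac : (t - u) * ((t - u) - α) * ((t - u) + α) = 0 := by
      linear_combination h1 + (t*u^2 - t^2*u) * h3F
    have hαnotfix : ∀ d : F, d ^ Q = d → d ≠ α ∧ d ≠ -α := by
      intro d hd
      constructor
      · rintro rfl
        apply hα
        have h2a : (2:F) * d = 0 := by linear_combination hQα - hd
        rw [h2F] at h2a
        linear_combination -h2a
      · rintro rfl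
        apply hα
        have hdQ : (-α : F) ^ Q = -α := hd
        rw [hnegpow, hQα] at hdQ
        have h2a : (2:F) * α = 0 := by linear_combination hdQ
        rw [h2F] at h2a
        linear_combination -h2a
    have htu : t = u := by
      have hdQ : (t - u) ^ Q = t - u := by
        rw [sub_eq_add_neg, hadd, hnegpow, ht_def, hu_def, hNmem, hNmem, ← sub_eq_add_neg]
      rcases mul_eq_zero.mp hfac with h | h
      · rcases mul_eq_zero.mp h with h | h
        · exact sub_eq_zero.mp h
        · exact absurd (by linear_combination h) (hαnotfix (t-u) hdQ).1
      · exact absurd (by linear_combination h) (hαnotfix (t-u) hdQ).2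
    -- now f x = (t+α) x, f y = (t+α) y
    have hta : t + α ≠ 0 := by
      intro h
      have : t = -α := by linear_combination h
      exact (hαnotfix t (ht_def ▸ hNmem x)).2 this
    have hfx : x ^ (Q+2) + α * x = (t + α) * x := by
      rw [ht_def]
      have : x ^ (Q+2) = x ^ (Q+1) * x := by rw [← pow_succ]
      rw [this]; ring
    have hfy : y ^ (Q+2) + α * y = (t + α) * y := by
      rw [htu, hu_def]
      have : y ^ (Q+2) = y ^ (Q+1) * y := by rw [← pow_succ]
      rw [this]; ring
    rw [hfx, hfy] at hxy
    exact mul_left_cancel₀ hta hxy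
end

section
/- Let Q be a prime power with Q ≡ 2 (mod 6), and α ∈ F_{Q^2}^*. Then x^(Q+2) + α·x permutes F_{Q^2} if and only if α^(Q−1) has multiplicative order 3. -/
theorem stmt_10 (Q : ℕ) (F : Type*) [Field F] [Fintype F]
    (hF : Fintype.card F = Q ^ 2) (hQ : Q % 6 = 2) (α : F) (hα : α ≠ 0) :
    Function.Bijective (fun x : F => x ^ (Q + 2) + α * x) ↔ orderOf (α ^ (Q - 1)) = 3 := by
  have hQ2 : 2 ≤ Q := by omega
  have hQQpos : 1 ≤ Q ^ 2 := Nat.one_le_pow _ _ (by omega)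
  have hsqsub : Q ^ 2 - 1 ^ 2 = (Q + 1) * (Q - 1) := Nat.sq_sub_sq Q 1
  have hee : (Q + 1) * (Q - 1) + 1 = Q ^ 2 := by simp only [one_pow] at hsqsub; omega
  have hQ1 : Q - 1 + 1 = Q := by omega
  -- characteristic 2
  haveI hCF : CharP F (ringChar F) := ringChar.charP F
  obtain ⟨n, hp, hcard⟩ := FiniteField.card F (ringChar F)
  have hQdvd : Q ∣ ringChar F ^ (n : ℕ) := by
    rw [← hcard, hF]; exact dvd_pow_self Q (by norm_num)
  obtain ⟨k, hkn, hQk⟩ := (Nat.dvd_prime_pow hp).mp hQdvd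
  have hp2 : ringChar F = 2 := by
    have h2Q : (2 : ℕ) ∣ Q := by omega
    rw [hQk] at h2Q
    have h2p := Nat.Prime.dvd_of_dvd_pow Nat.prime_two h2Q
    exact ((Nat.prime_dvd_prime_iff_eq Nat.prime_two hp).mp h2p).symm
  haveI hC2 : CharP F 2 := hp2 ▸ hCF
  haveI : Fact (Nat.Prime 2) := ⟨Nat.prime_two⟩
  have h2 : (2 : F) = 0 := by exact_mod_cast CharP.cast_eq_zero F 2
  have frob : ∀ a b : F, (a + b) ^ Q = a ^ Q + b ^ Q := by
    intro a b
    rw [hQk, hp2]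
    exact add_pow_char_pow a b 2 k
  have hcard2 : ∀ a : F, a ^ (Q ^ 2) = a := by
    intro a
    have h := FiniteField.pow_card a
    rwa [hF] at h
  have hpow : ∀ a : F, (a ^ Q) ^ Q = a := by
    intro a
    rw [← pow_mul, show Q * Q = Q ^ 2 by ring]
    exact hcard2 a
  have hz1 : ∀ z : F, z ≠ 0 → (z ^ (Q + 1)) ^ (Q - 1) = 1 := by
    intro z hz
    have h1 : (z ^ (Q + 1)) ^ (Q - 1) * z = 1 * z := by
      rw [one_mul, ← pow_mul, ← pow_succ, hee]
      exact hcard2 z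
    exact mul_right_cancel₀ hz h1
  have hnormfix : ∀ z : F, (z ^ (Q + 1)) ^ Q = z ^ (Q + 1) := by
    intro z
    rw [← pow_mul, show (Q + 1) * Q = Q ^ 2 + Q by ring, pow_add, hcard2 z, pow_succ']
  -- cyclic group of units
  obtain ⟨ξ, hξ⟩ := IsCyclic.exists_generator (α := Fˣ)
  have hxiord : orderOf ξ = (Q + 1) * (Q - 1) := by
    rw [orderOf_eq_card_of_forall_mem_zpowers hξ, Nat.card_units, Nat.card_eq_fintype_card, hF]
    omega
  -- norm surjectivity
  have hns : ∀ d : F, d ≠ 0 → d ^ Q = d → ∃ w : F, w ≠ 0 ∧ w ^ (Q + 1) = d := by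
    intro d hd hdQ
    have hd1 : d ^ (Q - 1) = 1 := by
      have h1 : d ^ (Q - 1) * d = 1 * d := by rw [one_mul, ← pow_succ, hQ1, hdQ]
      exact mul_right_cancel₀ hd h1
    have hδ1 : (Units.mk0 d hd) ^ (Q - 1) = 1 := by
      apply Units.ext
      rw [Units.val_pow_eq_pow_val]
      simpa using hd1
    obtain ⟨kk, hkk⟩ := (Submonoid.mem_powers_iff _ _).mp
      ((mem_powers_iff_mem_zpowers).mpr (hξ (Units.mk0 d hd)))
    have hk1 : ξ ^ (kk * (Q - 1)) = 1 := by rw [pow_mul, hkk, hδ1]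
    have hdvd : (Q + 1) * (Q - 1) ∣ kk * (Q - 1) := hxiord ▸ orderOf_dvd_of_pow_eq_one hk1
    have hdvd2 : (Q + 1) ∣ kk := (mul_dvd_mul_iff_right (show (Q - 1 : ℕ) ≠ 0 by omega)).mp hdvd
    obtain ⟨j, hj⟩ := hdvd2
    refine ⟨((ξ ^ j : Fˣ) : F), Units.ne_zero _, ?_⟩
    have hcast : ((ξ ^ j : Fˣ) : F) ^ (Q + 1) = ((ξ ^ (j * (Q + 1)) : Fˣ) : F) := by
      rw [pow_mul]
      norm_cast
    rw [hcast, show j * (Q + 1) = (Q + 1) * j from mul_comm _ _, ← hj, hkk]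
    rfl
  -- a primitive cube root of unity
  obtain ⟨r, hr⟩ : ∃ r, Q = 3 * r + 2 := ⟨Q / 3, by omega⟩
  obtain ⟨ω, hωq⟩ : ∃ ω : F, ω ^ 2 + ω + 1 = 0 := by
    have hMpos : 0 < (r + 1) * (Q - 1) := Nat.mul_pos (by omega) (by omega)
    have h3M : 3 * ((r + 1) * (Q - 1)) = (Q + 1) * (Q - 1) := by
      have h31 : 3 * (r + 1) = Q + 1 := by omega
      calc 3 * ((r + 1) * (Q - 1)) = 3 * (r + 1) * (Q - 1) := by ring
        _ = (Q + 1) * (Q - 1) := by rw [h31]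
    have hω3 : (ξ ^ ((r + 1) * (Q - 1))) ^ 3 = 1 := by
      rw [← pow_mul, mul_comm, h3M, ← hxiord, pow_orderOf_eq_one]
    have hωne : (ξ ^ ((r + 1) * (Q - 1))) ≠ 1 := by
      intro h
      have hdvd := orderOf_dvd_of_pow_eq_one h
      rw [hxiord] at hdvd
      have hle := Nat.le_of_dvd hMpos hdvd
      omega
    refine ⟨((ξ ^ ((r + 1) * (Q - 1)) : Fˣ) : F), ?_⟩
    have h3 : ((ξ ^ ((r + 1) * (Q - 1)) : Fˣ) : F) ^ 3 = 1 := by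
      rw [← Units.val_pow_eq_pow_val, hω3, Units.val_one]
    have hne : ((ξ ^ ((r + 1) * (Q - 1)) : Fˣ) : F) ≠ 1 := by
      intro h
      exact hωne (Units.ext (by simpa using h))
    have hfac : (((ξ ^ ((r + 1) * (Q - 1)) : Fˣ) : F) - 1) *
        (((ξ ^ ((r + 1) * (Q - 1)) : Fˣ) : F) ^ 2 + ((ξ ^ ((r + 1) * (Q - 1)) : Fˣ) : F) + 1)
        = 0 := by linear_combination h3
    rcases mul_eq_zero.mp hfac with h | h
    · exact absurd (sub_eq_zero.mp h) hne
    · exact h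
  have hω3 : ω ^ 3 = 1 := by linear_combination (ω - 1) * hωq
  have hωQ : ω ^ Q = ω ^ 2 := by
    rw [hr, pow_add, pow_mul, hω3, one_pow, one_mul]
  have hωQ1 : ω ^ (Q + 1) = 1 := by
    rw [hr, show 3 * r + 2 + 1 = 3 * (r + 1) by ring, pow_mul, hω3, one_pow]
  have hωn1 : ω ≠ 1 := by
    intro h
    rw [h] at hωq
    exact one_ne_zero (show (1 : F) = 0 by linear_combination hωq - h2)
  have hω0 : ω ≠ 0 := by
    intro h
    rw [h] at hωq
    simpa using hωq
  -- β = α^Q and basic facts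
  set β := α ^ Q with hβ
  have hβQ : β ^ Q = α := hpow α
  have hβ0 : β ≠ 0 := pow_ne_zero _ hα
  have hαβ : α * α ^ (Q - 1) = β := by
    rw [hβ, ← pow_succ', hQ1]
  have hcQ : (α + β) ^ Q = α + β := by
    rw [frob, hβQ, ← hβ]; ring
  have hDQ : (α ^ 2 + α * β + β ^ 2) ^ Q = α ^ 2 + α * β + β ^ 2 := by
    have e1 : (α ^ 2 + α * β + β ^ 2) ^ Q = (α ^ 2) ^ Q + (α * β) ^ Q + (β ^ 2) ^ Q := by
      rw [frob, frob]
    rw [e1, mul_pow, pow_right_comm α 2 Q, pow_right_comm β 2 Q, hβQ, ← hβ]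
    ring
  -- bridge: order = 3  ↔  α² + αβ + β² = 0
  have hbridge : orderOf (α ^ (Q - 1)) = 3 ↔ α ^ 2 + α * β + β ^ 2 = 0 := by
    constructor
    · intro h
      have h3 : (α ^ (Q - 1)) ^ 3 = 1 := by rw [← h]; exact pow_orderOf_eq_one _
      have hne1 : α ^ (Q - 1) ≠ 1 := by
        intro h1
        rw [h1, orderOf_one] at h
        norm_num at h
      have hfac : (α ^ (Q - 1) - 1) * ((α ^ (Q - 1)) ^ 2 + α ^ (Q - 1) + 1) = 0 := by
        linear_combination h3
      have hq3 : (α ^ (Q - 1)) ^ 2 + α ^ (Q - 1) + 1 = 0 := by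
        rcases mul_eq_zero.mp hfac with h' | h'
        · exact absurd (sub_eq_zero.mp h') hne1
        · exact h'
      linear_combination α ^ 2 * hq3 - (α + α * α ^ (Q - 1) + β) * hαβ
    · intro hD0
      have h1 : α ^ 2 * ((α ^ (Q - 1)) ^ 2 + α ^ (Q - 1) + 1) = 0 := by
        linear_combination hD0 + (α * α ^ (Q - 1) + β + α) * hαβ
      have hq3 : (α ^ (Q - 1)) ^ 2 + α ^ (Q - 1) + 1 = 0 := by
        rcases mul_eq_zero.mp h1 with h' | h'
        · exact absurd h' (pow_ne_zero _ hα)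
        · exact h'
      have h3 : (α ^ (Q - 1)) ^ 3 = 1 := by linear_combination (α ^ (Q - 1) - 1) * hq3
      have hne1 : α ^ (Q - 1) ≠ 1 := by
        intro h1
        rw [h1] at hq3
        exact one_ne_zero (show (1 : F) = 0 by linear_combination hq3 - h2)
      haveI : Fact (Nat.Prime 3) := ⟨by norm_num⟩
      exact orderOf_eq_prime h3 hne1
  -- the "P-value" of a norm
  have hPval : ∀ t : F, t ^ Q = t → ∀ x : F, x ^ (Q + 1) = t →
      (x * (t + α)) ^ (Q + 1) = t * (t + β) * (t + α) := by
    intro t htQ x hxt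
    rw [mul_pow, hxt, pow_succ (t + α) Q, frob, htQ, ← hβ]
    ring
  constructor
  · -- Bijective → order 3
    intro hbij
    by_contra hne3
    have hD0 : α ^ 2 + α * β + β ^ 2 ≠ 0 := fun h => hne3 (hbridge.mpr h)
    have noninj : ∀ a b : F, a ≠ b → a ^ (Q + 2) + α * a = b ^ (Q + 2) + α * b → False := by
      intro a b hne heq
      exact hne (hbij.injective heq)
    have hf0 : (0 : F) ^ (Q + 2) + α * 0 = 0 := by
      rw [zero_pow (show Q + 2 ≠ 0 by omega)]; ring
    -- a fixed point with zero P-value yields a nonzero root of f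
    have hnz : ∀ s : F, s ^ Q = s → s ≠ 0 → s * (s + β) * (s + α) = 0 → False := by
      intro s hsQ hs0 hP0
      have h1 : (s + β) * (s + α) = 0 := by
        have h2' : s * ((s + β) * (s + α)) = 0 := by linear_combination hP0
        rcases mul_eq_zero.mp h2' with h | h
        · exact absurd h hs0
        · exact h
      have hsα : s + α = 0 := by
        rcases mul_eq_zero.mp h1 with h | h
        · have hβs : β = s := by linear_combination h - s * h2
          have hαs : α = s := by rw [← hβQ, hβs, hsQ]
          rw [hαs]; linear_combination s * h2
        · exact h
      obtain ⟨y, hy0, hys⟩ := hns s hs0 hsQ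
      apply noninj y 0 hy0
      rw [hf0]
      calc y ^ (Q + 2) + α * y = y * (y ^ (Q + 1) + α) := by ring
        _ = y * (s + α) := by rw [hys]
        _ = 0 := by rw [hsα, mul_zero]
    -- main: two distinct fixed points with equal P-values contradict injectivity
    have hmain : ∀ t s : F, t ^ Q = t → s ^ Q = s → t ≠ s →
        t * (t + β) * (t + α) = s * (s + β) * (s + α) → False := by
      intro t s htQ hsQ htsne hP
      by_cases ht0 : t = 0
      · apply hnz s hsQ (fun h => htsne (by rw [ht0, h]))
        rw [← hP, ht0]; ring
      by_cases hs0 : s = 0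
      · apply hnz t htQ ht0
        rw [hP, hs0]; ring
      by_cases htα : t + α = 0
      · obtain ⟨x, hx0, hxt⟩ := hns t ht0 htQ
        apply noninj x 0 hx0
        rw [hf0]
        calc x ^ (Q + 2) + α * x = x * (x ^ (Q + 1) + α) := by ring
          _ = x * (t + α) := by rw [hxt]
          _ = 0 := by rw [htα, mul_zero]
      by_cases hsα : s + α = 0
      · obtain ⟨y, hy0, hys⟩ := hns s hs0 hsQ
        apply noninj y 0 hy0
        rw [hf0]
        calc y ^ (Q + 2) + α * y = y * (y ^ (Q + 1) + α) := by ring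
          _ = y * (s + α) := by rw [hys]
          _ = 0 := by rw [hsα, mul_zero]
      obtain ⟨x, hx0, hxt⟩ := hns t ht0 htQ
      obtain ⟨y, hy0, hys⟩ := hns s hs0 hsQ
      have hA0 : x * (t + α) ≠ 0 := mul_ne_zero hx0 htα
      have hB0 : y * (s + α) ≠ 0 := mul_ne_zero hy0 hsα
      have hAP := hPval t htQ x hxt
      have hBP := hPval s hsQ y hys
      have hPne : t * (t + β) * (t + α) ≠ 0 := by
        rw [← hAP]; exact pow_ne_zero _ hA0
      have hlam : ((y * (s + α)) * (x * (t + α))⁻¹) ^ (Q + 1) = 1 := by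
        rw [mul_pow, inv_pow, hAP, hBP, ← hP]
        exact mul_inv_cancel₀ hPne
      set lam := (y * (s + α)) * (x * (t + α))⁻¹ with hlamdef
      clear_value lam
      apply noninj (lam * x) y
      · intro hxy
        apply htsne
        calc t = (lam * x) ^ (Q + 1) := by
              rw [mul_pow, hlam, one_mul, hxt]
          _ = y ^ (Q + 1) := by rw [hxy]
          _ = s := hys
      · calc (lam * x) ^ (Q + 2) + α * (lam * x)
            = lam ^ (Q + 1) * lam * x ^ (Q + 2) + α * lam * x := by ring
          _ = lam * (x ^ (Q + 2) + α * x) := by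
              rw [hlam]; ring
          _ = lam * (x * (t + α)) := by
              rw [show x ^ (Q + 2) + α * x = x * (x ^ (Q + 1) + α) from by ring, hxt]
          _ = y * (s + α) := by
              rw [hlamdef, mul_assoc, inv_mul_cancel₀ (mul_ne_zero hx0 htα), mul_one]
          _ = y ^ (Q + 2) + α * y := by
              rw [show y ^ (Q + 2) + α * y = y * (y ^ (Q + 1) + α) from by ring, hys]
    -- construct the witness pair
    obtain ⟨w₀, hw₀0, hw₀⟩ := hns _ hD0 hDQ
    have hw1 : (w₀ * ω) ^ (Q + 1) = α ^ 2 + α * β + β ^ 2 := by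
      rw [mul_pow, hw₀, hωQ1, mul_one]
    have hw10 : w₀ * ω ≠ 0 := mul_ne_zero hw₀0 hω0
    have hgood : ∃ w : F, w ≠ 0 ∧ w ^ (Q + 1) = α ^ 2 + α * β + β ^ 2 ∧
        w + (w + w ^ Q) * ω ≠ w + w ^ Q := by
      by_cases hbad : w₀ + (w₀ + w₀ ^ Q) * ω = w₀ + w₀ ^ Q
      · refine ⟨w₀ * ω, hw10, hw1, ?_⟩
        intro hbad2
        have hv₁Q : (w₀ + w₀ ^ Q) ^ Q = w₀ + w₀ ^ Q := by
          rw [frob, hpow]; ring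
        have hv₂Q : (w₀ * ω + (w₀ * ω) ^ Q) ^ Q = w₀ * ω + (w₀ * ω) ^ Q := by
          rw [frob, hpow]; ring
        have hωm1 : ω - 1 ≠ 0 := sub_ne_zero.mpr hωn1
        have hv2v1 : w₀ * ω + (w₀ * ω) ^ Q = (w₀ + w₀ ^ Q) * ω := by
          have h1 : (ω - 1) * ((w₀ * ω + (w₀ * ω) ^ Q) - (w₀ + w₀ ^ Q) * ω) = 0 := by
            linear_combination hbad2 - ω * hbad
          rcases mul_eq_zero.mp h1 with h' | h'
          · exact absurd h' hωm1
          · exact sub_eq_zero.mp h'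
        have hv₁0 : w₀ + w₀ ^ Q ≠ 0 := by
          intro h0
          apply hw₀0
          have hw0eq : w₀ = (w₀ + w₀ ^ Q) - (w₀ + w₀ ^ Q) * ω := by
            linear_combination hbad
          rw [hw0eq, h0]; ring
        have h5 : (w₀ + w₀ ^ Q) * ω = (w₀ + w₀ ^ Q) * ω ^ 2 := by
          calc (w₀ + w₀ ^ Q) * ω = w₀ * ω + (w₀ * ω) ^ Q := hv2v1.symm
            _ = (w₀ * ω + (w₀ * ω) ^ Q) ^ Q := hv₂Q.symm
            _ = ((w₀ + w₀ ^ Q) * ω) ^ Q := by rw [hv2v1]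
            _ = (w₀ + w₀ ^ Q) * ω ^ 2 := by rw [mul_pow, hv₁Q, hωQ]
        have h6 : ω = ω ^ 2 := mul_left_cancel₀ hv₁0 h5
        exact one_ne_zero (show (1 : F) = 0 by linear_combination hωq + h6 - ω * h2)
      · exact ⟨w₀, hw₀0, hw₀, hbad⟩
    obtain ⟨w, hw0, hwnorm, hwne⟩ := hgood
    have hvQ : (w + w ^ Q) ^ Q = w + w ^ Q := by rw [frob, hpow]; ring
    have huQ : (w + (w + w ^ Q) * ω) ^ Q = w + (w + w ^ Q) * ω := by
      rw [frob, mul_pow, hvQ, hωQ]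
      linear_combination (w + w ^ Q) * hωq - ((w + w ^ Q) * ω + w) * h2
    have hunorm : (w + (w + w ^ Q) * ω) ^ 2 + (w + (w + w ^ Q) * ω) * (w + w ^ Q)
        + (w + w ^ Q) ^ 2 = α ^ 2 + α * β + β ^ 2 := by
      have h1 : (w + (w + w ^ Q) * ω) ^ 2 + (w + (w + w ^ Q) * ω) * (w + w ^ Q)
          + (w + w ^ Q) ^ 2 = w * w ^ Q := by
        linear_combination (w + w ^ Q) ^ 2 * hωq + (w * (w + w ^ Q) * ω + w ^ 2) * h2
      rw [h1, ← pow_succ']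
      exact hwnorm
    have htQ' : (w + (w + w ^ Q) * ω + (α + β)) ^ Q = w + (w + w ^ Q) * ω + (α + β) := by
      rw [frob, huQ, hcQ]
    have hsQ' : (w + w ^ Q + (α + β)) ^ Q = w + w ^ Q + (α + β) := by
      rw [frob, hvQ, hcQ]
    have htsne : w + (w + w ^ Q) * ω + (α + β) ≠ w + w ^ Q + (α + β) := by
      intro h
      exact hwne (add_right_cancel h)
    have hP : (w + (w + w ^ Q) * ω + (α + β)) * ((w + (w + w ^ Q) * ω + (α + β)) + β)
          * ((w + (w + w ^ Q) * ω + (α + β)) + α)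
        = (w + w ^ Q + (α + β)) * ((w + w ^ Q + (α + β)) + β)
          * ((w + w ^ Q + (α + β)) + α) := by
      linear_combination ((w + (w + w ^ Q) * ω) - (w + w ^ Q)) * hunorm
        + ((w + (w + w ^ Q) * ω) - (w + w ^ Q)) *
            (2 * (α + β) * ((w + (w + w ^ Q) * ω) + (w + w ^ Q)) + 3 * (α + β) ^ 2) * h2
    exact hmain _ _ htQ' hsQ' htsne hP
  · -- order 3 → Bijective
    intro hord
    have hD0 : α ^ 2 + α * β + β ^ 2 = 0 := hbridge.mp hord
    rw [← Finite.injective_iff_bijective]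
    intro x y hxy
    dsimp only at hxy
    have hroot : ∀ z : F, z ≠ 0 → z ^ (Q + 1) = α → False := by
      intro z hz hzα
      have h1 : α ^ (Q - 1) = 1 := by rw [← hzα]; exact hz1 z hz
      rw [h1, orderOf_one] at hord
      norm_num at hord
    by_cases hx0 : x = 0
    · by_cases hy0 : y = 0
      · rw [hx0, hy0]
      · exfalso
        have h0 : y ^ (Q + 2) + α * y = 0 := by
          rw [← hxy, hx0, zero_pow (show Q + 2 ≠ 0 by omega)]; ring
        have h1 : y * (y ^ (Q + 1) + α) = 0 := by linear_combination h0
        have h2' : y ^ (Q + 1) + α = 0 := by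
          rcases mul_eq_zero.mp h1 with h | h
          · exact absurd h hy0
          · exact h
        exact hroot y hy0 (by linear_combination h2' - α * h2)
    by_cases hy0 : y = 0
    · exfalso
      have h0 : x ^ (Q + 2) + α * x = 0 := by
        rw [hxy, hy0, zero_pow (show Q + 2 ≠ 0 by omega)]; ring
      have h1 : x * (x ^ (Q + 1) + α) = 0 := by linear_combination h0
      have h2' : x ^ (Q + 1) + α = 0 := by
        rcases mul_eq_zero.mp h1 with h | h
        · exact absurd h hx0
        · exact h
      exact hroot x hx0 (by linear_combination h2' - α * h2)
    have htQ : (x ^ (Q + 1)) ^ Q = x ^ (Q + 1) := hnormfix x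
    have hsQ : (y ^ (Q + 1)) ^ Q = y ^ (Q + 1) := hnormfix y
    have htα : x ^ (Q + 1) + α ≠ 0 := by
      intro h
      exact hroot x hx0 (by linear_combination h - α * h2)
    have hsα : y ^ (Q + 1) + α ≠ 0 := by
      intro h
      exact hroot y hy0 (by linear_combination h - α * h2)
    have hfxy : x * (x ^ (Q + 1) + α) = y * (y ^ (Q + 1) + α) := by
      calc x * (x ^ (Q + 1) + α) = x ^ (Q + 2) + α * x := by ring
        _ = y ^ (Q + 2) + α * y := hxy
        _ = y * (y ^ (Q + 1) + α) := by ring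
    have hP : x ^ (Q + 1) * (x ^ (Q + 1) + β) * (x ^ (Q + 1) + α)
        = y ^ (Q + 1) * (y ^ (Q + 1) + β) * (y ^ (Q + 1) + α) := by
      have hA := hPval (x ^ (Q + 1)) htQ x rfl
      have hB := hPval (y ^ (Q + 1)) hsQ y rfl
      rw [← hA, ← hB, hfxy]
    have hfac : (x ^ (Q + 1) - y ^ (Q + 1)) *
        ((x ^ (Q + 1) + (α + β)) ^ 2 + (x ^ (Q + 1) + (α + β)) * (y ^ (Q + 1) + (α + β))
          + (y ^ (Q + 1) + (α + β)) ^ 2) = 0 := by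
      linear_combination hP + (x ^ (Q + 1) - y ^ (Q + 1)) * hD0
        + (x ^ (Q + 1) - y ^ (Q + 1)) *
            ((α + β) ^ 2 + (α + β) * (x ^ (Q + 1) + y ^ (Q + 1))) * h2
    have hts : x ^ (Q + 1) = y ^ (Q + 1) := by
      rcases mul_eq_zero.mp hfac with h | h
      · exact sub_eq_zero.mp h
      · have hu'Q : (x ^ (Q + 1) + (α + β)) ^ Q = x ^ (Q + 1) + (α + β) := by
          rw [frob, htQ, hcQ]
        have hv'Q : (y ^ (Q + 1) + (α + β)) ^ Q = y ^ (Q + 1) + (α + β) := by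
          rw [frob, hsQ, hcQ]
        have huv : x ^ (Q + 1) + (α + β) = y ^ (Q + 1) + (α + β) := by
          by_cases hv'0 : y ^ (Q + 1) + (α + β) = 0
          · rw [hv'0]
            have hsq : (x ^ (Q + 1) + (α + β)) ^ 2 = 0 := by
              rw [hv'0] at h
              linear_combination h
            exact pow_eq_zero_iff (two_ne_zero) |>.mp hsq
          · have hρq : ((x ^ (Q + 1) + (α + β)) * (y ^ (Q + 1) + (α + β))⁻¹) ^ 2
                + (x ^ (Q + 1) + (α + β)) * (y ^ (Q + 1) + (α + β))⁻¹ + 1 = 0 := by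
              have h' : ((x ^ (Q + 1) + (α + β)) * (y ^ (Q + 1) + (α + β))⁻¹) ^ 2
                  + (x ^ (Q + 1) + (α + β)) * (y ^ (Q + 1) + (α + β))⁻¹ + 1
                  = ((x ^ (Q + 1) + (α + β)) ^ 2
                    + (x ^ (Q + 1) + (α + β)) * (y ^ (Q + 1) + (α + β))
                    + (y ^ (Q + 1) + (α + β)) ^ 2) * ((y ^ (Q + 1) + (α + β))⁻¹) ^ 2 := by
                field_simp
              rw [h', h, zero_mul]
            have hρQ : ((x ^ (Q + 1) + (α + β)) * (y ^ (Q + 1) + (α + β))⁻¹) ^ Q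
                = (x ^ (Q + 1) + (α + β)) * (y ^ (Q + 1) + (α + β))⁻¹ := by
              rw [mul_pow, inv_pow, hu'Q, hv'Q]
            set ρ := (x ^ (Q + 1) + (α + β)) * (y ^ (Q + 1) + (α + β))⁻¹ with hρdef
            have hρ0 : ρ ≠ 0 := by
              intro h0
              rw [h0] at hρq
              simpa using hρq
            have hρ3 : ρ ^ 3 = 1 := by linear_combination (ρ - 1) * hρq
            have hρQ1 : ρ ^ (Q - 1) = 1 := by
              have h1 : ρ ^ (Q - 1) * ρ = 1 * ρ := by
                rw [one_mul, ← pow_succ, hQ1, hρQ]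
              exact mul_right_cancel₀ hρ0 h1
            have hd1 : orderOf ρ ∣ 3 := orderOf_dvd_of_pow_eq_one hρ3
            have hd2 : orderOf ρ ∣ Q - 1 := orderOf_dvd_of_pow_eq_one hρQ1
            have hρ1 : ρ = 1 := by
              rcases (Nat.Prime.eq_one_or_self_of_dvd (by norm_num) _ hd1) with h3 | h3
              · exact orderOf_eq_one_iff.mp h3
              · exfalso
                rw [h3] at hd2
                omega
            rw [hρ1] at hρq
            exact absurd (show (1 : F) = 0 by linear_combination hρq - h2) one_ne_zero
        exact add_right_cancel huv
    have hfin : x * (y ^ (Q + 1) + α) = y * (y ^ (Q + 1) + α) := by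
      rw [← hts] at hsα ⊢
      · rw [hts] at hfxy ⊢
        exact hfxy
    rw [hts] at hfxy
    exact mul_right_cancel₀ hsα hfxy
end

section
/- Let Q be a prime power with Q ≡ 5 (mod 6), and α ∈ F_{Q^2}^*. Then x^(Q+2) + α·x permutes F_{Q^2} if and only if α^(Q−1) has multiplicative order 6. -/
/-!
Let `σ x = x ^ Q` be the Frobenius of `F` over its fixed field `K` (of order `Q`) and
`N x = x σ x` the norm onto `K`. The map is `f x = (N x + α) x`, and `N (f x) = G (N x)` for the
cubic `G y = y³ + a y² + b y` with `a = α + σ α`, `b = α σ α` in `K`. As `N` maps onto `K`, `f` is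
bijective exactly when `G` is injective on `K`. Such a cubic is injective on `K` iff `a² = 3 b`:
then it is a translate of `y ↦ y³`, which is injective on `K` since `3 ∤ Q - 1`; otherwise a shift
reduces `G s = G t` to representing `3 e² - b` by the norm form `u² + u v + v²` of `F = K(ω)`
with `u ≠ v`, which is possible because `N` is onto. Finally `a² - 3 b = α² (β² - β + 1)` for
`β = α ^ (Q - 1)`, and `β² - β + 1 = 0` says that `β` is a primitive sixth root of unity.
-/

open Polynomial

theorem IsCyclic.range_powMonoidHom_eq_ker {G : Type*} [CommGroup G] [IsCyclic G] [Finite G]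
    {m n : ℕ} (hG : Nat.card G = m * n) :
    (powMonoidHom n : G →* G).range = (powMonoidHom m).ker := by
  have hn : n ≠ 0 := by rintro rfl; exact Nat.card_pos.ne' (by simpa using hG)
  refine Subgroup.eq_of_le_of_card_ge ?_ ?_
  · rintro _ ⟨y, rfl⟩
    rw [MonoidHom.mem_ker, powMonoidHom_apply, powMonoidHom_apply, ← pow_mul, mul_comm, ← hG,
      pow_card_eq_one']
  · rw [IsCyclic.card_powMonoidHom_ker, IsCyclic.card_powMonoidHom_range, hG,
      Nat.gcd_mul_right_left, Nat.gcd_mul_left_left, Nat.mul_div_cancel _ (Nat.pos_of_ne_zero hn)]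

theorem eq_of_pow_three_eq {M : Type*} [Monoid M] {Q : ℕ} (hQ : Q % 3 = 2) {u v : M}
    (hu : u ^ Q = u) (hv : v ^ Q = v) (h : u ^ 3 = v ^ 3) : u = v := by
  have hinv : ∀ w : M, w ^ Q = w → (w ^ 3) ^ ((2 * Q - 1) / 3) = w := fun w hw => by
    rw [← pow_mul, show 3 * ((2 * Q - 1) / 3) = (Q - 1) + Q by omega, pow_add, hw,
      pow_sub_one_mul (by omega), hw]
  rw [← hinv u hu, h, hinv v hv]

theorem pow_eq_sq_of_pow_three_eq_one {M : Type*} [Monoid M] {Q : ℕ} (hQ : Q % 3 = 2) {ω : M}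
    (hω : ω ^ 3 = 1) : ω ^ Q = ω ^ 2 := by
  rw [← Nat.div_add_mod Q 3, hQ, pow_add, pow_mul, hω, one_pow, one_mul]

theorem orderOf_eq_six_iff {F : Type*} [Field F] [NeZero (6 : F)] {β : F} :
    orderOf β = 6 ↔ β ^ 2 - β + 1 = 0 := by
  rw [← IsPrimitiveRoot.iff_orderOf, ← isRoot_cyclotomic_iff (n := 6), cyclotomic_six]
  simp

section
variable {F : Type*} [Field F] [Fintype F] {Q : ℕ}

theorem ne_zero_of_card_eq_sq (hF : Fintype.card F = Q ^ 2) : Q ≠ 0 := by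
  rintro rfl
  simpa [hF] using Fintype.one_lt_card (α := F)

theorem natCast_eq_zero_of_card_eq_sq (hF : Fintype.card F = Q ^ 2) : (Q : F) = 0 := by
  have := FiniteField.cast_card_eq_zero F
  rw [hF, Nat.cast_pow] at this
  exact pow_eq_zero_iff (by norm_num) |>.mp this

theorem natCast_ne_zero_of_coprime (hF : Fintype.card F = Q ^ 2) {n : ℕ} (hn : n.Coprime Q) :
    (n : F) ≠ 0 := fun h => CharP.ringChar_ne_one <| Nat.eq_one_of_dvd_one <|
  hn ▸ Nat.dvd_gcd (ringChar.dvd h) (ringChar.dvd (natCast_eq_zero_of_card_eq_sq hF))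

theorem add_pow_of_card_eq_sq (hF : Fintype.card F = Q ^ 2) (x y : F) :
    (x + y) ^ Q = x ^ Q + y ^ Q := by
  obtain ⟨p, _, n, hp, hcard⟩ := FiniteField.card' F
  have : Fact p.Prime := ⟨hp⟩
  obtain ⟨m, -, rfl⟩ := (Nat.dvd_prime_pow hp).mp (hcard ▸ hF ▸ dvd_pow_self Q two_ne_zero)
  exact add_pow_char_pow x y p m

theorem three_ne_zero_of_card_eq_sq (hF : Fintype.card F = Q ^ 2) (hQ : Q % 3 = 2) :
    (3 : F) ≠ 0 := by
  exact_mod_cast natCast_ne_zero_of_coprime hF (n := 3) <| by rw [Nat.Coprime, Nat.gcd_rec, hQ]; rfl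

def frobeniusOfCardEqSq (hF : Fintype.card F = Q ^ 2) : F →+* F where
  toFun x := x ^ Q
  map_one' := one_pow Q
  map_mul' x y := mul_pow x y Q
  map_zero' := zero_pow (ne_zero_of_card_eq_sq hF)
  map_add' := add_pow_of_card_eq_sq hF

theorem exists_cube_root_of_unity (hF : Fintype.card F = Q ^ 2) (hQ : Q % 3 = 2) :
    ∃ ω : F, ω ^ 2 + ω + 1 = 0 := by
  classical
  have h3 : 3 ∣ Fintype.card Fˣ := by
    rw [Fintype.card_units, hF]
    have : Q ^ 2 % 3 = 1 := by rw [Nat.pow_mod, hQ]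
    omega
  have : Fact (Nat.Prime 3) := ⟨Nat.prime_three⟩
  obtain ⟨ω, hω⟩ := exists_prime_orderOf_dvd_card 3 h3
  have hprim : IsPrimitiveRoot (ω : F) 3 :=
    IsPrimitiveRoot.iff_orderOf.mpr (orderOf_units.trans hω)
  refine ⟨ω, ?_⟩
  simpa [cyclotomic_three] using hprim.isRoot_cyclotomic (by norm_num)

variable (hF : Fintype.card F = Q ^ 2)
local notation "σ" => frobeniusOfCardEqSq hF

theorem frobeniusOfCardEqSq_apply (x : F) : σ x = x ^ Q := rfl

theorem frobeniusOfCardEqSq_apply_apply (x : F) : σ (σ x) = x := by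
  rw [frobeniusOfCardEqSq_apply, frobeniusOfCardEqSq_apply, ← pow_mul, ← sq, ← hF,
    FiniteField.pow_card]

theorem frobeniusOfCardEqSq_mul_self (x : F) : σ (x * σ x) = x * σ x := by
  rw [map_mul, frobeniusOfCardEqSq_apply_apply, mul_comm]

theorem exists_mul_frobeniusOfCardEqSq_eq {c : F} (hc : σ c = c) : ∃ z, z * σ z = c := by
  obtain rfl | hc0 := eq_or_ne c 0
  · exact ⟨0, zero_mul _⟩
  have hQ0 := ne_zero_of_card_eq_sq hF
  have hcard : Nat.card Fˣ = (Q - 1) * (Q + 1) := by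
    rw [Nat.card_units, Nat.card_eq_fintype_card, hF, mul_comm, ← Nat.sq_sub_sq, one_pow]
  have hker : Units.mk0 c hc0 ∈ (powMonoidHom (Q - 1) : Fˣ →* Fˣ).ker := by
    rw [MonoidHom.mem_ker, powMonoidHom_apply, Units.ext_iff, Units.val_pow_eq_pow_val,
      Units.val_mk0, Units.val_one, ← mul_left_inj' hc0, pow_sub_one_mul hQ0, one_mul]
    exact hc
  rw [← IsCyclic.range_powMonoidHom_eq_ker hcard] at hker
  obtain ⟨y, hy⟩ := hker
  refine ⟨y, ?_⟩
  rw [frobeniusOfCardEqSq_apply, ← pow_succ', ← Units.val_pow_eq_pow_val]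
  exact congrArg Units.val hy

theorem frobeniusOfCardEqSq_cube_root_of_unity {ω : F} (hω : ω ^ 2 + ω + 1 = 0) (hQ : Q % 3 = 2) :
    σ ω = ω ^ 2 :=
  pow_eq_sq_of_pow_three_eq_one hQ (by linear_combination (ω - 1) * hω)

theorem mul_frobeniusOfCardEqSq_sub_mul {ω : F} (hω : ω ^ 2 + ω + 1 = 0) (hQ : Q % 3 = 2) {u v : F}
    (hu : σ u = u) (hv : σ v = v) :
    (u - ω * v) * σ (u - ω * v) = u ^ 2 + u * v + v ^ 2 := by
  rw [map_sub, map_mul, hu, hv, frobeniusOfCardEqSq_cube_root_of_unity hF hω hQ]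
  linear_combination (-(u * v) + (ω - 1) * v ^ 2) * hω

theorem exists_fixed_sub_mul_eq {ω : F} (hω : ω ^ 2 + ω + 1 = 0) (hQ : Q % 3 = 2) (z : F) :
    ∃ u v, σ u = u ∧ σ v = v ∧ u - ω * v = z := by
  have hσω := frobeniusOfCardEqSq_cube_root_of_unity hF hω hQ
  have h3 := three_ne_zero_of_card_eq_sq hF hQ
  refine ⟨((1 - ω) * z + (1 - ω ^ 2) * σ z) / 3, (ω - ω ^ 2) * (z - σ z) / 3, ?_, ?_, ?_⟩
  · simp only [map_div₀, map_add, map_mul, map_sub, map_one, map_pow, map_ofNat, hσω,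
      frobeniusOfCardEqSq_apply_apply hF]
    congr 1
    linear_combination (ω - ω ^ 2) * z * hω
  · simp only [map_div₀, map_mul, map_sub, map_pow, map_ofNat, hσω,
      frobeniusOfCardEqSq_apply_apply hF]
    congr 1
    linear_combination (ω - ω ^ 2) * (σ z - z) * hω
  · field_simp
    linear_combination ((ω - 2) * z - (ω - 1) * σ z) * hω

theorem exists_ne_fixed_sq_add_mul_add_sq_eq (hQ : Q % 3 = 2) {c : F} (hc : σ c = c)
    (hc0 : c ≠ 0) : ∃ u v, σ u = u ∧ σ v = v ∧ u ≠ v ∧ u ^ 2 + u * v + v ^ 2 = c := by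
  obtain ⟨ω, hω⟩ := exists_cube_root_of_unity hF hQ
  have hσω := frobeniusOfCardEqSq_cube_root_of_unity hF hω hQ
  have hω1 : ω - 1 ≠ 0 := fun h => three_ne_zero_of_card_eq_sq hF hQ <| by
    linear_combination hω - (ω + 2) * h
  obtain ⟨z, hz⟩ := exists_mul_frobeniusOfCardEqSq_eq hF hc
  have hωz : ω * z * σ (ω * z) = c := by
    rw [map_mul, hσω, ← hz]; linear_combination z * σ z * (ω - 1) * hω
  obtain ⟨u, v, hu, hv, huv_z⟩ := exists_fixed_sub_mul_eq hF hω hQ z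
  obtain ⟨u', v', hu', hv', hu'v'_z⟩ := exists_fixed_sub_mul_eq hF hω hQ (ω * z)
  by_cases huv : u ≠ v
  · refine ⟨u, v, hu, hv, huv, ?_⟩
    rw [← mul_frobeniusOfCardEqSq_sub_mul hF hω hQ hu hv, huv_z, hz]
  -- `z` is a fixed multiple of `1 - ω`; then `ω * z` is not, since `ω` is not fixed.
  refine ⟨u', v', hu', hv', ?_, ?_⟩
  swap
  · rw [← mul_frobeniusOfCardEqSq_sub_mul hF hω hQ hu' hv', hu'v'_z, hωz]
  rintro rfl
  rw [not_ne_iff] at huv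
  subst huv
  have hω0 : ω ≠ 0 := by rintro rfl; simp at hω
  have hu'u : u' = ω * u := mul_left_cancel₀ hω1 (by linear_combination ω * huv_z - hu'v'_z)
  have hσu'u : u' = ω ^ 2 * u := by rw [← hu', hu'u, map_mul, hσω, hu]
  have hu0 : u = 0 :=
    mul_left_cancel₀ (mul_ne_zero hω0 hω1) (by linear_combination hu'u - hσu'u)
  apply hc0
  rw [← hz, ← huv_z, hu0]
  simp

theorem injOn_cubic_iff (hQ : Q % 3 = 2) {a b : F} (ha : σ a = a) (hb : σ b = b) :
    Set.InjOn (fun y => y ^ 3 + a * y ^ 2 + b * y) {y | σ y = y} ↔ a ^ 2 = 3 * b := by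
  have h3 := three_ne_zero_of_card_eq_sq hF hQ
  have hσ3 : σ 3 = 3 := map_ofNat _ 3
  constructor
  · intro hinj
    by_contra hab
    obtain ⟨e, rfl⟩ : ∃ e, a = 3 * e := ⟨a / 3, by field_simp⟩
    have he : σ e = e := mul_left_cancel₀ h3 (by rw [← hσ3, ← map_mul, ha, hσ3])
    have hc : σ (3 * e ^ 2 - b) = 3 * e ^ 2 - b := by
      rw [map_sub, map_mul, map_pow, hσ3, he, hb]
    have hc0 : 3 * e ^ 2 - b ≠ 0 := fun h => hab (by linear_combination 3 * h)
    obtain ⟨u, v, hu, hv, huv, hquad⟩ := exists_ne_fixed_sq_add_mul_add_sq_eq hF hQ hc hc0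
    -- at `s = u - e`, `t = v - e` the cubic differs by `(s - t) (u² + uv + v² - 3e² + b)`
    have hG := hinj (x₁ := u - e) (x₂ := v - e)
      (show σ (u - e) = u - e by rw [map_sub, hu, he])
      (show σ (v - e) = v - e by rw [map_sub, hv, he]) (by linear_combination (u - v) * hquad)
    exact huv (by linear_combination hG)
  · intro hab s hs t ht hst
    have hst : s ^ 3 + a * s ^ 2 + b * s = t ^ 3 + a * t ^ 2 + b * t := hst
    have hfix : ∀ y, σ y = y → (3 * y + a) ^ Q = 3 * y + a := fun y hy => by
      rw [← frobeniusOfCardEqSq_apply hF, map_add, map_mul, hσ3, hy, ha]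
    -- completing the cube: `27 G(y) = (3 y + a)³ - a³` when `a² = 3 b`
    have hcube : (3 * s + a) ^ 3 = (3 * t + a) ^ 3 := by
      linear_combination 27 * hst + 9 * (s - t) * hab
    have hcube_root := eq_of_pow_three_eq hQ (hfix s hs) (hfix t ht) hcube
    exact mul_left_cancel₀ h3 (by linear_combination hcube_root)

theorem bijective_iff_injOn_cubic {α : F} (hα : α ≠ 0) :
    Function.Bijective (fun x => (x * σ x + α) * x) ↔
      Set.InjOn (fun y => y ^ 3 + (α + σ α) * y ^ 2 + α * σ α * y) {y | σ y = y} := by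
  set f := fun x : F => (x * σ x + α) * x
  set G := fun y : F => y ^ 3 + (α + σ α) * y ^ 2 + α * σ α * y
  have hnorm : ∀ x, f x * σ (f x) = G (x * σ x) := fun x => by
    simp only [f, G, map_mul, map_add, frobeniusOfCardEqSq_apply_apply hF]
    ring
  have hmaps : Set.MapsTo G {y | σ y = y} {y | σ y = y} := fun y hy => by
    simp only [Set.mem_ofPred_eq] at hy ⊢
    simp only [G, map_add, map_mul, map_pow, hy, frobeniusOfCardEqSq_apply_apply hF]
    ring
  constructor
  · intro hf
    refine (((Set.toFinite _).surjOn_iff_bijOn_of_mapsTo hmaps).mp ?_).injOn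
    intro w hw
    obtain ⟨z, rfl⟩ := exists_mul_frobeniusOfCardEqSq_eq hF hw
    obtain ⟨x, rfl⟩ := hf.surjective z
    exact ⟨x * σ x, frobeniusOfCardEqSq_mul_self hF x, (hnorm x).symm⟩
  · intro hG
    refine Finite.injective_iff_bijective.mp fun x y hxy => ?_
    have hN : x * σ x = y * σ y := hG (frobeniusOfCardEqSq_mul_self hF x)
      (frobeniusOfCardEqSq_mul_self hF y) (by rw [← hnorm, ← hnorm, hxy])
    have hNα : x * σ x + α ≠ 0 := by
      intro h
      have hσα : σ α = α := by
        rw [eq_neg_of_add_eq_zero_right h, map_neg, frobeniusOfCardEqSq_mul_self]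
      -- a fixed `α` makes `G = y (y + α)²` vanish at both `0` and `-α`
      have h0 := hG (map_zero σ) (show σ (-α) = -α by rw [map_neg, hσα])
        (by simp only [G, hσα]; ring)
      exact hα (neg_eq_zero.mp h0.symm)
    have hxy : (x * σ x + α) * x = (y * σ y + α) * y := hxy
    exact mul_left_cancel₀ hNα (by rw [hxy, hN])

end

theorem stmt_11 (Q : ℕ) (F : Type*) [Field F] [Fintype F]
    (hF : Fintype.card F = Q ^ 2) (hQ : Q % 6 = 5) (α : F) (hα : α ≠ 0) :
    Function.Bijective (fun x : F => x ^ (Q + 2) + α * x) ↔ orderOf (α ^ (Q - 1)) = 6 := by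
  set σ := frobeniusOfCardEqSq hF
  set β := α ^ (Q - 1)
  have hσα : σ α = β * α := (pow_sub_one_mul (ne_zero_of_card_eq_sq hF) α).symm
  have hf : (fun x : F => x ^ (Q + 2) + α * x) = fun x => (x * σ x + α) * x := by
    funext x
    rw [frobeniusOfCardEqSq_apply]
    ring
  have : NeZero (6 : F) :=
    ⟨mod_cast natCast_ne_zero_of_coprime hF (n := 6) (by rw [Nat.Coprime, Nat.gcd_rec, hQ]; rfl)⟩
  have htrace : σ (α + σ α) = α + σ α := by
    rw [map_add, frobeniusOfCardEqSq_apply_apply hF, add_comm]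
  rw [hf, bijective_iff_injOn_cubic hF hα,
    injOn_cubic_iff hF (by omega) htrace (frobeniusOfCardEqSq_mul_self hF α),
    orderOf_eq_six_iff, hσα, ← sub_eq_zero,
    show (α + β * α) ^ 2 - 3 * (α * (β * α)) = α ^ 2 * (β ^ 2 - β + 1) by ring,
    mul_eq_zero, or_iff_right (pow_ne_zero 2 hα)]
end

section
/- Let Q be a prime power with Q ≡ 1 (mod 3). Then for every α ∈ F_{Q^2}^*, the polynomial x^(Q+2) + α·x does not permute F_{Q^2}. -/
open Polynomial Finset

theorem stmt_12 (Q : ℕ) (F : Type*) [Field F] [Fintype F]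
    (hF : Fintype.card F = Q ^ 2) (hQ : Q % 3 = 1) (α : F) (hα : α ≠ 0) :
    ¬ Function.Bijective (fun x : F => x ^ (Q + 2) + α * x) := by
  intro hb
  classical
  -- basic numerology
  have hcard1 : 1 < Fintype.card F := Fintype.one_lt_card
  have hQ4 : 4 ≤ Q := by
    rcases Nat.lt_or_ge Q 4 with h | h
    · interval_cases Q <;> simp_all <;> omega
    · exact h
  obtain ⟨s, hQs⟩ : ∃ s : ℕ, Q = 3 * s + 1 := ⟨Q / 3, by omega⟩
  have hs1 : 1 ≤ s := by omega
  have hq2 : Q ^ 2 = (Q + 1) * (3 * s) + 1 := by subst hQs; ring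
  -- Q is a power of the characteristic
  have hp : Fact (ringChar F).Prime := ⟨CharP.char_is_prime F _⟩
  obtain ⟨n, -, hn⟩ := FiniteField.card F (ringChar F)
  have hQdvd : Q ∣ (ringChar F) ^ (n : ℕ) := by
    rw [← hn, hF]; exact Dvd.intro Q (by ring)
  obtain ⟨k, -, hQp⟩ := (Nat.dvd_prime_pow hp.out).mp hQdvd
  have hfrob : ∀ x y : F, (x + y) ^ Q = x ^ Q + y ^ Q := by
    intro x y; rw [hQp]; exact add_pow_char_pow x y (ringChar F) k
  -- pointwise identity for the (Q+1)-th power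
  have key : ∀ x : F, (x ^ (Q + 2) + α * x) ^ (Q + 1) =
      (x ^ (Q + 1)) ^ 3 + (α + α ^ Q) * (x ^ (Q + 1)) ^ 2
        + α ^ (Q + 1) * (x ^ (Q + 1)) := by
    intro x
    have hx : x ^ (Q ^ 2) = x := by rw [← hF]; exact FiniteField.pow_card x
    have h1 : (x ^ (Q + 2) + α * x) ^ Q = x ^ (2 * Q + 1) + α ^ Q * x ^ Q := by
      rw [hfrob]
      congr 1
      · have h2 : (Q + 2) * Q = Q ^ 2 + 2 * Q := by ring
        rw [← pow_mul, h2, pow_add, hx, mul_comm, ← pow_succ]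
      · rw [mul_pow]
    have h3 : (x ^ (Q + 2) + α * x) ^ (Q + 1)
        = (x ^ (Q + 2) + α * x) ^ Q * (x ^ (Q + 2) + α * x) := by rw [pow_succ]
    rw [h3, h1]
    ring
  -- the polynomial H
  set b : F := α + α ^ Q with hb_def
  set a : F := α ^ (Q + 1) with ha_def
  set H : F[X] := (X ^ 3 + C b * X ^ 2 + C a * X) ^ s with hH_def
  have hmb : (X ^ 3 + C b * X ^ 2 + C a * X : F[X]).Monic := by
    monicity!
  have hmH : H.Monic := hmb.pow s
  have hdb : (X ^ 3 + C b * X ^ 2 + C a * X : F[X]).natDegree = 3 := by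
    compute_degree!
  have hdH : H.natDegree = 3 * s := by
    rw [hH_def, hmb.natDegree_pow, hdb, Nat.mul_comm]
  -- pointwise: f(x)^((Q+1)*s) = H.eval (x^(Q+1))
  have hpt : ∀ x : F, (x ^ (Q + 2) + α * x) ^ ((Q + 1) * s) = H.eval (x ^ (Q + 1)) := by
    intro x
    rw [pow_mul, key x, hH_def]
    simp
  -- sum of the top power
  have hsum_top : ∑ x : F, x ^ ((Q + 1) * (3 * s)) = -1 := by
    have he : (Q + 1) * (3 * s) = Fintype.card F - 1 := by
      rw [hF, hq2, Nat.add_sub_cancel]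
    rw [he]
    have hstep : ∀ x ∈ Finset.univ, x ^ (Fintype.card F - 1) = if x = (0 : F) then 0 else 1 := by
      intro x _
      split
      · subst ‹x = 0›; exact zero_pow (by omega)
      · exact FiniteField.pow_card_sub_one_eq_one x ‹x ≠ 0›
    rw [Finset.sum_congr rfl hstep, Finset.sum_ite, Finset.sum_const, Finset.sum_const,
      smul_zero, zero_add, Finset.filter_ne', Finset.card_erase_of_mem (Finset.mem_univ 0),
      Finset.card_univ, nsmul_one, Nat.cast_sub (by omega), Nat.cast_one]
    rw [show ((Fintype.card F : ℕ) : F) = 0 from FiniteField.cast_card_eq_zero F, zero_sub]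
  -- main sum computation
  have hswap : ∑ x : F, H.eval (x ^ (Q + 1))
      = ∑ i ∈ Finset.range (3 * s + 1), H.coeff i * ∑ x : F, x ^ ((Q + 1) * i) := by
    have hev : ∀ x : F, H.eval (x ^ (Q + 1))
        = ∑ i ∈ Finset.range (3 * s + 1), H.coeff i * x ^ ((Q + 1) * i) := by
      intro x
      rw [Polynomial.eval_eq_sum_range' (n := 3 * s + 1) (by omega)]
      exact Finset.sum_congr rfl fun i _ => by rw [← pow_mul]
    rw [Finset.sum_congr rfl fun x _ => hev x, Finset.sum_comm]
    exact Finset.sum_congr rfl fun i _ => by rw [← Finset.mul_sum]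
  have hmain : ∑ x : F, H.eval (x ^ (Q + 1)) = -1 := by
    rw [hswap, Finset.sum_range_succ]
    have hz : ∀ i ∈ Finset.range (3 * s), H.coeff i * ∑ x : F, x ^ ((Q + 1) * i) = 0 := by
      intro i hi
      have hi' : i < 3 * s := Finset.mem_range.mp hi
      have hlt : (Q + 1) * i < Fintype.card F - 1 := by
        rw [hF]
        calc (Q + 1) * i < (Q + 1) * (3 * s) := by nlinarith
          _ = Q ^ 2 - 1 := by rw [hq2, Nat.add_sub_cancel]
      rw [FiniteField.sum_pow_lt_card_sub_one F _ hlt, mul_zero]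
    rw [Finset.sum_eq_zero hz, zero_add]
    have hc : H.coeff (3 * s) = 1 := by rw [← hdH]; exact hmH.coeff_natDegree
    rw [hc, one_mul, hsum_top]
  -- the sum is zero by bijectivity
  have h0 : ∑ x : F, (x ^ (Q + 2) + α * x) ^ ((Q + 1) * s) = 0 := by
    have := hb.sum_comp (fun y : F => y ^ ((Q + 1) * s))
    rw [this]
    apply FiniteField.sum_pow_lt_card_sub_one
    rw [hF]
    calc (Q + 1) * s < (Q + 1) * (3 * s) := by nlinarith
      _ = Q ^ 2 - 1 := by rw [hq2, Nat.add_sub_cancel]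
  rw [Finset.sum_congr rfl fun x _ => hpt x, hmain] at h0
  exact one_ne_zero (neg_eq_zero.mp h0)
end

section
/- Let Q be an even prime power with Q > 2, and α ∈ F_{Q^3}^*. Then x^(Q^2+Q+2) + α·x permutes F_{Q^3} if and only if α^(Q^2) + α^Q + α = 0, i.e., the trace of α from F_{Q^3} to F_Q is zero. -/
/-!
Let `N x = x ^ (Q² + Q + 1)` be the norm of `𝔽_{Q³}/𝔽_Q`, so that the map is
`f x = x * (N x + α)`. For `a ∈ 𝔽_Q`, `a * N (a + α) = a⁴ + T a³ + S a² + n a =: g a`, where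
`T, S, n` are the elementary symmetric functions of the conjugates of `α`;
hence `N (f x) = g (N x)`.

If `T = 0`, then `α ∉ 𝔽_Q`, so `0` is the only root of `g` in `𝔽_Q`, and `g` is additive in
characteristic 2: `f x = f y` forces `N x = N y`, and then `x = y`.

If `T ≠ 0` and `α ∈ 𝔽_Q`, then `f` sends an element of norm `α` to `0 = f 0`. If `T ≠ 0` and
`α ∉ 𝔽_Q`, then `g` is not injective on `𝔽_Q`: `g (z + w) = g z` becomes an Artin–Schreier
equation `v² + v = w / T + 1 + c / w`, which is solvable for some `w ≠ 0` because the absolute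
trace of the right-hand side cannot be `1` at all `Q - 1` points of `𝔽_Qˣ`, by a degree count.
Given `g z = g z'` with `z ≠ z'`, take `x, y` of norms `z, z'`; rescaling `x` by the norm-one
element `f y / f x` gives two distinct points with the same image under `f`.
-/

open Finset Polynomial

def absTrace {K : Type*} [Semiring K] (m : ℕ) (x : K) : K := ∑ i ∈ range m, x ^ 2 ^ i

def quartic {K : Type*} [Field K] (T S n z : K) : K := z ^ 4 + T * z ^ 3 + S * z ^ 2 + n * z

-- The exponents `2 ^ m - 1 - 2 ^ i` stand for `w⁻¹ ^ 2 ^ i` on `Kˣ` when `#K = 2 ^ m`.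
noncomputable def kloostermanPoly {K : Type*} [Field K] (m : ℕ) (a c : K) : K[X] :=
  ∑ i ∈ range m, (C (a ^ 2 ^ i) * X ^ 2 ^ i + C (c ^ 2 ^ i) * X ^ (2 ^ m - 1 - 2 ^ i)) +
    C (absTrace m 1 + 1)

section CharTwo

variable {K : Type*} [Field K] {m : ℕ}

theorem absTrace_add [CharP K 2] (x y : K) :
    absTrace m (x + y) = absTrace m x + absTrace m y := by
  simp only [absTrace, add_pow_char_pow, sum_add_distrib]

theorem sq_absTrace [CharP K 2] (x : K) : absTrace m x ^ 2 = absTrace m (x ^ 2) := by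
  simp only [absTrace, sum_pow_char, ← pow_mul, mul_comm]

theorem quartic_add [CharP K 2] (T S n z w : K) :
    quartic T S n (z + w) =
      quartic T S n z + w * (T * (z ^ 2 + z * w) + w ^ 3 + T * w ^ 2 + S * w + n) := by
  unfold quartic
  linear_combination (2 * z ^ 3 * w + 3 * z ^ 2 * w ^ 2 + 2 * z * w ^ 3 +
    T * (z ^ 2 * w + z * w ^ 2) + S * z * w) * CharTwo.two_eq_zero (R := K)

theorem quartic_zero_add [CharP K 2] (S n a b : K) :
    quartic 0 S n (a + b) = quartic 0 S n a + quartic 0 S n b := by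
  rw [quartic_add]
  unfold quartic
  ring

-- With `μ² = n / T`, the substitution `z = w * v + μ` turns `g (z + w) = g z` into
-- `v² + v = w / T + 1 + (S / T + μ) / w`.
theorem quartic_add_eq_of_sq_add_self_eq [CharP K 2] {T S n μ w v : K} (hT : T ≠ 0)
    (hw : w ≠ 0) (hμ : n / T = μ * μ) (hv : v ^ 2 + v = T⁻¹ * w + 1 + (S / T + μ) / w) :
    quartic T S n (w * v + μ + w) = quartic T S n (w * v + μ) := by
  rw [quartic_add]
  have hn : n = T * μ ^ 2 := by
    field_simp at hμ
    linear_combination hμ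
  have hv' : T * w * (v ^ 2 + v) = w ^ 2 + T * w + S + T * μ := by
    rw [hv]
    field_simp
    ring
  linear_combination w * (w * hv' - hn + (w ^ 3 + T * w ^ 2 + S * w + n + T * w * μ +
    T * w * v * μ) * CharTwo.two_eq_zero (R := K))

theorem natDegree_kloostermanPoly_le (hm : 2 ≤ m) (a c : K) :
    (kloostermanPoly m a c).natDegree ≤ 2 ^ m - 2 := by
  have hq : 2 ^ (m - 1) * 2 = 2 ^ m := Nat.two_pow_pred_mul_two (by omega)
  have hq2 : 2 ≤ 2 ^ (m - 1) := Nat.le_self_pow (by omega) 2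
  refine natDegree_add_le_of_degree_le (natDegree_sum_le_of_forall_le _ _ fun i hi => ?_)
    ((natDegree_C _).trans_le (Nat.zero_le _))
  have hi : 2 ^ i ≤ 2 ^ (m - 1) := Nat.pow_le_pow_right two_pos (by simp at hi; omega)
  have := @Nat.one_le_two_pow i
  refine natDegree_add_le_of_degree_le ?_ ?_ <;>
    exact (natDegree_C_mul_X_pow_le _ _).trans (by omega)

theorem kloostermanPoly_ne_zero [CharP K 2] (hm : 2 ≤ m) {a : K} (ha : a ≠ 0) (c : K) :
    kloostermanPoly m a c ≠ 0 := by
  intro hp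
  have hq : 2 ^ (m - 1) * 2 = 2 ^ m := Nat.two_pow_pred_mul_two (by omega)
  have hq2 : 2 ≤ 2 ^ (m - 1) := Nat.le_self_pow (by omega) 2
  have hpow : ∀ i ∈ range m, 1 ≤ 2 ^ i ∧ 2 ^ i ≤ 2 ^ (m - 1) := fun i hi =>
    ⟨Nat.one_le_two_pow, Nat.pow_le_pow_right two_pos (by simp at hi; omega)⟩
  have hcoeff (n : ℕ) : (kloostermanPoly m a c).coeff n =
      ∑ i ∈ range m, ((if n = 2 ^ i then a ^ 2 ^ i else 0) +
        if n = 2 ^ m - 1 - 2 ^ i then c ^ 2 ^ i else 0) +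
      if n = 0 then absTrace m 1 + 1 else 0 := by
    simp only [kloostermanPoly, coeff_add, finsetSum_coeff, coeff_C_mul_X_pow, coeff_C]
  -- the constant coefficient `m + 1` vanishes, so `m` is odd
  have hodd : ((m + 1 : ℕ) : K) = 0 := by
    have h0 := hcoeff 0
    rw [hp, sum_eq_zero fun i hi => by
      have := hpow i hi
      rw [if_neg (by omega : 0 ≠ 2 ^ i), if_neg (by omega : 0 ≠ 2 ^ m - 1 - 2 ^ i),
        add_zero]] at h0
    simpa [absTrace] using h0.symm
  rw [CharP.cast_eq_zero_iff K 2] at hodd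
  -- hence `m ≥ 3`, and the coefficient of `X` is `a`
  have hq4 : 2 ^ 2 ≤ 2 ^ (m - 1) := Nat.pow_le_pow_right two_pos (by omega)
  have h1 := hcoeff 1
  rw [hp, sum_eq_single 0 (fun i hi hi0 => by
      have := hpow i hi
      rw [if_neg (by rw [eq_comm, Nat.pow_eq_one]; simp [hi0]), if_neg (by omega), add_zero])
    (by simp; omega)] at h1
  simp [if_neg (by omega : 1 ≠ 2 ^ m - 1 - 1)] at h1
  exact ha h1.symm

variable [Fintype K]

theorem absTrace_sq (hK : Fintype.card K = 2 ^ m) (x : K) :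
    absTrace m (x ^ 2) = absTrace m x := by
  have hx : x ^ 2 ^ m = x := hK ▸ FiniteField.pow_card x
  have h := (sum_range_succ' (fun i => x ^ 2 ^ i) m).symm.trans (sum_range_succ _ m)
  rw [pow_zero, pow_one, hx] at h
  simpa only [absTrace, ← pow_mul, ← pow_succ'] using add_right_cancel h

theorem card_absTrace_eq_zero_le [DecidableEq K] (hK : Fintype.card K = 2 ^ m) :
    2 * #{x : K | absTrace m x = 0} ≤ Fintype.card K := by
  have hm : m ≠ 0 := by
    rintro rfl
    exact Fintype.one_lt_card.ne' (by simpa using hK)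
  set p : K[X] := ∑ i ∈ range m, X ^ 2 ^ i
  have hp : p ≠ 0 := by
    intro h
    have h1 := congrArg (coeff · 1) h
    simp only [p, finsetSum_coeff, coeff_X_pow, coeff_zero] at h1
    rw [sum_eq_single 0 (fun i _ hi => if_neg (by rw [eq_comm, Nat.pow_eq_one]; simp [hi]))
      (by simp [hm])] at h1
    simp at h1
  have hdeg : p.natDegree ≤ 2 ^ (m - 1) :=
    natDegree_sum_le_of_forall_le _ _ fun i hi => by
      rw [natDegree_X_pow]
      exact Nat.pow_le_pow_right two_pos (by simp at hi; omega)
  have hroots := card_le_degree_of_subset_roots (p := p) (Z := {x : K | absTrace m x = 0})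
    fun x hx => by simpa [mem_roots hp, p, eval_finsetSum, absTrace] using (mem_filter.mp hx).2
  rw [hK, ← Nat.two_pow_pred_mul_two (Nat.pos_of_ne_zero hm)]
  omega

variable [CharP K 2]

theorem absTrace_sq_add_self (hK : Fintype.card K = 2 ^ m) (v : K) :
    absTrace m (v ^ 2 + v) = 0 := by
  rw [absTrace_add, absTrace_sq hK, CharTwo.add_self_eq_zero]

theorem absTrace_eq_zero_or_eq_one (hK : Fintype.card K = 2 ^ m) (x : K) :
    absTrace m x = 0 ∨ absTrace m x = 1 := by
  have h : absTrace m x * (absTrace m x - 1) = 0 := by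
    rw [mul_sub, mul_one, ← sq, sq_absTrace, absTrace_sq hK, sub_self]
  simpa [sub_eq_zero] using h

-- `v ↦ v² + v` is two-to-one, so its image fills the kernel of `absTrace m`.
theorem exists_sq_add_self_eq (hK : Fintype.card K = 2 ^ m) {x : K} (hx : absTrace m x = 0) :
    ∃ v, v ^ 2 + v = x := by
  classical
  have hsub : univ.image (fun v : K => v ^ 2 + v) ⊆ ({x | absTrace m x = 0} : Finset K) := by
    simp [subset_iff, absTrace_sq_add_self hK]
  have hfiber : ∀ b ∈ univ.image fun v : K => v ^ 2 + v, #{v ∈ univ | v ^ 2 + v = b} ≤ 2 := by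
    simp only [mem_image, mem_univ, true_and, forall_exists_index]
    rintro _ v₀ rfl
    refine (card_le_card fun v hv => ?_).trans (card_insert_le v₀ {v₀ + 1})
    have h : (v + v₀) * (v + v₀ + 1) = 0 := by
      simp only [mem_filter, mem_univ, true_and] at hv
      linear_combination hv + (v * v₀ + v₀ ^ 2 + v₀) * CharTwo.two_eq_zero (R := K)
    rcases mul_eq_zero.mp h with h | h
    · simp [CharTwo.add_eq_zero.mp h]
    · simp [CharTwo.add_eq_zero.mp (by rwa [add_assoc] at h : v + (v₀ + 1) = 0)]
  have hcard := card_le_mul_card_image univ 2 hfiber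
  have hker := card_absTrace_eq_zero_le hK
  rw [card_univ] at hcard
  have heq := eq_of_subset_of_card_le hsub (by omega)
  have hmem : x ∈ univ.image fun v : K => v ^ 2 + v := heq ▸ mem_filter.mpr ⟨mem_univ x, hx⟩
  simpa using hmem

theorem eval_kloostermanPoly (hK : Fintype.card K = 2 ^ m) (a c : K) {w : K} (hw : w ≠ 0) :
    (kloostermanPoly m a c).eval w = absTrace m (a * w + 1 + c / w) + 1 := by
  have hinv : ∀ i ∈ range m, (c / w) ^ 2 ^ i = c ^ 2 ^ i * w ^ (2 ^ m - 1 - 2 ^ i) := by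
    intro i hi
    have hi : 2 ^ i < 2 ^ m := Nat.pow_lt_pow_right one_lt_two (mem_range.mp hi)
    rw [div_pow, div_eq_iff (pow_ne_zero _ hw), mul_assoc, ← pow_add,
      Nat.sub_add_cancel (by omega), ← hK, FiniteField.pow_card_sub_one_eq_one w hw, mul_one]
  rw [absTrace_add, absTrace_add]
  simp only [kloostermanPoly, eval_add, eval_finsetSum, eval_mul, eval_C, eval_pow, eval_X,
    absTrace]
  rw [sum_congr rfl hinv, sum_add_distrib]
  simp only [mul_pow]
  ring

theorem exists_absTrace_eq_zero (hK : Fintype.card K = 2 ^ m) (hm : 2 ≤ m) {a : K} (ha : a ≠ 0)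
    (c : K) : ∃ w ≠ 0, absTrace m (a * w + 1 + c / w) = 0 := by
  classical
  by_contra! h
  refine kloostermanPoly_ne_zero hm ha c <|
    eq_zero_of_natDegree_lt_card_of_eval_eq_zero' _ (univ.erase 0) (fun w hw => ?_) ?_
  · have hw := ne_of_mem_erase hw
    rw [eval_kloostermanPoly hK a c hw, (absTrace_eq_zero_or_eq_one hK _).resolve_left (h w hw),
      CharTwo.add_self_eq_zero]
  · have := natDegree_kloostermanPoly_le hm a c
    have := Nat.le_self_pow (by omega : m ≠ 0) 2
    rw [card_erase_of_mem (mem_univ 0), card_univ, hK]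
    omega

theorem not_injective_quartic (hK : Fintype.card K = 2 ^ m) (hm : 2 ≤ m) {T : K} (hT : T ≠ 0)
    (S n : K) : ¬ Function.Injective (quartic T S n) := by
  intro hinj
  obtain ⟨μ, hμ⟩ := FiniteField.isSquare_of_char_two (ringChar.eq K 2) (n / T)
  obtain ⟨w, hw, htr⟩ := exists_absTrace_eq_zero hK hm (inv_ne_zero hT) (S / T + μ)
  obtain ⟨v, hv⟩ := exists_sq_add_self_eq hK htr
  have := hinj (quartic_add_eq_of_sq_add_self_eq hT hw hμ hv)
  exact hw (by simpa using this)

end CharTwo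

section CubicExtension

variable {K F : Type*} [Field K] [Field F] [Algebra K F] [Finite F]

theorem not_injective_of_mul_norm_eq (α : F) {z z' : K} (hne : z ≠ z')
    (h0 : z * Algebra.norm K (algebraMap K F z + α) ≠ 0)
    (heq : z * Algebra.norm K (algebraMap K F z + α) =
      z' * Algebra.norm K (algebraMap K F z' + α)) :
    ¬ Function.Injective fun x : F => x * (algebraMap K F (Algebra.norm K x) + α) := by
  intro hinj
  obtain ⟨x, rfl⟩ := FiniteField.norm_surjective K F z
  obtain ⟨y, rfl⟩ := FiniteField.norm_surjective K F z'
  set fx := x * (algebraMap K F (Algebra.norm K x) + α)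
  set fy := y * (algebraMap K F (Algebra.norm K y) + α)
  have hnorm : Algebra.norm K fx = Algebra.norm K fy := by simpa only [fx, fy, map_mul] using heq
  have hfx : Algebra.norm K fx ≠ 0 := by simpa only [fx, map_mul] using h0
  set u := fy / fx
  have hu : u * fx = fy := div_mul_cancel₀ _ fun h => hfx (by rw [h, Algebra.norm_zero])
  have hu1 : Algebra.norm K u = 1 := by
    have := congrArg (Algebra.norm K) hu
    rwa [map_mul, ← hnorm, mul_eq_right₀ hfx] at this
  have hxy : u * x = y := hinj (by
    simp only [map_mul, hu1, one_mul]
    rw [mul_assoc]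
    exact hu)
  exact hne (by rw [← hxy, map_mul, hu1, one_mul])

theorem algebraMap_add_ne_zero_of_trace_eq_zero [CharP K 2] (h3 : Module.finrank K F = 3)
    {α : F} (hα : α ≠ 0) (htr : Algebra.trace K F α = 0) (c : K) :
    algebraMap K F c + α ≠ 0 := by
  intro hc
  rw [eq_neg_of_add_eq_zero_right hc, ← map_neg, Algebra.trace_algebraMap, h3] at htr
  have hc0 : -c = 0 := by simpa [nsmul_eq_mul, CharTwo.ofNat_eq_mod] using htr
  exact hα (by rw [eq_neg_of_add_eq_zero_right hc, ← map_neg, hc0, map_zero])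

variable [Fintype K]

local notation "q" => Fintype.card K

theorem algebraMap_norm_eq_pow_of_finrank_eq_three (h3 : Module.finrank K F = 3) (x : F) :
    algebraMap K F (Algebra.norm K x) = x ^ (q ^ 2 + q + 1) := by
  rw [FiniteField.algebraMap_norm_eq_pow_sum, h3, Nat.card_eq_fintype_card]
  simp only [sum_range_succ, sum_range_zero]
  ring_nf

theorem algebraMap_trace_of_finrank_eq_three (h3 : Module.finrank K F = 3) (x : F) :
    algebraMap K F (Algebra.trace K F x) = x + x ^ q + x ^ q ^ 2 := by
  rw [FiniteField.algebraMap_trace_eq_sum_pow, h3, Nat.card_eq_fintype_card]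
  simp [sum_range_succ]

theorem norm_algebraMap_add (h3 : Module.finrank K F = 3) (a : K) (α : F) :
    Algebra.norm K (algebraMap K F a + α) = a ^ 3 + Algebra.trace K F α * a ^ 2 +
      Algebra.trace K F (α ^ (q + 1)) * a + Algebra.norm K α := by
  apply (algebraMap K F).injective
  have : Fintype F := Fintype.ofFinite F
  have hα : α ^ q ^ 3 = α := by
    rw [← h3, ← Module.card_eq_pow_finrank]
    exact FiniteField.pow_card α
  have hfrob (x : F) : (algebraMap K F a + x) ^ q = algebraMap K F a + x ^ q := by
    simpa using map_add (FiniteField.frobeniusAlgHom K F) (algebraMap K F a) x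
  have hfrob2 : (algebraMap K F a + α) ^ q ^ 2 = algebraMap K F a + α ^ q ^ 2 := by
    rw [sq, pow_mul, hfrob, hfrob, ← pow_mul]
  have hS₁ : (α ^ (q + 1)) ^ q = α ^ q * α ^ q ^ 2 := by ring
  have hS₂ : (α ^ (q + 1)) ^ q ^ 2 = α ^ q ^ 2 * α := by
    rw [← pow_mul, add_one_mul, ← pow_succ', pow_add, hα, mul_comm]
  simp only [map_add, map_mul, map_pow, algebraMap_trace_of_finrank_eq_three h3,
    FiniteField.algebraMap_norm_eq_prod_pow, h3, Nat.card_eq_fintype_card, prod_range_succ,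
    prod_range_zero, pow_zero, pow_one, hfrob, hfrob2, hS₁, hS₂]
  ring

theorem quartic_trace_norm (h3 : Module.finrank K F = 3) (α : F) (z : K) :
    quartic (Algebra.trace K F α) (Algebra.trace K F (α ^ (q + 1))) (Algebra.norm K α) z =
      z * Algebra.norm K (algebraMap K F z + α) := by
  rw [norm_algebraMap_add h3, quartic]
  ring

theorem injective_of_trace_eq_zero [CharP K 2] (h3 : Module.finrank K F = 3) {α : F}
    (hα : α ≠ 0) (htr : Algebra.trace K F α = 0) :
    Function.Injective fun x : F => x * (algebraMap K F (Algebra.norm K x) + α) := by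
  have hne := algebraMap_add_ne_zero_of_trace_eq_zero h3 hα htr
  intro x y hxy
  simp only at hxy
  set a := Algebra.norm K x
  set b := Algebra.norm K y
  have hq : quartic 0 (Algebra.trace K F (α ^ (q + 1))) (Algebra.norm K α) a =
      quartic 0 (Algebra.trace K F (α ^ (q + 1))) (Algebra.norm K α) b := by
    rw [← htr, quartic_trace_norm h3, quartic_trace_norm h3, ← map_mul, ← map_mul, hxy]
  have hab : (a + b) * Algebra.norm K (algebraMap K F (a + b) + α) = 0 := by
    rw [← quartic_trace_norm h3, htr, quartic_zero_add, hq, CharTwo.add_self_eq_zero]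
  rw [mul_eq_zero, or_iff_left (Algebra.norm_ne_zero_iff.mpr (hne _)),
    CharTwo.add_eq_zero] at hab
  rw [hab] at hxy
  exact mul_right_cancel₀ (hne b) hxy

theorem trace_eq_zero_of_injective [CharP K 2] {m : ℕ} (hK : Fintype.card K = 2 ^ m)
    (hm : 2 ≤ m) (h3 : Module.finrank K F = 3) {α : F} (hα : α ≠ 0)
    (hinj : Function.Injective fun x : F => x * (algebraMap K F (Algebra.norm K x) + α)) :
    Algebra.trace K F α = 0 := by
  by_contra htr
  by_cases hmem : ∃ c, algebraMap K F c + α = 0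
  · obtain ⟨c, hc⟩ := hmem
    obtain ⟨x, hx⟩ := FiniteField.norm_surjective K F c
    have h0 : x = 0 := hinj (by simp [hx, hc])
    exact hα (by simpa [← hx, h0] using hc)
  · push Not at hmem
    have hnorm (z : K) : Algebra.norm K (algebraMap K F z + α) ≠ 0 :=
      Algebra.norm_ne_zero_iff.mpr (hmem z)
    obtain ⟨z, z', heq, hne⟩ := Function.not_injective_iff.mp (not_injective_quartic hK hm htr
      (Algebra.trace K F (α ^ (q + 1))) (Algebra.norm K α))
    rw [quartic_trace_norm h3, quartic_trace_norm h3] at heq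
    refine not_injective_of_mul_norm_eq α hne (fun h0 => hne ?_) heq hinj
    have hz : z = 0 := by simpa [hnorm] using h0
    rw [hz, zero_mul, eq_comm] at heq
    simpa [hnorm, hz, eq_comm] using heq

theorem bijective_pow_add_mul_iff [CharP K 2] {m : ℕ} (hK : Fintype.card K = 2 ^ m) (hm : 2 ≤ m)
    (h3 : Module.finrank K F = 3) {α : F} (hα : α ≠ 0) :
    Function.Bijective (fun x : F => x ^ ((2 ^ m) ^ 2 + 2 ^ m + 2) + α * x) ↔
      α ^ ((2 ^ m) ^ 2) + α ^ 2 ^ m + α = 0 := by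
  rw [← hK]
  have hf : (fun x : F => x ^ (q ^ 2 + q + 2) + α * x) =
      fun x => x * (algebraMap K F (Algebra.norm K x) + α) := by
    ext x
    rw [algebraMap_norm_eq_pow_of_finrank_eq_three h3]
    ring
  have htr : α ^ (q ^ 2) + α ^ q + α = algebraMap K F (Algebra.trace K F α) := by
    rw [algebraMap_trace_of_finrank_eq_three h3]
    ring
  rw [hf, ← Finite.injective_iff_bijective, htr, map_eq_zero_iff _ (algebraMap K F).injective]
  exact ⟨trace_eq_zero_of_injective hK hm h3 hα, injective_of_trace_eq_zero h3 hα⟩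

end CubicExtension

theorem ringChar_eq_two_and_exists_eq_two_pow {F : Type*} [Field F] [Fintype F] {Q : ℕ}
    (h2 : 2 ∣ Q) (hQ : Q ∣ Fintype.card F) : ringChar F = 2 ∧ ∃ m, Q = 2 ^ m := by
  obtain ⟨n, hp, hn⟩ := FiniteField.card F (ringChar F)
  have hchar : ringChar F = 2 := ((Nat.prime_dvd_prime_iff_eq Nat.prime_two hp).mp
    (Nat.prime_two.dvd_of_dvd_pow (hn ▸ h2.trans hQ))).symm
  obtain ⟨m, -, hm⟩ := (Nat.dvd_prime_pow Nat.prime_two).mp (hchar ▸ hn ▸ hQ)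
  exact ⟨hchar, m, hm⟩

theorem stmt_13 (Q : ℕ) (hQeven : Q % 2 = 0) (hQ : 2 < Q)
    (F : Type*) [Field F] [Fintype F] (hF : Fintype.card F = Q ^ 3)
    (α : F) (hα : α ≠ 0) :
    Function.Bijective (fun x : F => x ^ (Q ^ 2 + Q + 2) + α * x) ↔
      α ^ (Q ^ 2) + α ^ Q + α = 0 := by
  obtain ⟨hchar, m, rfl⟩ := ringChar_eq_two_and_exists_eq_two_pow
    (Nat.dvd_of_mod_eq_zero hQeven) (hF ▸ dvd_pow_self Q three_ne_zero)
  have : CharP F 2 := hchar ▸ ringChar.charP F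
  have hm : 2 ≤ m := by
    by_contra! h
    interval_cases m <;> simp at hQ
  let := ZMod.algebra F 2
  let : Fintype (GaloisField 2 m) := Fintype.ofFinite _
  have hK : Fintype.card (GaloisField 2 m) = 2 ^ m := by
    rw [Fintype.card_eq_nat_card, GaloisField.card 2 m (by omega)]
  have hrank : Module.finrank (ZMod 2) F = 3 * m := by
    apply Nat.pow_right_injective le_rfl
    simp only
    rw [FiniteField.pow_finrank_eq_card, hF, ← pow_mul, mul_comm]
  obtain ⟨φ⟩ : Nonempty (GaloisField 2 m →ₐ[ZMod 2] F) :=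
    FiniteField.nonempty_algHom_of_finrank_dvd (by
      rw [GaloisField.finrank 2 (by omega), hrank]
      exact dvd_mul_left m 3)
  let : Algebra (GaloisField 2 m) F := φ.toRingHom.toAlgebra
  have h3 : Module.finrank (GaloisField 2 m) F = 3 := by
    apply Nat.pow_right_injective hQ.le
    simp only
    rw [← hK, ← Module.card_eq_pow_finrank, hF, hK]
  exact bijective_pow_add_mul_iff hK hm h3 hα
end

section
/- Let Q be a prime power, d a positive integer, and β a (Q+1)-th root of unity in F_{Q^2}. Then β·x^(1+d(Q−1)) is a complete permutation polynomial over F_{Q^2} if and only if (1) gcd((d−1)(2d−1), Q+1) = 1 and (2) (−β)^((Q+1)/gcd(Q+1, d)) ≠ 1. -/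
/-!
Write `e = 1 + d(Q-1)`, `r = Q - 1` and `h(y) = βy^d + 1`.

The monomial `βx^e` permutes `F` iff `gcd(e, Q² - 1) = 1`; since `e ≡ 1 (mod Q-1)` and
`e ≡ 1 - 2d (mod Q+1)`, this is `gcd(2d - 1, Q + 1) = 1`.

For the second map, `βx^e + x = x·h(x^r)`, and `x ↦ x^r` carries it to `ψ(y) = y·h(y)^r` on the
group `μ_{Q+1}` of `r`-th powers of `Fˣ`. Hence it permutes `F` iff `h` has no zero on `μ_{Q+1}`
and `ψ` is injective there. Frobenius `y ↦ y^Q` inverts `μ_{Q+1}`, so `h(y)^Q = β⁻¹y⁻ᵈ·h(y)` and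
`ψ(y) = β⁻¹y^{1-d}`, which is injective on the cyclic group `μ_{Q+1}` iff `gcd(d - 1, Q + 1) = 1`.
Finally `h` vanishes somewhere on `μ_{Q+1}` iff `-β⁻¹` is a `d(Q-1)`-th power in the cyclic group
`Fˣ` of order `(Q-1)(Q+1)`, i.e. iff `(-β)^((Q+1)/gcd(Q+1, d)) = 1`.
-/

open Function

namespace IsCyclic

variable {G : Type*} [CommGroup G] [IsCyclic G] [Finite G]

theorem pow_injective_iff_coprime {n : ℕ} :
    Injective (· ^ n : G → G) ↔ (Nat.card G).Coprime n := by
  refine ⟨fun h => ?_, fun h => h.pow_left_bijective.injective⟩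
  have hker : (powMonoidHom n : G →* G).ker = ⊥ := (MonoidHom.ker_eq_bot_iff _).mpr h
  rw [Nat.Coprime, ← card_powMonoidHom_ker, hker, Subgroup.card_bot]

theorem forall_pow_pow_eq_imp_iff_coprime {r k : ℕ} :
    (∀ x y : G, (x ^ r) ^ k = (y ^ r) ^ k → x ^ r = y ^ r) ↔
      (Nat.card G / (Nat.card G).gcd r).Coprime k := by
  rw [← card_powMonoidHom_range, ← pow_injective_iff_coprime]
  constructor
  · rintro h ⟨_, x, rfl⟩ ⟨_, y, rfl⟩ hxy
    exact Subtype.ext (h x y (congrArg Subtype.val hxy))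
  · intro h x y hxy
    exact congrArg Subtype.val (@h ⟨x ^ r, x, rfl⟩ ⟨y ^ r, y, rfl⟩ (Subtype.ext hxy))

theorem exists_pow_eq_iff {n : ℕ} (c : G) :
    (∃ x : G, x ^ n = c) ↔ c ^ (Nat.card G / (Nat.card G).gcd n) = 1 := by
  set k := Nat.card G / (Nat.card G).gcd n
  have hk : k ∣ Nat.card G := Nat.div_dvd_of_dvd (Nat.gcd_dvd_left _ _)
  have hle : (powMonoidHom n : G →* G).range ≤ (powMonoidHom k : G →* G).ker := by
    rintro _ ⟨x, rfl⟩
    obtain ⟨l, hl⟩ := Nat.gcd_dvd_right (Nat.card G) n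
    have hnk : n * k = Nat.card G * l := by
      rw [hl, mul_comm _ l, mul_assoc, Nat.mul_div_cancel' (Nat.gcd_dvd_left _ _), mul_comm]
    rw [MonoidHom.mem_ker, powMonoidHom_apply, powMonoidHom_apply, ← pow_mul, hnk, pow_mul,
      pow_card_eq_one', one_pow]
  have heq := Subgroup.eq_of_le_of_card_ge hle (by
    rw [card_powMonoidHom_ker, card_powMonoidHom_range, Nat.gcd_eq_right hk])
  exact SetLike.ext_iff.mp heq c

end IsCyclic

theorem Nat.coprime_sub_one_mul_add_one_iff {Q d : ℕ} (hQ : 1 ≤ Q) (hd : 0 < d) :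
    ((Q - 1) * (Q + 1)).Coprime (1 + d * (Q - 1)) ↔ (2 * d - 1).Coprime (Q + 1) := by
  have hr : (Q - 1).Coprime (1 + d * (Q - 1)) := by
    rw [Nat.coprime_add_mul_right_right]
    exact Nat.coprime_one_right _
  rw [Nat.coprime_mul_iff_left, and_iff_right hr, ← Nat.isCoprime_iff_coprime,
    ← Nat.isCoprime_iff_coprime]
  push_cast [hQ, Nat.one_le_iff_ne_zero.mpr (by omega : 2 * d ≠ 0)]
  rw [show (1 + d * (Q - 1) : ℤ) = -(2 * d - 1) + (Q + 1) * d by ring,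
    IsCoprime.add_mul_left_right_iff, IsCoprime.neg_right_iff, isCoprime_comm]

namespace FiniteField

variable {F : Type*} [Field F] [Fintype F]

theorem add_pow_of_dvd_card {Q : ℕ} (hQ : Q ∣ Fintype.card F) (a b : F) :
    (a + b) ^ Q = a ^ Q + b ^ Q := by
  obtain ⟨p, _⟩ := CharP.exists F
  obtain ⟨n, hp, hcard⟩ := FiniteField.card F p
  have := Fact.mk hp
  obtain ⟨t, -, rfl⟩ := (Nat.dvd_prime_pow hp).mp (hcard ▸ hQ)
  exact add_pow_char_pow a b p t

theorem add_one_pow_pred_eq_inv {Q : ℕ} (hQ : Q ∣ Fintype.card F) {t : F}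
    (ht : t ^ (Q + 1) = 1) (ht1 : t + 1 ≠ 0) : (t + 1) ^ (Q - 1) = t⁻¹ := by
  have hQ0 : Q ≠ 0 := by rintro rfl; simp at hQ
  have htQ : t ^ Q = t⁻¹ := eq_inv_of_mul_eq_one_left (by rwa [← pow_succ])
  apply mul_right_cancel₀ ht1
  calc (t + 1) ^ (Q - 1) * (t + 1) = t ^ Q + 1 := by
        rw [← pow_succ, Nat.sub_add_cancel (Nat.one_le_iff_ne_zero.mpr hQ0),
          add_pow_of_dvd_card hQ, one_pow]
    _ = t⁻¹ * (t + 1) := by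
        rw [htQ, mul_add, inv_mul_cancel₀ (by rintro rfl; simp at ht), mul_one, add_comm]

theorem pow_bijective_iff_coprime {n : ℕ} (hn : n ≠ 0) :
    Bijective (· ^ n : F → F) ↔ (Nat.card Fˣ).Coprime n := by
  rw [← Finite.injective_iff_bijective, ← IsCyclic.pow_injective_iff_coprime]
  constructor
  · intro h x y hxy
    exact Units.ext (h (by simpa using congrArg Units.val hxy))
  · intro h a b hab
    simp only at hab
    rcases eq_or_ne a 0 with rfl | ha
    · rw [zero_pow hn, eq_comm, pow_eq_zero_iff hn] at hab
      exact hab.symm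
    rcases eq_or_ne b 0 with rfl | hb
    · rwa [zero_pow hn, pow_eq_zero_iff hn] at hab
    have hab' : Units.mk0 a ha ^ n = Units.mk0 b hb ^ n := Units.ext (by simpa using hab)
    exact congrArg Units.val (h hab')

/-- `x ↦ x ^ r` intertwines `x ↦ x * h (x ^ r)` on `Fˣ` with `y ↦ y * h y ^ r` on the `r`-th
powers, and the latter maps this finite set onto itself when the former is onto. -/
theorem bijective_mul_apply_pow_iff (r : ℕ) (h : F → F) :
    Bijective (fun x => x * h (x ^ r)) ↔
      (∀ x : Fˣ, h ((x : F) ^ r) ≠ 0) ∧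
      ∀ x y : Fˣ, (x : F) ^ r * h ((x : F) ^ r) ^ r = (y : F) ^ r * h ((y : F) ^ r) ^ r →
        (x : F) ^ r = (y : F) ^ r := by
  set g : F → F := fun x => x * h (x ^ r)
  have hg_pow : ∀ x, g x ^ r = x ^ r * h (x ^ r) ^ r := fun x => mul_pow _ _ _
  have hg_zero : g 0 = 0 := zero_mul _
  rw [← Finite.injective_iff_bijective]
  constructor
  · intro hinj
    have hroot : ∀ x : Fˣ, h ((x : F) ^ r) ≠ 0 := fun x hx =>
      x.ne_zero (hinj (show g x = g 0 by rw [hg_zero]; exact mul_eq_zero_of_right _ hx))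
    refine ⟨hroot, ?_⟩
    set S := Set.range (fun x : Fˣ => (x : F) ^ r)
    have hmaps : Set.MapsTo (fun y => y * h y ^ r) S S := by
      rintro _ ⟨x, rfl⟩
      exact ⟨Units.mk0 (g x) (mul_ne_zero x.ne_zero (hroot x)), hg_pow x⟩
    have hsurj : Set.SurjOn (fun y => y * h y ^ r) S S := by
      rintro _ ⟨w, rfl⟩
      obtain ⟨x, hx⟩ := Finite.injective_iff_surjective.mp hinj w
      have hx0 : x ≠ 0 := by rintro rfl; exact w.ne_zero (hx ▸ hg_zero)
      exact ⟨_, ⟨Units.mk0 x hx0, rfl⟩, by simp only [Units.val_mk0, ← hg_pow, hx]⟩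
    have hinjOn := (((Set.toFinite S).surjOn_iff_bijOn_of_mapsTo hmaps).mp hsurj).injOn
    exact fun x y hxy => hinjOn ⟨x, rfl⟩ ⟨y, rfl⟩ hxy
  · rintro ⟨hroot, hψ⟩ a b hab
    have hg_ne : ∀ x : F, x ≠ 0 → g x ≠ 0 := fun x hx =>
      mul_ne_zero hx (hroot (Units.mk0 x hx))
    rcases eq_or_ne a 0 with rfl | ha
    · by_contra hb
      exact hg_ne b (Ne.symm hb) (hab.symm.trans hg_zero)
    rcases eq_or_ne b 0 with rfl | hb
    · exact absurd (hab.trans hg_zero) (hg_ne a ha)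
    have hr : a ^ r = b ^ r := hψ (Units.mk0 a ha) (Units.mk0 b hb) (by
      simpa only [Units.val_mk0, hg_pow] using congrArg (· ^ r) hab)
    exact mul_right_cancel₀ (hroot (Units.mk0 a ha))
      (hab.trans (by simp only [g, Units.val_mk0, hr]))

variable {Q d : ℕ} {β : F}

theorem forall_mul_pow_add_one_ne_zero_iff (hcard : Nat.card Fˣ = (Q - 1) * (Q + 1))
    (hβ0 : β ≠ 0) :
    (∀ x : Fˣ, β * ((x : F) ^ (Q - 1)) ^ d + 1 ≠ 0) ↔
      (-β) ^ ((Q + 1) / Nat.gcd (Q + 1) d) ≠ 1 := by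
  have hr : 0 < Q - 1 := Nat.pos_of_mul_pos_right (hcard ▸ Nat.card_pos)
  set B := Units.mk0 β hβ0
  have hroot : ∀ x : Fˣ, β * ((x : F) ^ (Q - 1)) ^ d + 1 = 0 ↔ x ^ (d * (Q - 1)) = (-B)⁻¹ := by
    intro x
    rw [Units.ext_iff, ← pow_mul, mul_comm (Q - 1)]
    simp only [Units.val_pow_eq_pow_val, Units.val_inv_eq_inv_val, Units.val_neg,
      Units.val_mk0, B]
    constructor <;> intro h <;> field_simp at * <;> linear_combination h
  simp only [ne_eq, ← not_exists, not_iff_not, hroot]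
  rw [IsCyclic.exists_pow_eq_iff, hcard, mul_comm (Q - 1), Nat.gcd_mul_right,
    Nat.mul_div_mul_right _ _ hr, inv_pow, inv_eq_one, Units.ext_iff]
  simp [B]

theorem forall_pow_mul_add_one_pow_eq_imp_iff_coprime (hQ : Q ∣ Fintype.card F)
    (hcard : Nat.card Fˣ = (Q - 1) * (Q + 1)) (hd : 0 < d) (hβ : β ^ (Q + 1) = 1)
    (hroot : ∀ x : Fˣ, β * ((x : F) ^ (Q - 1)) ^ d + 1 ≠ 0) :
    (∀ x y : Fˣ, (x : F) ^ (Q - 1) * (β * ((x : F) ^ (Q - 1)) ^ d + 1) ^ (Q - 1) =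
        (y : F) ^ (Q - 1) * (β * ((y : F) ^ (Q - 1)) ^ d + 1) ^ (Q - 1) →
        (x : F) ^ (Q - 1) = (y : F) ^ (Q - 1)) ↔
      (Q + 1).Coprime (d - 1) := by
  have hr : 0 < Q - 1 := Nat.pos_of_mul_pos_right (hcard ▸ Nat.card_pos)
  have hβ0 : β ≠ 0 := by rintro rfl; simp at hβ
  set B := Units.mk0 β hβ0
  have hψ : ∀ x : Fˣ, (x : F) ^ (Q - 1) * (β * ((x : F) ^ (Q - 1)) ^ d + 1) ^ (Q - 1) =
      ((B⁻¹ * ((x ^ (Q - 1)) ^ (d - 1))⁻¹ : Fˣ) : F) := by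
    intro x
    have hx : ((x : F) ^ (Q - 1)) ^ (Q + 1) = 1 := by
      rw [← pow_mul, ← hcard, ← Units.val_pow_eq_pow_val, pow_card_eq_one', Units.val_one]
    have ht : (β * ((x : F) ^ (Q - 1)) ^ d) ^ (Q + 1) = 1 := by
      rw [mul_pow, ← pow_mul, mul_comm d, pow_mul, hx, one_pow, hβ, one_mul]
    rw [add_one_pow_pred_eq_inv hQ ht (hroot x)]
    obtain ⟨k, rfl⟩ : ∃ k, d = k + 1 := ⟨d - 1, by omega⟩
    simp only [Nat.add_sub_cancel, Units.val_mul, Units.val_inv_eq_inv_val,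
      Units.val_pow_eq_pow_val, Units.val_mk0, B]
    field_simp
    ring
  simp only [hψ, Units.val_inj, mul_right_inj, inv_inj]
  simp only [← Units.val_pow_eq_pow_val, Units.val_inj]
  rw [IsCyclic.forall_pow_pow_eq_imp_iff_coprime, hcard, Nat.gcd_mul_right_left,
    Nat.mul_div_cancel_left _ hr]

end FiniteField

open FiniteField in
theorem stmt_19 (Q d : ℕ) (hd : 0 < d)
    (F : Type*) [Field F] [Fintype F] (hF : Fintype.card F = Q ^ 2)
    (β : F) (hβ : β ^ (Q + 1) = 1) :
    (Function.Bijective (fun x : F => β * x ^ (1 + d * (Q - 1))) ∧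
      Function.Bijective (fun x : F => β * x ^ (1 + d * (Q - 1)) + x)) ↔
      (Nat.gcd ((d - 1) * (2 * d - 1)) (Q + 1) = 1 ∧
        (-β) ^ ((Q + 1) / Nat.gcd (Q + 1) d) ≠ 1) := by
  have hβ0 : β ≠ 0 := by rintro rfl; simp at hβ
  have hQF : Q ∣ Fintype.card F := hF ▸ dvd_pow_self Q two_ne_zero
  have hcard : Nat.card Fˣ = (Q - 1) * (Q + 1) := by
    rw [Nat.card_units, Nat.card_eq_fintype_card, hF, mul_comm, ← Nat.sq_sub_sq, one_pow]
  have hQ : 1 ≤ Q :=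
    Nat.one_le_iff_ne_zero.mpr (by rintro rfl; exact Nat.card_pos.ne' (by simpa using hcard))
  have hA : Bijective (fun x : F => β * x ^ (1 + d * (Q - 1))) ↔
      (2 * d - 1).Coprime (Q + 1) := by
    rw [show (fun x : F => β * x ^ (1 + d * (Q - 1))) = (β * ·) ∘ (· ^ (1 + d * (Q - 1))) from rfl,
      Bijective.of_comp_iff' (mulLeft_bijective₀ β hβ0),
      pow_bijective_iff_coprime (by positivity), hcard, Nat.coprime_sub_one_mul_add_one_iff hQ hd]
  have hB : Bijective (fun x : F => β * x ^ (1 + d * (Q - 1)) + x) ↔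
      (Q + 1).Coprime (d - 1) ∧ (-β) ^ ((Q + 1) / Nat.gcd (Q + 1) d) ≠ 1 := by
    rw [show (fun x : F => β * x ^ (1 + d * (Q - 1)) + x) =
        fun x => x * (β * (x ^ (Q - 1)) ^ d + 1) by funext x; ring,
      bijective_mul_apply_pow_iff (Q - 1) (fun y => β * y ^ d + 1),
      ← forall_mul_pow_add_one_ne_zero_iff hcard hβ0]
    exact and_comm.trans
      (and_congr_left (forall_pow_mul_add_one_pow_eq_imp_iff_coprime hQF hcard hd hβ))
  rw [hA, hB, ← Nat.coprime_iff_gcd_eq_one, Nat.coprime_mul_iff_left,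
    Nat.coprime_comm (n := Q + 1)]
  tauto
end
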